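/- arXiv:1307.6721 — 12 statements merged into one kernel-verified Lean document; each statement's English description precedes it below -/
import Mathlib

section
/- Let $a_1,a_2,b_1,b_2,c_1,c_2,d_1,d_2$ be positive real numbers satisfying $a_i \geq \max(c_i,d_i)$ and $a_i + b_i \geq c_i + d_i$ for $i = 1,2$. Then $a_1 a_2 \geq \max(c_1 c_2, d_1 d_2)$ and $a_1 a_2 + b_1 b_2 \geq c_1 c_2 + d_1 d_2$. -/
theorem stmt_0 (a₁ a₂ b₁ b₂ c₁ c₂ d₁ d₂ : ℝ)
    (ha₁ : 0 < a₁) (ha₂ : 0 < a₂) (hb₁ : 0 < b₁) (hb₂ : 0 < b₂)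
    (hc₁ : 0 < c₁) (hc₂ : 0 < c₂) (hd₁ : 0 < d₁) (hd₂ : 0 < d₂)
    (h₁ : a₁ ≥ max c₁ d₁) (h₂ : a₂ ≥ max c₂ d₂)
    (h₃ : a₁ + b₁ ≥ c₁ + d₁) (h₄ : a₂ + b₂ ≥ c₂ + d₂) :
    a₁ * a₂ ≥ max (c₁ * c₂) (d₁ * d₂) ∧ a₁ * a₂ + b₁ * b₂ ≥ c₁ * c₂ + d₁ * d₂ := by
  have hc1 : c₁ ≤ a₁ := le_trans (le_max_left _ _) h₁
  have hd1 : d₁ ≤ a₁ := le_trans (le_max_right _ _) h₁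
  have hc2 : c₂ ≤ a₂ := le_trans (le_max_left _ _) h₂
  have hd2 : d₂ ≤ a₂ := le_trans (le_max_right _ _) h₂
  constructor
  · apply max_le
    · exact mul_le_mul hc1 hc2 hc₂.le ha₁.le
    · exact mul_le_mul hd1 hd2 hd₂.le ha₁.le
  · rcases le_or_gt (c₁ + d₁) a₁ with hx | hx
    · nlinarith [mul_nonneg (by linarith : (0:ℝ) ≤ a₁ - c₁ - d₁) ha₂.le,
        mul_nonneg hc₁.le (sub_nonneg.2 hc2), mul_nonneg hd₁.le (sub_nonneg.2 hd2),
        mul_pos hb₁ hb₂]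
    · rcases le_or_gt (c₂ + d₂) a₂ with hy | hy
      · nlinarith [mul_nonneg (by linarith : (0:ℝ) ≤ a₂ - c₂ - d₂) ha₁.le,
          mul_nonneg hc₂.le (sub_nonneg.2 hc1), mul_nonneg hd₂.le (sub_nonneg.2 hd1),
          mul_pos hb₁ hb₂]
      · have hbb : (c₁ + d₁ - a₁) * (c₂ + d₂ - a₂) ≤ b₁ * b₂ :=
          mul_le_mul (by linarith) (by linarith) (by linarith) hb₁.le
        nlinarith [mul_nonneg (sub_nonneg.2 hc1) (sub_nonneg.2 hd2),
          mul_nonneg (sub_nonneg.2 hd1) (sub_nonneg.2 hc2)]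
end

section
/- Let $T_m$ be a tree on $m$ vertices and $G$ any graph. Then $\hom(T_m, G) \leq \hom(S_m, G)$, where $S_m$ is the star on $m$ vertices. -/
/-- The number of graph homomorphisms from `H` to `G`. -/
noncomputable def homCount {α β : Type*} (H : SimpleGraph α) (G : SimpleGraph β) : ℕ :=
  Nat.card (H →g G)

/-- The star on `n` vertices: vertex `0` is the center, adjacent to all other vertices. -/
def starGraph (n : ℕ) [NeZero n] : SimpleGraph (Fin n) where
  Adj u v := u ≠ v ∧ (u = 0 ∨ v = 0)
  symm := ⟨by rintro u v ⟨h₁, h₂⟩; exact ⟨h₁.symm, h₂.symm⟩⟩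
  loopless := ⟨by rintro u ⟨h, _⟩; exact h rfl⟩

/-!
Deleting a leaf `j ≠ v` with neighbour `z` from a tree `T` gives
`∑_{f : T → G} deg(f v)^t = ∑_{g : T - j → G} deg(g z) · deg(g v)^t`, because a homomorphism `g`
of `T - j` extends in exactly `deg(g z)` ways. By Young's inequality
`(t + 1) b a^t ≤ t a^(t+1) + b^(t+1)`, the right-hand side is bounded by any common bound of
`∑_g deg(g v)^(t+1)` and `∑_g deg(g z)^(t+1)`. Induction on the number of vertices therefore gives
`∑_{f : T → G} deg(f v)^t ≤ ∑_w deg(w)^(|T| - 1 + t)`, and for `t = 0` the right-hand side is the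
number of homomorphisms from the star.
-/

open Finset

section Young

variable {R : Type*} [CommSemiring R] [LinearOrder R] [IsStrictOrderedRing R] [ExistsAddOfLE R]

theorem succ_mul_mul_pow_le_mul_pow_add_pow {a b : R} (ha : 0 ≤ a) (hb : 0 ≤ b) (t : ℕ) :
    (t + 1) * (b * a ^ t) ≤ t * a ^ (t + 1) + b ^ (t + 1) := by
  induction t with
  | zero => simp
  | succ t ih =>
    have hrearrange : a * b ^ (t + 1) + b * a ^ (t + 1) ≤ a * a ^ (t + 1) + b * b ^ (t + 1) := by
      rcases le_total a b with hab | hba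
      · exact mul_add_mul_le_mul_add_mul hab (pow_le_pow_left₀ ha hab _)
      · simpa only [add_comm] using mul_add_mul_le_mul_add_mul hba (pow_le_pow_left₀ hb hba _)
    calc ((t + 1 : ℕ) + 1 : R) * (b * a ^ (t + 1))
        = a * ((t + 1) * (b * a ^ t)) + b * a ^ (t + 1) := by push_cast; ring
      _ ≤ a * (t * a ^ (t + 1) + b ^ (t + 1)) + b * a ^ (t + 1) := by gcongr
      _ = t * a ^ (t + 2) + (a * b ^ (t + 1) + b * a ^ (t + 1)) := by ring
      _ ≤ t * a ^ (t + 2) + (a * a ^ (t + 1) + b * b ^ (t + 1)) := by gcongr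
      _ = ((t + 1 : ℕ) : R) * a ^ (t + 1 + 1) + b ^ (t + 1 + 1) := by push_cast; ring

theorem sum_mul_pow_le_of_sum_pow_succ_le {ι : Type*} {s : Finset ι} {a b : ι → R} {S : R}
    (ha₀ : ∀ i ∈ s, 0 ≤ a i) (hb₀ : ∀ i ∈ s, 0 ≤ b i) (t : ℕ)
    (ha : ∑ i ∈ s, a i ^ (t + 1) ≤ S) (hb : ∑ i ∈ s, b i ^ (t + 1) ≤ S) :
    ∑ i ∈ s, b i * a i ^ t ≤ S := by
  refine le_of_mul_le_mul_left ?_ (by positivity : (0 : R) < t + 1)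
  calc (t + 1) * ∑ i ∈ s, b i * a i ^ t
      ≤ ∑ i ∈ s, (t * a i ^ (t + 1) + b i ^ (t + 1)) := by
        rw [mul_sum]
        exact sum_le_sum fun i hi => succ_mul_mul_pow_le_mul_pow_add_pow (ha₀ i hi) (hb₀ i hi) t
    _ = t * ∑ i ∈ s, a i ^ (t + 1) + ∑ i ∈ s, b i ^ (t + 1) := by rw [sum_add_distrib, mul_sum]
    _ ≤ t * S + S := by gcongr
    _ = (t + 1) * S := by ring

end Young

namespace SimpleGraph

variable {V W : Type*}

theorem extend_compl_singleton_apply_self {j : V} (g : ({j}ᶜ : Set V) → W) (y : W) :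
    Function.extend Subtype.val g (fun _ => y) j = y :=
  Function.extend_apply' _ _ _ fun ⟨x, hx⟩ => x.2 hx

theorem extend_compl_singleton_apply_coe {j : V} (g : ({j}ᶜ : Set V) → W) (y : W)
    (x : ({j}ᶜ : Set V)) : Function.extend Subtype.val g (fun _ => y) x = g x :=
  Subtype.val_injective.extend_apply _ _ x

variable [Fintype V]

theorem IsTree.exists_ne_and_degree_eq_one_of_ne [Nontrivial V] [DecidableEq V]
    {T : SimpleGraph V} [DecidableRel T.Adj] (hT : T.IsTree) (v : V) :
    ∃ j, v ≠ j ∧ T.degree j = 1 := by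
  obtain ⟨u₁, u₂, hne, h₁, h₂⟩ := hT.exists_ne_and_degree_eq_one
  by_cases h : v = u₁
  · exact ⟨u₂, h ▸ hne, h₂⟩
  · exact ⟨u₁, h, h₁⟩

theorem IsTree.induce_compl_singleton [DecidableEq V] {T : SimpleGraph V} [DecidableRel T.Adj]
    (hT : T.IsTree) {j : V} (hj : T.degree j = 1) : (T.induce {j}ᶜ).IsTree :=
  ⟨hT.connected.induce_compl_singleton_of_degree_eq_one hj, hT.isAcyclic.induce _⟩

variable [Fintype W]

open Classical in
noncomputable def homFinset (H : SimpleGraph V) (G : SimpleGraph W) : Finset (V → W) :=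
  {f | ∀ ⦃u v⦄, H.Adj u v → G.Adj (f u) (f v)}

theorem mem_homFinset {H : SimpleGraph V} {G : SimpleGraph W} {f : V → W} :
    f ∈ homFinset H G ↔ ∀ ⦃u v⦄, H.Adj u v → G.Adj (f u) (f v) := by
  simp [homFinset]

theorem homCount_eq_card_homFinset (H : SimpleGraph V) (G : SimpleGraph W) :
    homCount H G = #(homFinset H G) := by
  classical
  let e : (H →g G) ≃ {f : V → W // ∀ ⦃u v⦄, H.Adj u v → G.Adj (f u) (f v)} :=
    ⟨fun φ => ⟨φ, fun _ _ => φ.map_adj⟩, fun f => ⟨f.1, fun h => f.2 h⟩, fun _ => rfl, fun _ => rfl⟩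
  rw [homCount, Nat.card_congr e, Nat.card_eq_fintype_card, Fintype.card_subtype]
  rfl

theorem restrict_mem_homFinset_induce {T : SimpleGraph V} {G : SimpleGraph W} {f : V → W}
    (hf : f ∈ homFinset T G) (s : Set V) [Fintype s] :
    (fun x : s => f x) ∈ homFinset (T.induce s) G :=
  mem_homFinset.2 fun _ _ h => mem_homFinset.1 hf h

section Leaf

variable [DecidableEq V] {T : SimpleGraph V} {j : V} {z : ({j}ᶜ : Set V)} {G : SimpleGraph W}

theorem extend_mem_homFinset_iff (hz : ∀ w, T.Adj j w ↔ w = z)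
    {g : ({j}ᶜ : Set V) → W} (hg : g ∈ homFinset (T.induce {j}ᶜ) G) (y : W) :
    Function.extend Subtype.val g (fun _ => y) ∈ homFinset T G ↔ G.Adj (g z) y := by
  have hfj := extend_compl_singleton_apply_self g y
  have hfg := extend_compl_singleton_apply_coe g y
  refine ⟨fun h => ?_, fun h => mem_homFinset.2 fun u v huv => ?_⟩
  · simpa [hfj, hfg] using mem_homFinset.1 h ((hz z).2 rfl).symm
  · by_cases hu : u = j
    · subst hu; rw [(hz v).1 huv, hfj, hfg]; exact h.symm
    by_cases hv : v = j
    · subst hv; rw [(hz u).1 huv.symm, hfj, hfg]; exact h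
    exact hfg ⟨u, hu⟩ ▸ hfg ⟨v, hv⟩ ▸ mem_homFinset.1 hg huv

variable [DecidableRel G.Adj]

open Classical in
theorem card_filter_restrict_eq_degree (hz : ∀ w, T.Adj j w ↔ w = z)
    {g : ({j}ᶜ : Set V) → W} (hg : g ∈ homFinset (T.induce {j}ᶜ) G) :
    #{f ∈ homFinset T G | (fun x : ({j}ᶜ : Set V) => f x) = g} = G.degree (g z) := by
  rw [← card_neighborFinset_eq_degree]
  refine card_nbij' (fun f => f j) (fun y => Function.extend Subtype.val g (fun _ => y))
    (fun f hf => ?_) (fun y hy => ?_) (fun f hf => ?_) (fun y _ => ?_)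
  · obtain ⟨hhom, rfl⟩ := mem_filter.1 (mem_coe.1 hf)
    rw [mem_coe, mem_neighborFinset]
    exact mem_homFinset.1 hhom ((hz z).2 rfl).symm
  · rw [mem_coe, mem_neighborFinset] at hy
    rw [coe_filter, Set.mem_ofPred, extend_mem_homFinset_iff hz hg]
    exact ⟨hy, funext (extend_compl_singleton_apply_coe g y)⟩
  · obtain ⟨-, rfl⟩ := mem_filter.1 (mem_coe.1 hf)
    funext x
    by_cases hx : x = j
    · subst hx; exact extend_compl_singleton_apply_self _ _
    · exact extend_compl_singleton_apply_coe _ _ ⟨x, hx⟩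
  · exact extend_compl_singleton_apply_self g y

theorem sum_homFinset_eq_sum_degree_smul {M : Type*} [AddCommMonoid M]
    (hz : ∀ w, T.Adj j w ↔ w = z) (φ : (({j}ᶜ : Set V) → W) → M) :
    ∑ f ∈ homFinset T G, φ (fun x => f x) =
      ∑ g ∈ homFinset (T.induce {j}ᶜ) G, G.degree (g z) • φ g := by
  classical
  rw [← sum_fiberwise_of_maps_to fun f hf => restrict_mem_homFinset_induce hf {j}ᶜ]
  refine sum_congr rfl fun g hg => ?_
  rw [sum_congr rfl fun f hf => congrArg φ (mem_filter.1 hf).2, sum_const,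
    card_filter_restrict_eq_degree hz hg]

end Leaf

theorem sum_homFinset_of_subsingleton [Subsingleton V] {M : Type*} [AddCommMonoid M]
    (T : SimpleGraph V) {G : SimpleGraph W} (φ : W → M) (v : V) :
    ∑ f ∈ homFinset T G, φ (f v) = ∑ w, φ w := by
  have : Unique V := _root_.uniqueOfSubsingleton v
  have hall : homFinset T G = univ := eq_univ_of_forall fun f =>
    mem_homFinset.2 fun u w h => (h.ne (Subsingleton.elim u w)).elim
  rw [hall, Subsingleton.elim v default]
  exact Fintype.sum_equiv (Equiv.funUnique V W) _ _ fun _ => rfl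

variable (G : SimpleGraph W) [DecidableRel G.Adj]

theorem homCount_starGraph [DecidableEq V] (r : V) :
    homCount (starGraph r) G = ∑ w, G.degree w ^ (Fintype.card V - 1) := by
  have hsplit : ∀ f : V → W, f ∈ homFinset (starGraph r) G ↔
      (Equiv.funSplitAt r W f).2 ∈ Fintype.piFinset fun _ => G.neighborFinset (f r) := by
    intro f
    simp only [mem_homFinset, starGraph_adj, Fintype.mem_piFinset, mem_neighborFinset,
      Equiv.funSplitAt_apply, Subtype.forall]
    refine ⟨fun h i hi => h ⟨hi.symm, .inl rfl⟩, ?_⟩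
    rintro h u v ⟨huv, rfl | rfl⟩
    · exact h v huv.symm
    · exact (h u huv).symm
  let e := (Equiv.funSplitAt r W).trans (Equiv.sigmaEquivProd W ({i // i ≠ r} → W)).symm
  rw [homCount_eq_card_homFinset]
  calc #(homFinset (starGraph r) G)
      = #(univ.sigma fun w => Fintype.piFinset fun _ : {i // i ≠ r} => G.neighborFinset w) :=
        card_equiv e fun f => by simpa [e] using hsplit f
    _ = ∑ w, G.degree w ^ (Fintype.card V - 1) := by
        simp [card_sigma, Fintype.card_subtype_compl]

theorem IsTree.sum_degree_pow_le {T : SimpleGraph V} (hT : T.IsTree) (v : V) (t : ℕ) :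
    ∑ f ∈ homFinset T G, G.degree (f v) ^ t ≤ ∑ w, G.degree w ^ (Fintype.card V - 1 + t) := by
  refine Fintype.induction_subsingleton_or_nontrivial (P := fun V _ => ∀ T : SimpleGraph V,
    T.IsTree → ∀ v t, ∑ f ∈ homFinset T G, G.degree (f v) ^ t ≤
      ∑ w, G.degree w ^ (Fintype.card V - 1 + t)) V (fun V _ _ T _ v t => ?_)
      (fun V _ _ ih T hT v t => ?_) T hT v t
  · rw [sum_homFinset_of_subsingleton _ (G.degree · ^ t),
      Fintype.card_eq_one_iff.2 ⟨v, (Subsingleton.elim · v)⟩, Nat.sub_self, zero_add]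
  · classical
    obtain ⟨j, hjv, hj⟩ := hT.exists_ne_and_degree_eq_one_of_ne v
    obtain ⟨z, hjz, hz⟩ := degree_eq_one_iff_existsUnique_adj.1 hj
    let z' : ({j}ᶜ : Set V) := ⟨z, hjz.ne'⟩
    let v' : ({j}ᶜ : Set V) := ⟨v, hjv⟩
    have hcard : Fintype.card ({j}ᶜ : Set V) + 1 = Fintype.card V := by
      rw [Fintype.card_compl_set, Set.card_singleton]
      have := Fintype.card_pos (α := V)
      omega
    have hleaf : ∀ w, T.Adj j w ↔ w = z' := fun w => ⟨hz w, fun h => h ▸ hjz⟩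
    have ih' := ih _ (by omega) _ (hT.induce_compl_singleton hj)
    calc ∑ f ∈ homFinset T G, G.degree (f v) ^ t
        = ∑ g ∈ homFinset (T.induce {j}ᶜ) G, G.degree (g z') * G.degree (g v') ^ t :=
          sum_homFinset_eq_sum_degree_smul hleaf fun g => G.degree (g v') ^ t
      _ ≤ ∑ w, G.degree w ^ (Fintype.card ({j}ᶜ : Set V) - 1 + (t + 1)) :=
          sum_mul_pow_le_of_sum_pow_succ_le (fun _ _ => Nat.zero_le _) (fun _ _ => Nat.zero_le _)
            t (ih' v' (t + 1)) (ih' z' (t + 1))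
      _ = ∑ w, G.degree w ^ (Fintype.card V - 1 + t) := by
          have := Fintype.one_lt_card (α := V)
          congr! 2
          omega

end SimpleGraph

theorem stmt_5 (m : ℕ) [NeZero m] {V W : Type*} [Fintype V] [Fintype W]
    (T : SimpleGraph V) (hT : T.IsTree) (hcard : Fintype.card V = m)
    (G : SimpleGraph W) :
    homCount T G ≤ homCount (starGraph m) G := by
  classical
  obtain ⟨v⟩ := hT.connected.nonempty
  have hstar : starGraph m = SimpleGraph.starGraph 0 := by
    ext
    simp [starGraph]
  calc homCount T G = ∑ f ∈ SimpleGraph.homFinset T G, G.degree (f v) ^ 0 := by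
        simp [SimpleGraph.homCount_eq_card_homFinset]
    _ ≤ ∑ w, G.degree w ^ (Fintype.card V - 1 + 0) := hT.sum_degree_pow_le G v 0
    _ = homCount (starGraph m) G := by
        rw [hstar, SimpleGraph.homCount_starGraph, Fintype.card_fin, hcard, add_zero]
end

section
/- Let $G$ be a graph on $n$ vertices with $e \geq 1$ edges and degree sequence $d_1,\dots,d_n$. Then for any tree $T_m$ on $m \geq 2$ vertices, $\hom(T_m, G) \geq 2e \cdot C^{m-2}$ where $C = \left(\prod_{i=1}^n d_i^{d_i}\right)^{1/(2e)}$. -/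
open Finset Real

theorem Fintype.sum_sum_update {V W M : Type*} [Fintype V] [Fintype W] [DecidableEq V]
    [AddCommMonoid M] (k : V) (Ψ : (V → W) → M) :
    ∑ g, ∑ x, Ψ (Function.update g k x) = Fintype.card W • ∑ g, Ψ g := by
  have hinv : Function.Involutive
      (fun p : (V → W) × W => (Function.update p.1 k p.2, p.1 k)) := by
    rintro ⟨g, x⟩
    simp only [Function.update_idem, Function.update_eq_self, Function.update_self]
  rw [← Fintype.sum_prod_type',
    Fintype.sum_bijective _ hinv.bijective _ (fun p => Ψ p.1) fun _ => rfl,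
    Fintype.sum_prod_type, Finset.sum_comm]
  simp

theorem Real.exp_sum_negMulLog_le_card {ι : Type*} [Fintype ι] (q : ι → ℝ)
    (hq0 : ∀ i, 0 ≤ q i) (hq1 : ∑ i, q i = 1) :
    exp (∑ i, negMulLog (q i)) ≤ #{i | q i ≠ 0} := by
  have hpos : ∀ i ∈ ({i | q i ≠ 0} : Finset ι), 0 < q i :=
    fun i hi => (hq0 i).lt_of_ne' (mem_filter.mp hi).2
  have hcard : (0 : ℝ) < #{i | q i ≠ 0} := by
    obtain ⟨i, -, hi⟩ := exists_ne_zero_of_sum_ne_zero (hq1.trans_ne one_ne_zero)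
    exact_mod_cast card_pos.mpr ⟨i, mem_filter.mpr ⟨mem_univ i, hi⟩⟩
  rw [← le_log_iff_exp_le hcard]
  calc ∑ i, negMulLog (q i) = ∑ i with q i ≠ 0, q i • log (q i)⁻¹ := by
        rw [Finset.sum_filter_of_ne fun i _ h => left_ne_zero_of_mul h]
        simp [negMulLog, log_inv]
    _ ≤ log (∑ i with q i ≠ 0, q i • (q i)⁻¹) :=
        strictConcaveOn_log_Ioi.concaveOn.le_map_sum (fun i _ => hq0 i)
          (by rw [Finset.sum_filter_ne_zero, hq1]) fun i hi => inv_pos.mpr (hpos i hi)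
    _ = log #{i | q i ≠ 0} := by
        simp only [smul_eq_mul]
        rw [Finset.sum_congr rfl fun i hi => mul_inv_cancel₀ (hpos i hi).ne']
        simp

section TreeChain

variable {V W : Type*}

def IsParentClosed (r : V) (pr : V → V) (S : Finset V) : Prop :=
  ∀ u ∈ S, u ≠ r → pr u ∈ S

variable [DecidableEq V] (ρ : W → ℝ) (P : W → W → ℝ) (r : V) (pr : V → V)

/-- The weight of `g` under the Markov chain indexed by a rooted tree with parent map `pr`:
`g r` is drawn from `ρ`, and each `v ∈ S` other than `r` from `P (g (pr v)) ·`. -/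
def treeChainWeight (S : Finset V) (g : V → W) : ℝ :=
  ρ (g r) * ∏ v ∈ S.erase r, P (g (pr v)) (g v)

variable {ρ P r pr}

theorem treeChainWeight_singleton (g : V → W) : treeChainWeight ρ P r pr {r} g = ρ (g r) := by
  simp [treeChainWeight]

theorem treeChainWeight_nonneg (hρ : ∀ w, 0 ≤ ρ w) (hP : ∀ a x, 0 ≤ P a x) (S : Finset V)
    (g : V → W) : 0 ≤ treeChainWeight ρ P r pr S g :=
  mul_nonneg (hρ _) (prod_nonneg fun _ _ => hP _ _)

theorem treeChainWeight_insert {S : Finset V} {v : V} (hvr : v ≠ r) (hv : v ∉ S) (g : V → W) :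
    treeChainWeight ρ P r pr (insert v S) g
      = treeChainWeight ρ P r pr S g * P (g (pr v)) (g v) := by
  rw [treeChainWeight, treeChainWeight, erase_insert_of_ne hvr,
    prod_insert fun h => hv (mem_of_mem_erase h)]
  ring

theorem treeChainWeight_update {S : Finset V} {v : V} (hvr : v ≠ r) (hv : v ∉ S)
    (hS : IsParentClosed r pr S) (g : V → W) (x : W) :
    treeChainWeight ρ P r pr S (Function.update g v x) = treeChainWeight ρ P r pr S g := by
  have hne : ∀ u ∈ S, u ≠ v := fun u hu h => hv (h ▸ hu)
  rw [treeChainWeight, treeChainWeight, Function.update_of_ne hvr.symm]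
  congr 1
  refine prod_congr rfl fun u hu => ?_
  obtain ⟨hur, hu⟩ := mem_erase.mp hu
  rw [Function.update_of_ne (hne _ (hS u hu hur)), Function.update_of_ne (hne u hu)]

theorem sum_eq_one_of_treeChainWeight_ne_zero [Fintype W]
    (hρ : ∀ a, ρ a ≠ 0 → ∑ x, P a x = 1) (hP : ∀ a b, P a b ≠ 0 → ∑ x, P b x = 1)
    {S : Finset V} {u : V} (hu : u ∈ S) {g : V → W} (hg : treeChainWeight ρ P r pr S g ≠ 0) :
    ∑ x, P (g u) x = 1 := by
  obtain ⟨hroot, hprod⟩ := mul_ne_zero_iff.mp hg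
  by_cases hur : u = r
  · exact hur ▸ hρ _ hroot
  · exact hP _ _ (prod_ne_zero_iff.mp hprod u (mem_erase.mpr ⟨hur, hu⟩))

theorem card_smul_sum_treeChainWeight_insert [Fintype V] [Fintype W] {S : Finset V} {v : V}
    (hvr : v ≠ r) (hv : v ∉ S) (hS : IsParentClosed r pr S) (hprv : pr v ∈ S)
    (F : (V → W) → ℝ) :
    Fintype.card W • ∑ g, treeChainWeight ρ P r pr (insert v S) g * F g
      = ∑ g, treeChainWeight ρ P r pr S g *
          ∑ x, P (g (pr v)) x * F (Function.update g v x) := by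
  have hprv' : pr v ≠ v := fun h => hv (h ▸ hprv)
  rw [← Fintype.sum_sum_update v]
  refine sum_congr rfl fun g _ => ?_
  simp only [treeChainWeight_insert hvr hv, treeChainWeight_update hvr hv hS,
    Function.update_self, Function.update_of_ne hprv', mul_sum]
  exact sum_congr rfl fun x _ => by ring

theorem IsParentClosed.exists_erase (N : V → ℕ) (hN : ∀ v, v ≠ r → N (pr v) < N v)
    {S : Finset V} (hS : IsParentClosed r pr S) (hrS : r ∈ S) (hS1 : S ≠ {r}) :
    ∃ v ∈ S, v ≠ r ∧ pr v ∈ S.erase v ∧ IsParentClosed r pr (S.erase v) := by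
  obtain ⟨v, hv, hvmax⟩ := (S.erase r).exists_max_image N
    ((erase_nonempty hrS).mpr ((nontrivial_iff_ne_singleton hrS).mpr hS1))
  obtain ⟨hvr, hvS⟩ := mem_erase.mp hv
  have hprv : pr v ≠ v := fun h => (hN v hvr).ne (congrArg N h)
  refine ⟨v, hvS, hvr, mem_erase.mpr ⟨hprv, hS v hvS hvr⟩, fun u hu hur => ?_⟩
  obtain ⟨-, huS⟩ := mem_erase.mp hu
  refine mem_erase.mpr ⟨fun h => ?_, hS u huS hur⟩
  have := hvmax u (mem_erase.mpr ⟨hur, huS⟩)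
  have := hN u hur
  rw [h] at this
  omega

-- The rows of `P` need only sum to one at the states the chain can visit.
-- Coordinates outside `S` are free; they contribute the factor `|W| ^ (|V| - |S|)`.
theorem card_pow_mul_sum_treeChainWeight_mul [Fintype V] [Fintype W]
    (N : V → ℕ) (hN : ∀ v, v ≠ r → N (pr v) < N v)
    (hρ : ∀ a, ρ a ≠ 0 → ∑ x, P a x = 1) (hP : ∀ a b, P a b ≠ 0 → ∑ x, P b x = 1)
    (hstat : ∀ x, ∑ a, ρ a * P a x = ρ x)
    {S : Finset V} (hS : IsParentClosed r pr S) (hrS : r ∈ S) {j : V} (hj : j ∈ S)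
    (f : W → ℝ) :
    (Fintype.card W : ℝ) ^ #S * ∑ g, treeChainWeight ρ P r pr S g * f (g j)
      = (Fintype.card W : ℝ) ^ Fintype.card V * ∑ w, ρ w * f w := by
  induction S using Finset.strongInduction generalizing j f with | _ S ih =>
  by_cases hS1 : S = {r}
  · subst hS1
    rw [mem_singleton.mp hj]
    have key := Fintype.sum_sum_update r fun g => ρ (g r) * f (g r)
    simp only [Function.update_self, sum_const, card_univ, Fintype.card_fun, nsmul_eq_mul] at key
    push_cast at key
    simp only [treeChainWeight_singleton, card_singleton, pow_one, key]
  obtain ⟨v, hvS, hvr, hprv, hS'⟩ := hS.exists_erase N hN hrS hS1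
  have ih' {j : V} :=
    ih (S.erase v) (erase_ssubset hvS) hS' (mem_erase.mpr ⟨hvr.symm, hrS⟩) (j := j)
  calc (Fintype.card W : ℝ) ^ #S * ∑ g, treeChainWeight ρ P r pr S g * f (g j)
      = (Fintype.card W : ℝ) ^ #(S.erase v) * (Fintype.card W • ∑ g,
          treeChainWeight ρ P r pr (insert v (S.erase v)) g * f (g j)) := by
        rw [insert_erase hvS, nsmul_eq_mul, ← mul_assoc, ← pow_succ, card_erase_add_one hvS]
    _ = (Fintype.card W : ℝ) ^ #(S.erase v) * ∑ g, treeChainWeight ρ P r pr (S.erase v) g *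
          ∑ x, P (g (pr v)) x * f (Function.update g v x j) := by
        rw [card_smul_sum_treeChainWeight_insert hvr (notMem_erase v S) hS' hprv]
    _ = (Fintype.card W : ℝ) ^ Fintype.card V * ∑ w, ρ w * f w := by
        by_cases hjv : j = v
        · subst hjv
          simp only [Function.update_self]
          rw [ih' hprv fun a => ∑ x, P a x * f x]
          congr 1
          simp only [mul_sum, ← mul_assoc]
          rw [sum_comm]
          simp only [← sum_mul, hstat]
        · simp only [Function.update_of_ne hjv, ← sum_mul]
          rw [← ih' (mem_erase.mpr ⟨hjv, hj⟩) f]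
          congr 1
          refine sum_congr rfl fun g _ => ?_
          by_cases hg : treeChainWeight ρ P r pr (S.erase v) g = 0
          · simp [hg]
          · rw [sum_eq_one_of_treeChainWeight_ne_zero hρ hP hprv hg, one_mul]

theorem sum_treeChainWeight_mul [Fintype V] [Fintype W] [Nonempty W]
    (N : V → ℕ) (hN : ∀ v, v ≠ r → N (pr v) < N v)
    (hρ : ∀ a, ρ a ≠ 0 → ∑ x, P a x = 1) (hP : ∀ a b, P a b ≠ 0 → ∑ x, P b x = 1)
    (hstat : ∀ x, ∑ a, ρ a * P a x = ρ x) (j : V) (f : W → ℝ) :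
    ∑ g, treeChainWeight ρ P r pr univ g * f (g j) = ∑ w, ρ w * f w := by
  have h := card_pow_mul_sum_treeChainWeight_mul N hN hρ hP hstat
    (fun u _ _ => mem_univ (pr u)) (mem_univ r) (mem_univ j) f
  rwa [card_univ, mul_right_inj' (by positivity)] at h

end TreeChain

namespace SimpleGraph

variable {W : Type*} [Fintype W] (G : SimpleGraph W) [DecidableRel G.Adj]

noncomputable def walkKernel (a x : W) : ℝ :=
  if G.Adj a x then (G.degree a : ℝ)⁻¹ else 0

noncomputable def degreeDistrib (w : W) : ℝ :=
  G.degree w / (2 * #G.edgeFinset)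

variable {G}

theorem sum_walkKernel {a : W} (ha : G.degree a ≠ 0) : ∑ x, G.walkKernel a x = 1 := by
  simp only [walkKernel]
  rw [← sum_filter, sum_const, ← neighborFinset_eq_filter, card_neighborFinset_eq_degree,
    nsmul_eq_mul]
  exact mul_inv_cancel₀ (Nat.cast_ne_zero.mpr ha)

theorem adj_of_walkKernel_ne_zero {a x : W} (h : G.walkKernel a x ≠ 0) : G.Adj a x := by
  by_contra hadj
  exact h (if_neg hadj)

theorem degree_ne_zero_of_walkKernel_ne_zero {a x : W} (h : G.walkKernel a x ≠ 0) :
    G.degree x ≠ 0 :=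
  ((G.degree_pos_iff_exists_adj x).mpr ⟨a, (adj_of_walkKernel_ne_zero h).symm⟩).ne'

theorem degree_ne_zero_of_degreeDistrib_ne_zero {a : W} (h : G.degreeDistrib a ≠ 0) :
    G.degree a ≠ 0 := by
  rintro hdeg
  simp [degreeDistrib, hdeg] at h

theorem sum_degreeDistrib_mul_walkKernel (x : W) :
    ∑ a, G.degreeDistrib a * G.walkKernel a x = G.degreeDistrib x := by
  have hterm : ∀ a, G.degreeDistrib a * G.walkKernel a x
      = if G.Adj x a then (2 * #G.edgeFinset : ℝ)⁻¹ else 0 := by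
    intro a
    by_cases hadj : G.Adj a x
    · have hdeg : (G.degree a : ℝ) ≠ 0 :=
        Nat.cast_ne_zero.mpr ((G.degree_pos_iff_exists_adj a).mpr ⟨x, hadj⟩).ne'
      simp only [degreeDistrib, walkKernel, if_pos hadj, if_pos hadj.symm]
      field_simp
    · simp [walkKernel, hadj, G.adj_comm x a]
  rw [sum_congr rfl fun a _ => hterm a, ← sum_filter, sum_const, ← neighborFinset_eq_filter,
    card_neighborFinset_eq_degree, nsmul_eq_mul, degreeDistrib, div_eq_mul_inv]

theorem sum_degreeDistrib (he : #G.edgeFinset ≠ 0) : ∑ w, G.degreeDistrib w = 1 := by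
  simp only [degreeDistrib]
  rw [← sum_div, ← Nat.cast_sum, sum_degrees_eq_twice_card_edges]
  push_cast
  exact div_self (by positivity)

theorem walkKernel_nonneg (a x : W) : 0 ≤ G.walkKernel a x := by
  unfold walkKernel
  split_ifs <;> positivity

theorem degreeDistrib_nonneg (w : W) : 0 ≤ G.degreeDistrib w := by
  unfold degreeDistrib
  positivity

theorem sum_negMulLog_degreeDistrib (he : #G.edgeFinset ≠ 0) :
    ∑ w, negMulLog (G.degreeDistrib w)
      = log (2 * #G.edgeFinset) - ∑ w, G.degreeDistrib w * log (G.degree w) := by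
  have hterm : ∀ w, negMulLog (G.degreeDistrib w)
      = G.degreeDistrib w * log (2 * #G.edgeFinset) - G.degreeDistrib w * log (G.degree w) := by
    intro w
    by_cases hw : G.degree w = 0
    · simp [degreeDistrib, hw]
    · rw [negMulLog, degreeDistrib, log_div (by exact_mod_cast hw) (by positivity)]
      ring
  rw [sum_congr rfl fun w _ => hterm w, sum_sub_distrib, ← sum_mul, sum_degreeDistrib he, one_mul]

theorem prod_degree_pow_pos : 0 < ∏ w, (G.degree w : ℝ) ^ G.degree w :=
  prod_pos fun _ _ => by exact_mod_cast Nat.pow_self_pos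

theorem log_prod_degree_pow_rpow :
    log ((∏ w, (G.degree w : ℝ) ^ G.degree w) ^ (2 * (#G.edgeFinset : ℝ))⁻¹)
      = ∑ w, G.degreeDistrib w * log (G.degree w) := by
  rw [log_rpow prod_degree_pow_pos, log_prod fun w _ => by exact_mod_cast Nat.pow_self_pos.ne',
    mul_sum]
  simp only [log_pow, degreeDistrib]
  exact sum_congr rfl fun w _ => by ring

section TreeChainEntropy

variable {V W : Type*} [DecidableEq V] [Fintype W] {G : SimpleGraph W}
  [DecidableRel G.Adj] {r : V} {pr : V → V}

theorem negMulLog_treeChainWeight (S : Finset V) (g : V → W) :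
    negMulLog (treeChainWeight G.degreeDistrib G.walkKernel r pr S g)
      = treeChainWeight G.degreeDistrib G.walkKernel r pr S g *
          (-log (G.degreeDistrib (g r)) + ∑ v ∈ S.erase r, log (G.degree (g (pr v)))) := by
  by_cases hq : treeChainWeight G.degreeDistrib G.walkKernel r pr S g = 0
  · simp [hq]
  have hlog : log (treeChainWeight G.degreeDistrib G.walkKernel r pr S g)
      = log (G.degreeDistrib (g r)) - ∑ v ∈ S.erase r, log (G.degree (g (pr v))) := by
    obtain ⟨hroot, hprod⟩ := mul_ne_zero_iff.mp hq
    rw [treeChainWeight, log_mul hroot hprod, log_prod (prod_ne_zero_iff.mp hprod),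
      sub_eq_add_neg, ← sum_neg_distrib]
    refine congrArg _ (sum_congr rfl fun v hv => ?_)
    rw [walkKernel, if_pos (adj_of_walkKernel_ne_zero (prod_ne_zero_iff.mp hprod v hv)), log_inv]
  rw [negMulLog, hlog]
  ring

variable [Fintype V]

theorem map_adj_of_treeChainWeight_ne_zero {T : SimpleGraph V}
    (hT : ∀ a b, T.Adj a b → (a ≠ r ∧ pr a = b) ∨ (b ≠ r ∧ pr b = a)) {g : V → W}
    (hg : treeChainWeight G.degreeDistrib G.walkKernel r pr univ g ≠ 0) {a b : V}
    (hab : T.Adj a b) : G.Adj (g a) (g b) := by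
  have hadj {v : V} (hvr : v ≠ r) : G.Adj (g (pr v)) (g v) :=
    adj_of_walkKernel_ne_zero <|
      prod_ne_zero_iff.mp (right_ne_zero_of_mul hg) v (mem_erase.mpr ⟨hvr, mem_univ v⟩)
  rcases hT a b hab with ⟨har, rfl⟩ | ⟨hbr, rfl⟩
  · exact (hadj har).symm
  · exact hadj hbr

theorem sum_treeChainWeight_degreeDistrib_mul (he : #G.edgeFinset ≠ 0) (N : V → ℕ)
    (hN : ∀ v, v ≠ r → N (pr v) < N v) (j : V) (f : W → ℝ) :
    ∑ g, treeChainWeight G.degreeDistrib G.walkKernel r pr univ g * f (g j)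
      = ∑ w, G.degreeDistrib w * f w := by
  obtain ⟨⟨a, -⟩, -⟩ := card_ne_zero.mp he
  have : Nonempty W := ⟨a⟩
  exact sum_treeChainWeight_mul N hN
    (fun a h => sum_walkKernel (degree_ne_zero_of_degreeDistrib_ne_zero h))
    (fun a b h => sum_walkKernel (degree_ne_zero_of_walkKernel_ne_zero h))
    sum_degreeDistrib_mul_walkKernel j f

theorem sum_negMulLog_treeChainWeight (he : #G.edgeFinset ≠ 0) (N : V → ℕ)
    (hN : ∀ v, v ≠ r → N (pr v) < N v) :
    ∑ g, negMulLog (treeChainWeight G.degreeDistrib G.walkKernel r pr univ g)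
      = ∑ w, negMulLog (G.degreeDistrib w)
        + ((Fintype.card V : ℝ) - 1) * ∑ w, G.degreeDistrib w * log (G.degree w) := by
  have hmarg := sum_treeChainWeight_degreeDistrib_mul he N hN
  have hroot : ∑ g, treeChainWeight G.degreeDistrib G.walkKernel r pr univ g
      * -log (G.degreeDistrib (g r)) = ∑ w, negMulLog (G.degreeDistrib w) := by
    rw [hmarg r fun w => -log (G.degreeDistrib w)]
    exact sum_congr rfl fun w _ => by rw [negMulLog]; ring
  have hedges : ∑ g, treeChainWeight G.degreeDistrib G.walkKernel r pr univ g
      * ∑ v ∈ univ.erase r, log (G.degree (g (pr v)))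
      = ((Fintype.card V : ℝ) - 1) * ∑ w, G.degreeDistrib w * log (G.degree w) := by
    simp only [mul_sum]
    rw [sum_comm]
    simp only [hmarg _ fun w => log (G.degree w), sum_const, card_erase_of_mem (mem_univ r),
      card_univ, nsmul_eq_mul]
    rw [Nat.cast_pred (Fintype.card_pos_iff.mpr ⟨r⟩), mul_sum]
  simp only [negMulLog_treeChainWeight, mul_add, sum_add_distrib, hroot, hedges]

theorem sum_negMulLog_treeChainWeight_eq_log (he : #G.edgeFinset ≠ 0)
    (hm : 2 ≤ Fintype.card V) (N : V → ℕ) (hN : ∀ v, v ≠ r → N (pr v) < N v) :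
    ∑ g, negMulLog (treeChainWeight G.degreeDistrib G.walkKernel r pr univ g)
      = log (2 * #G.edgeFinset * ((∏ w, (G.degree w : ℝ) ^ G.degree w)
          ^ (2 * (#G.edgeFinset : ℝ))⁻¹) ^ (Fintype.card V - 2)) := by
  have hC := rpow_pos_of_pos (prod_degree_pow_pos (G := G)) (2 * (#G.edgeFinset : ℝ))⁻¹
  rw [log_mul (by positivity) (by positivity), log_pow, log_prod_degree_pow_rpow,
    sum_negMulLog_treeChainWeight he N hN, sum_negMulLog_degreeDistrib he, Nat.cast_sub hm]
  push_cast
  ring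

end TreeChainEntropy

theorem Connected.exists_adj_dist_lt {V : Type*} {T : SimpleGraph V} (hT : T.Connected)
    {r v : V} (hv : v ≠ r) : ∃ u, T.dist r u < T.dist r v ∧ T.Adj u v := by
  obtain ⟨p, hp⟩ := hT.exists_walk_length_eq_dist v r
  obtain ⟨u, hvu, q, rfl⟩ := Walk.exists_eq_cons_of_ne hv p
  refine ⟨u, ?_, hvu.symm⟩
  have := T.dist_le q
  rw [Walk.length_cons] at hp
  rw [dist_comm, dist_comm (u := r)]
  omega

theorem IsTree.exists_parent {V : Type*} [Fintype V] {T : SimpleGraph V} (hT : T.IsTree) :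
    ∃ (r : V) (pr : V → V) (N : V → ℕ), (∀ v, v ≠ r → N (pr v) < N v) ∧
      ∀ a b, T.Adj a b → (a ≠ r ∧ pr a = b) ∨ (b ≠ r ∧ pr b = a) := by
  classical
  obtain ⟨r⟩ := hT.connected.nonempty
  choose! pr hpr using fun v (hv : v ≠ r) => hT.connected.exists_adj_dist_lt hv
  refine ⟨r, pr, T.dist r, fun v hv => (hpr v hv).1, ?_⟩
  -- The `|V| - 1` parent edges are distinct, so they are all the edges of the tree.
  have hmaps : Set.MapsTo (fun v => s(pr v, v)) (univ.erase r : Finset V) T.edgeFinset :=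
    fun v hv => mem_edgeFinset.mpr (hpr v (mem_erase.mp hv).1).2
  have hinj : Set.InjOn (fun v => s(pr v, v)) (univ.erase r : Finset V) := by
    intro v hv u hu huv
    rcases Sym2.eq_iff.mp huv with ⟨-, h⟩ | ⟨h1, h2⟩
    · exact h
    · have hv' := (hpr v (mem_erase.mp hv).1).1
      have hu' := (hpr u (mem_erase.mp hu).1).1
      rw [h1] at hv'
      rw [← h2] at hu'
      omega
  have hcard : #T.edgeFinset ≤ #(univ.erase r) := by
    rw [card_erase_of_mem (mem_univ r), card_univ, ← hT.card_edgeFinset]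
    simp
  intro a b hab
  obtain ⟨v, hv, hve⟩ := surjOn_of_injOn_of_card_le _ hmaps hinj hcard
    (mem_edgeFinset.mpr (show s(a, b) ∈ T.edgeSet from hab))
  have hvr := (mem_erase.mp hv).1
  rcases Sym2.eq_iff.mp hve with ⟨h1, rfl⟩ | ⟨h1, rfl⟩
  · exact Or.inr ⟨hvr, h1⟩
  · exact Or.inl ⟨hvr, h1⟩

end SimpleGraph

theorem card_le_homCount {V W : Type*} [Finite V] [Finite W] {T : SimpleGraph V}
    {G : SimpleGraph W} {s : Finset (V → W)}
    (hs : ∀ g ∈ s, ∀ a b, T.Adj a b → G.Adj (g a) (g b)) :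
    #s ≤ homCount T G := by
  have : Finite (T →g G) := Finite.of_injective _ DFunLike.coe_injective
  rw [← Nat.card_eq_finsetCard]
  refine Nat.card_le_card_of_injective (fun g => ⟨g.1, hs g.1 g.2 _ _⟩) fun g g' h => ?_
  exact Subtype.ext (congrArg (fun f : T →g G => (f : V → W)) h)

theorem stmt_7_general {V W : Type*} [Fintype V] [Fintype W]
    (T : SimpleGraph V) (hT : T.IsTree) (hm : 2 ≤ Fintype.card V)
    (G : SimpleGraph W) [DecidableRel G.Adj] (he : 1 ≤ G.edgeFinset.card) :
    (homCount T G : ℝ) ≥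
      2 * G.edgeFinset.card *
        ((∏ w, (G.degree w : ℝ) ^ (G.degree w)) ^
            ((2 * (G.edgeFinset.card : ℝ))⁻¹)) ^ (Fintype.card V - 2) := by
  classical
  obtain ⟨r, pr, N, hN, hedge⟩ := hT.exists_parent
  have he' : #G.edgeFinset ≠ 0 := by omega
  set q := treeChainWeight G.degreeDistrib G.walkKernel r pr univ
  have hq0 : ∀ g, 0 ≤ q g :=
    treeChainWeight_nonneg SimpleGraph.degreeDistrib_nonneg SimpleGraph.walkKernel_nonneg univ
  have hq1 : ∑ g, q g = 1 := by
    simpa [SimpleGraph.sum_degreeDistrib he'] using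
      SimpleGraph.sum_treeChainWeight_degreeDistrib_mul he' N hN r fun _ => 1
  have hC := rpow_pos_of_pos (SimpleGraph.prod_degree_pow_pos (G := G))
    (2 * (#G.edgeFinset : ℝ))⁻¹
  calc _ = exp (∑ g, negMulLog (q g)) := by
        rw [SimpleGraph.sum_negMulLog_treeChainWeight_eq_log he' hm N hN, exp_log (by positivity)]
    _ ≤ #{g | q g ≠ 0} := exp_sum_negMulLog_le_card q hq0 hq1
    _ ≤ homCount T G := mod_cast card_le_homCount fun g hg _ _ =>
        SimpleGraph.map_adj_of_treeChainWeight_ne_zero hedge (mem_filter.mp hg).2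

theorem stmt_7 {V W : Type*} [Fintype V] [Fintype W] [DecidableEq W]
    (T : SimpleGraph V) (hT : T.IsTree) (hm : 2 ≤ Fintype.card V)
    (G : SimpleGraph W) [DecidableRel G.Adj] (he : 1 ≤ G.edgeFinset.card) :
    (homCount T G : ℝ) ≥
      2 * G.edgeFinset.card *
        ((∏ w, (G.degree w : ℝ) ^ (G.degree w)) ^
            ((2 * (G.edgeFinset.card : ℝ))⁻¹)) ^ (Fintype.card V - 2) :=
  stmt_7_general T hT hm G he
end

section
/- Let $G$ be a connected graph on $n$ vertices with adjacency matrix $A$, largest eigenvalue $\lambda$, and positive unit eigenvector $y$ for $\lambda$. Set $q_i = y_i^2$ and $H_\lambda(G) = \sum_{i=1}^n q_i \log(1/q_i)$. Then for any tree $T_m$ on $m$ vertices, $\hom(T_m, G) \geq \exp(H_\lambda(G)) \cdot \lambda^{m-1}$. -/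
/-!
Weight a homomorphism `φ : T →g G` by `∏ a, w a (φ a)` and let `Z(T, w)` be the total weight.
Deleting a leaf `v` of `T` with neighbour `u` gives `Z(T, w) = Z(T - v, w')`, where `w'` multiplies
`w u` by `A *ᵥ w v`. For `λ > 0` the matrix `P i j = A i j * y j / (λ * y i)` is stochastic with
stationary law `q = y²`, so Jensen's inequality applied row by row gives
`∑ q log (A *ᵥ x) ≥ log λ + ∑ q log x`: every deleted leaf contributes a factor `λ`. On a single
vertex Jensen gives `∑ j, w j ≥ exp (H(q) + ∑ q log w)`, and `w ≡ 1` yields the theorem.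
-/

open Finset Real Matrix

section Jensen

variable {ι : Type*} [Fintype ι]

lemma sum_mul_log_le_log_sum_mul {p x : ι → ℝ} (hp : ∀ i, 0 ≤ p i) (hp1 : ∑ i, p i = 1)
    (hx : ∀ i, 0 < x i) : ∑ i, p i * log (x i) ≤ log (∑ i, p i * x i) := by
  simpa only [smul_eq_mul] using strictConcaveOn_log_Ioi.concaveOn.le_map_sum
    (fun i _ => hp i) hp1 (fun i _ => Set.mem_Ioi.mpr (hx i))

lemma exp_entropy_add_sum_mul_log_le_sum {q x : ι → ℝ} (hq : ∀ i, 0 < q i)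
    (hq1 : ∑ i, q i = 1) (hx : ∀ i, 0 < x i) :
    exp (∑ i, q i * log (1 / q i) + ∑ i, q i * log (x i)) ≤ ∑ i, x i := by
  have hJ := sum_mul_log_le_log_sum_mul (fun i => (hq i).le) hq1 (fun i => div_pos (hx i) (hq i))
  have hsum : ∑ i, q i * (x i / q i) = ∑ i, x i :=
    sum_congr rfl fun i _ => mul_div_cancel₀ _ (hq i).ne'
  have hlog : ∑ i, q i * log (x i / q i) = ∑ i, q i * log (1 / q i) + ∑ i, q i * log (x i) := by
    rw [← sum_add_distrib]
    refine sum_congr rfl fun i _ => ?_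
    rw [div_eq_mul_one_div (x i), log_mul (hx i).ne' (one_div_pos.mpr (hq i)).ne']
    ring
  rw [hsum, hlog] at hJ
  calc _ ≤ exp (log (∑ i, x i)) := exp_le_exp.mpr hJ
    _ = ∑ i, x i :=
      exp_log (sum_pos (fun i _ => hx i) (nonempty_of_sum_ne_zero (hq1 ▸ one_ne_zero)))

lemma sum_mul_log_le_sum_mul_log_mulVec {P : Matrix ι ι ℝ} (hP : ∀ i j, 0 ≤ P i j)
    (hrow : ∀ i, ∑ j, P i j = 1) {q : ι → ℝ} (hq : ∀ i, 0 ≤ q i) (hstat : q ᵥ* P = q)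
    {x : ι → ℝ} (hx : ∀ i, 0 < x i) :
    ∑ j, q j * log (x j) ≤ ∑ i, q i * log ((P *ᵥ x) i) := by
  calc ∑ j, q j * log (x j) = ∑ j, (q ᵥ* P) j * log (x j) := by rw [hstat]
    _ = ∑ i, q i * ∑ j, P i j * log (x j) := by
      simp only [vecMul, dotProduct, sum_mul, mul_sum, mul_assoc]
      exact sum_comm
    _ ≤ ∑ i, q i * log ((P *ᵥ x) i) := by
      gcongr with i _
      · exact hq i
      · exact sum_mul_log_le_log_sum_mul (hP i) (hrow i) hx

end Jensen

section DoobTransform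

variable {ι : Type*} {A : Matrix ι ι ℝ} {lam : ℝ} {y : ι → ℝ}

noncomputable def doobTransform (A : Matrix ι ι ℝ) (lam : ℝ) (y : ι → ℝ) : Matrix ι ι ℝ :=
  Matrix.of fun i j => A i j * y j / (lam * y i)

lemma doobTransform_nonneg (hA : ∀ i j, 0 ≤ A i j) (hlam : 0 < lam) (hy : ∀ i, 0 < y i)
    (i j : ι) : 0 ≤ doobTransform A lam y i j :=
  div_nonneg (mul_nonneg (hA i j) (hy j).le) (mul_pos hlam (hy i)).le

variable [Fintype ι]

lemma sum_mul_eq_of_mulVec_eq_smul (heig : A *ᵥ y = lam • y) (i : ι) :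
    ∑ j, A i j * y j = lam * y i := by
  simpa [mulVec, dotProduct] using congrFun heig i

lemma eigenvalue_nonneg_of_pos_eigenvector [Nonempty ι] (hA : ∀ i j, 0 ≤ A i j)
    (hy : ∀ i, 0 < y i) (heig : A *ᵥ y = lam • y) : 0 ≤ lam := by
  obtain ⟨i⟩ := ‹Nonempty ι›
  refine nonneg_of_mul_nonneg_left ?_ (hy i)
  rw [← sum_mul_eq_of_mulVec_eq_smul heig i]
  exact sum_nonneg fun j _ => mul_nonneg (hA i j) (hy j).le

lemma mulVec_pos_of_eigenvector (hA : ∀ i j, 0 ≤ A i j) (hlam : 0 < lam) (hy : ∀ i, 0 < y i)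
    (heig : A *ᵥ y = lam • y) {x : ι → ℝ} (hx : ∀ i, 0 < x i) (i : ι) : 0 < (A *ᵥ x) i := by
  have hrow : 0 < ∑ j, A i j * y j := sum_mul_eq_of_mulVec_eq_smul heig i ▸ mul_pos hlam (hy i)
  obtain ⟨j, -, hj⟩ := exists_lt_of_sum_lt (f := fun _ => (0 : ℝ)) (by simpa using hrow)
  have hAij : 0 < A i j := pos_of_mul_pos_left hj (hy j).le
  exact sum_pos' (fun k _ => mul_nonneg (hA i k) (hx k).le) ⟨j, mem_univ j, mul_pos hAij (hx j)⟩

lemma sum_doobTransform_row (hlam : 0 < lam) (hy : ∀ i, 0 < y i) (heig : A *ᵥ y = lam • y)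
    (i : ι) : ∑ j, doobTransform A lam y i j = 1 := by
  simp only [doobTransform, of_apply, ← sum_div, sum_mul_eq_of_mulVec_eq_smul heig]
  exact div_self (mul_pos hlam (hy i)).ne'

lemma vecMul_doobTransform (hA : A.IsSymm) (hlam : 0 < lam) (hy : ∀ i, 0 < y i)
    (heig : A *ᵥ y = lam • y) :
    (fun i => y i ^ 2) ᵥ* doobTransform A lam y = fun i => y i ^ 2 := by
  funext j
  have hcol : ∑ i, A i j * y i = lam * y j := by
    simpa only [hA.apply] using sum_mul_eq_of_mulVec_eq_smul heig j
  calc ∑ i, y i ^ 2 * (A i j * y j / (lam * y i)) = (∑ i, A i j * y i) * y j / lam := by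
        rw [sum_mul, sum_div]
        refine sum_congr rfl fun i _ => ?_
        field_simp [(hy i).ne', hlam.ne']
    _ = y j ^ 2 := by rw [hcol]; field_simp

lemma doobTransform_mulVec (hy : ∀ i, 0 < y i) (x : ι → ℝ) :
    doobTransform A lam y *ᵥ (fun j => x j / y j) = fun i => (A *ᵥ x) i / (lam * y i) := by
  funext i
  simp only [mulVec, dotProduct, doobTransform, of_apply, sum_div]
  refine sum_congr rfl fun j _ => ?_
  field_simp [(hy j).ne']

lemma log_add_sum_mul_log_le_sum_mul_log_mulVec (hAsymm : A.IsSymm) (hA : ∀ i j, 0 ≤ A i j)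
    (hlam : 0 < lam) (hy : ∀ i, 0 < y i) (hunit : ∑ i, y i ^ 2 = 1) (heig : A *ᵥ y = lam • y)
    {x : ι → ℝ} (hx : ∀ i, 0 < x i) :
    log lam + ∑ j, y j ^ 2 * log (x j) ≤ ∑ i, y i ^ 2 * log ((A *ᵥ x) i) := by
  have h := sum_mul_log_le_sum_mul_log_mulVec (doobTransform_nonneg hA hlam hy)
    (sum_doobTransform_row hlam hy heig) (fun i => sq_nonneg (y i))
    (vecMul_doobTransform hAsymm hlam hy heig) (fun j => div_pos (hx j) (hy j))
  have hAx := mulVec_pos_of_eigenvector hA hlam hy heig hx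
  simp only [doobTransform_mulVec hy, log_div (hx _).ne' (hy _).ne',
    log_div (hAx _).ne' (mul_pos hlam (hy _)).ne', log_mul hlam.ne' (hy _).ne', mul_sub, mul_add,
    sum_sub_distrib, sum_add_distrib, ← sum_mul, hunit] at h
  linarith

end DoobTransform

namespace SimpleGraph

section HomWeight

variable {V W : Type*} {T : SimpleGraph V} {G : SimpleGraph W}

variable (T G) in
noncomputable def homWeight [Fintype V] [Finite W] (w : V → W → ℝ) : ℝ :=
  ∑ᶠ f : T →g G, ∏ a, w a (f a)

lemma homWeight_eq_sum [Fintype V] [Finite W] [Fintype (T →g G)] (w : V → W → ℝ) :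
    homWeight T G w = ∑ f : T →g G, ∏ a, w a (f a) :=
  finsum_eq_sum_of_fintype _

lemma homWeight_nonneg [Fintype V] [Finite W] {w : V → W → ℝ} (hw : ∀ a j, 0 ≤ w a j) :
    0 ≤ homWeight T G w :=
  finsum_nonneg fun f => prod_nonneg fun a _ => hw a (f a)

lemma homWeight_one [Fintype V] [Finite W] :
    homWeight T G (fun _ _ => 1) = homCount T G := by
  have := Fintype.ofFinite (T →g G)
  simp [homWeight_eq_sum, homCount, Nat.card_eq_fintype_card]

lemma homWeight_of_subsingleton [Fintype V] [Subsingleton V] [Fintype W] (r : V)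
    (w : V → W → ℝ) : homWeight T G w = ∑ j, w r j := by
  let e : (T →g G) ≃ W :=
    { toFun f := f r
      invFun j := ⟨fun _ => j, fun h => (h.ne (Subsingleton.elim _ _)).elim⟩
      left_inv f := RelHom.ext fun a => by rw [Subsingleton.elim a r]; rfl
      right_inv _ := rfl }
  have := Fintype.ofFinite (T →g G)
  rw [homWeight_eq_sum, ← e.symm.sum_comp]
  exact sum_congr rfl fun j _ => Fintype.prod_subsingleton _ r

variable [DecidableEq V] [Fintype W] [DecidableRel G.Adj]

def leafHomEquiv {v u : V} (hvu : T.Adj v u) (hleaf : ∀ a, T.Adj v a → a = u) :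
    (T →g G) ≃
      Σ f : T.induce {v}ᶜ →g G, G.neighborFinset (f ⟨u, Set.mem_compl_singleton_iff.mpr hvu.ne'⟩)
    where
  toFun f := ⟨f.comp (Embedding.induce _).toHom, f v,
    (mem_neighborFinset _ _ _).mpr (f.map_rel hvu.symm)⟩
  invFun p :=
    { toFun a := if h : a = v then p.2 else p.1 ⟨a, h⟩
      map_rel' := by
        rintro a b hab
        have hnbr := (mem_neighborFinset _ _ _).mp p.2.2
        by_cases ha : a = v <;> by_cases hb : b = v
        · subst ha hb; exact (hab.ne rfl).elim
        · subst ha; obtain rfl := hleaf b hab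
          simpa [hb] using hnbr.symm
        · subst hb; obtain rfl := hleaf a hab.symm
          simpa [ha] using hnbr
        · simpa [ha, hb] using p.1.map_rel (show (T.induce {v}ᶜ).Adj ⟨a, ha⟩ ⟨b, hb⟩ from hab) }
  left_inv f := by
    ext a
    by_cases ha : a = v
    · subst ha; simp
    · simp [ha]
  right_inv p := Sigma.subtype_ext (RelHom.ext fun a => dif_neg a.2) (by simp)

variable (G) in
noncomputable def foldLeafWeight (w : V → W → ℝ) (v u : V) : ↥({v}ᶜ : Set V) → W → ℝ :=
  fun a j => w a j * if (a : V) = u then (G.adjMatrix ℝ *ᵥ w v) j else 1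

lemma foldLeafWeight_pos {w : V → W → ℝ} (hw : ∀ a j, 0 < w a j) {v : V}
    (hc : ∀ j, 0 < (G.adjMatrix ℝ *ᵥ w v) j) (u : V) (a : ↥({v}ᶜ : Set V)) (j : W) :
    0 < G.foldLeafWeight w v u a j :=
  mul_pos (hw a j) (by split_ifs; exacts [hc j, one_pos])

lemma homWeight_eq_of_leaf [Fintype V] {v u : V} (hvu : T.Adj v u)
    (hleaf : ∀ a, T.Adj v a → a = u) (w : V → W → ℝ) :
    homWeight T G w = homWeight (T.induce {v}ᶜ) G (G.foldLeafWeight w v u) := by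
  have := Fintype.ofFinite (T →g G)
  have := Fintype.ofFinite (T.induce {v}ᶜ →g G)
  rw [homWeight_eq_sum, homWeight_eq_sum, ← (leafHomEquiv hvu hleaf).symm.sum_comp,
    Fintype.sum_sigma]
  refine sum_congr rfl fun f _ => ?_
  set u' : ↥({v}ᶜ : Set V) := ⟨u, Set.mem_compl_singleton_iff.mpr hvu.ne'⟩
  have hu : ∏ a : ↥({v}ᶜ : Set V), (if (a : V) = u then (G.adjMatrix ℝ *ᵥ w v) (f a) else 1)
      = (G.adjMatrix ℝ *ᵥ w v) (f u') := by
    rw [Fintype.prod_eq_single u' fun a ha => if_neg fun h => ha (Subtype.ext h)]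
    exact if_pos rfl
  simp only [foldLeafWeight]
  rw [prod_mul_distrib, hu, adjMatrix_mulVec_apply, mul_sum,
    ← sum_coe_sort (G.neighborFinset _)]
  refine Fintype.sum_congr _ _ fun j => ?_
  rw [Fintype.prod_eq_mul_prod_subtype_ne _ v, mul_comm]
  exact congrArg₂ (· * ·) (Fintype.prod_congr _ _ fun a => congrArg (w a) (dif_neg a.2))
    (congrArg (w v) (dif_pos rfl))

lemma sum_sum_mul_log_foldLeafWeight [Fintype V] {v u : V} (huv : u ≠ v) (q : W → ℝ)
    {w : V → W → ℝ} (hw : ∀ a j, 0 < w a j) (hc : ∀ j, 0 < (G.adjMatrix ℝ *ᵥ w v) j) :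
    ∑ a, ∑ j, q j * log (G.foldLeafWeight w v u a j)
      = ∑ a, ∑ j, q j * log (w a j) - ∑ j, q j * log (w v j)
        + ∑ j, q j * log ((G.adjMatrix ℝ *ᵥ w v) j) := by
  have hsplit : ∀ a : ↥({v}ᶜ : Set V), ∑ j, q j * log (G.foldLeafWeight w v u a j)
      = ∑ j, q j * log (w a j)
        + if (a : V) = u then ∑ j, q j * log ((G.adjMatrix ℝ *ᵥ w v) j) else 0 := by
    intro a
    by_cases h : (a : V) = u
    · simp only [foldLeafWeight, if_pos h, log_mul (hw _ _).ne' (hc _).ne', mul_add,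
        sum_add_distrib]
    · simp only [foldLeafWeight, if_neg h, mul_one, add_zero]
  have hu : ∑ a : ↥({v}ᶜ : Set V),
      (if (a : V) = u then ∑ j, q j * log ((G.adjMatrix ℝ *ᵥ w v) j) else 0)
      = ∑ j, q j * log ((G.adjMatrix ℝ *ᵥ w v) j) := by
    rw [Fintype.sum_eq_single ⟨u, Set.mem_compl_singleton_iff.mpr huv⟩
      fun a ha => if_neg fun h => ha (Subtype.ext h)]
    exact if_pos rfl
  rw [sum_congr rfl fun a _ => hsplit a, sum_add_distrib, hu, ← add_sum_erase univ _ (mem_univ v),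
    sum_subtype (univ.erase v) (p := (· ∈ ({v}ᶜ : Set V))) (by simp)]
  ring

end HomWeight

variable {W : Type*} [Fintype W] {G : SimpleGraph W} [DecidableRel G.Adj] {lam : ℝ} {y : W → ℝ}

omit [Fintype W] in
lemma adjMatrix_nonneg (i j : W) : 0 ≤ G.adjMatrix ℝ i j := by
  rw [adjMatrix_apply]; split_ifs <;> norm_num

theorem IsTree.exp_entropy_mul_pow_le_homWeight {V : Type*} [Fintype V] {T : SimpleGraph V}
    (hT : T.IsTree) (hy : ∀ i, 0 < y i) (hunit : ∑ i, y i ^ 2 = 1)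
    (heig : G.adjMatrix ℝ *ᵥ y = lam • y) {w : V → W → ℝ} (hw : ∀ a j, 0 < w a j) :
    exp (∑ i, y i ^ 2 * log (1 / y i ^ 2) + ∑ a, ∑ j, y j ^ 2 * log (w a j))
      * lam ^ (Fintype.card V - 1) ≤ homWeight T G w := by
  classical
  have : Nonempty W := univ_nonempty_iff.mp (nonempty_of_sum_ne_zero (hunit ▸ one_ne_zero))
  have hlam : 0 ≤ lam := eigenvalue_nonneg_of_pos_eigenvector adjMatrix_nonneg hy heig
  refine Fintype.induction_subsingleton_or_nontrivial (P := fun V _ => ∀ T : SimpleGraph V,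
      T.IsTree → ∀ w : V → W → ℝ, (∀ a j, 0 < w a j) →
        exp (∑ i, y i ^ 2 * log (1 / y i ^ 2) + ∑ a, ∑ j, y j ^ 2 * log (w a j))
          * lam ^ (Fintype.card V - 1) ≤ homWeight T G w)
    V (fun V _ _ T hT w hw => ?_) (fun V _ _ IH T hT w hw => ?_) T hT w hw
  · obtain ⟨r⟩ := hT.connected.nonempty
    rw [Fintype.card_eq_one_iff_nonempty_unique.mpr ⟨_root_.uniqueOfSubsingleton r⟩, pow_zero,
      mul_one, Fintype.sum_subsingleton _ r, homWeight_of_subsingleton r]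
    exact exp_entropy_add_sum_mul_log_le_sum (fun i => pow_pos (hy i) 2) hunit (hw r)
  obtain ⟨v, hdeg⟩ := hT.exists_vert_degree_one_of_nontrivial
  obtain ⟨u, hvu, hleaf⟩ := degree_eq_one_iff_existsUnique_adj.mp hdeg
  have hT' : (T.induce {v}ᶜ).IsTree :=
    ⟨hT.connected.induce_compl_singleton_of_degree_eq_one hdeg, hT.isAcyclic.induce _⟩
  have hcard : Fintype.card ↥({v}ᶜ : Set V) = Fintype.card V - 1 := by simp [filter_ne']
  have hm : 1 < Fintype.card V := Fintype.one_lt_card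
  rcases hlam.eq_or_lt with rfl | hlam
  · rw [zero_pow (by omega), mul_zero]
    exact homWeight_nonneg fun a j => (hw a j).le
  have hc := mulVec_pos_of_eigenvector adjMatrix_nonneg hlam hy heig (hw v)
  have hedge := log_add_sum_mul_log_le_sum_mul_log_mulVec (isSymm_adjMatrix G) adjMatrix_nonneg
    hlam hy hunit heig (hw v)
  have hIH := IH _ (by omega) _ hT' _ (foldLeafWeight_pos hw hc u)
  rw [sum_sum_mul_log_foldLeafWeight hvu.ne' _ hw hc, hcard] at hIH
  rw [homWeight_eq_of_leaf hvu hleaf, ← Nat.sub_add_cancel (show 1 ≤ Fintype.card V - 1 by omega),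
    pow_succ, mul_comm (lam ^ _), ← mul_assoc]
  refine le_trans ?_ hIH
  gcongr
  rw [← exp_log hlam, ← exp_add]
  exact exp_le_exp.mpr (by linarith)

end SimpleGraph

theorem stmt_8_general {V W : Type*} [Fintype W]
    (G : SimpleGraph W) [DecidableRel G.Adj]
    (lam : ℝ) (y : W → ℝ) (hy : ∀ i, 0 < y i) (hunit : ∑ i, (y i) ^ 2 = 1)
    (heig : (G.adjMatrix ℝ).mulVec y = lam • y)
    (T : SimpleGraph V) [Fintype V] (hT : T.IsTree) :
    (homCount T G : ℝ) ≥
      Real.exp (∑ i, (y i) ^ 2 * Real.log (1 / (y i) ^ 2)) * lam ^ (Fintype.card V - 1) := by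
  have h := hT.exp_entropy_mul_pow_le_homWeight hy hunit heig (w := fun _ _ => 1) fun _ _ => one_pos
  rw [SimpleGraph.homWeight_one] at h
  simpa using h

/-- Entropy lower bound via the spectral entropy: if `λ` is the largest eigenvalue of the
adjacency matrix of the connected graph `G`, with positive unit eigenvector `y`, and
`q i = (y i)²`, then `hom(T_m, G) ≥ exp(H_λ(G)) · λ^(m-1)` for every tree `T_m`. -/
theorem stmt_8 {V W : Type*} [Fintype V] [Fintype W]
    (G : SimpleGraph W) [DecidableRel G.Adj] (hG : G.Connected)
    (lam : ℝ) (y : W → ℝ) (hy : ∀ i, 0 < y i) (hunit : ∑ i, (y i) ^ 2 = 1)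
    (heig : (G.adjMatrix ℝ).mulVec y = lam • y)
    (hmax : ∀ (ν : ℝ) (z : W → ℝ), z ≠ 0 → (G.adjMatrix ℝ).mulVec z = ν • z → ν ≤ lam)
    (T : SimpleGraph V) [Fintype V] (hT : T.IsTree) :
    (homCount T G : ℝ) ≥
      Real.exp (∑ i, (y i) ^ 2 * Real.log (1 / (y i) ^ 2)) * lam ^ (Fintype.card V - 1) :=
  stmt_8_general G lam y hy hunit heig T hT
end

section
/- Let $T$ be a tree on $n \geq 2$ vertices whose bipartition classes are $A$ and $B$, and suppose every leaf of $T$ belongs to $A$. Then $|A| \geq |B|$. -/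
/-!
Every vertex of `B` has degree at least two: it is not isolated because the tree is connected and
nontrivial, and it is not a leaf because all leaves lie in `A`. Since every edge has exactly one
end in `B`, summing degrees over `B` counts each edge once, so `2|B| ≤ |E| = |A| + |B| - 1`,
whence `|B| < |A|`.
-/

open Finset

namespace SimpleGraph

variable {V : Type*} [Fintype V] {G : SimpleGraph V} [DecidableRel G.Adj]

theorem IsBipartiteWith.two_mul_card_le_card_edgeFinset {s t : Finset V}
    (h : G.IsBipartiteWith s t) (hdeg : ∀ v ∈ t, 2 ≤ G.degree v) :
    2 * #t ≤ #G.edgeFinset :=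
  calc 2 * #t = ∑ _v ∈ t, 2 := by rw [sum_const, smul_eq_mul, mul_comm]
    _ ≤ ∑ v ∈ t, G.degree v := sum_le_sum hdeg
    _ = #G.edgeFinset := isBipartiteWith_sum_degrees_eq_card_edges' h

theorem IsTree.two_le_degree_of_ne_one [Nontrivial V] (hG : G.IsTree) {v : V}
    (hv : G.degree v ≠ 1) : 2 ≤ G.degree v := by
  have := hG.connected.preconnected.degree_pos_of_nontrivial v
  omega

theorem IsTree.card_lt_card_of_isBipartiteWith [DecidableEq V] [Nontrivial V] (hG : G.IsTree)
    {s t : Finset V} (h : G.IsBipartiteWith s t) (hcover : s ∪ t = univ)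
    (hleaf : ∀ v, G.degree v = 1 → v ∈ s) :
    #t < #s := by
  have hdeg : ∀ v ∈ t, 2 ≤ G.degree v := fun v hv =>
    hG.two_le_degree_of_ne_one fun h1 => Set.disjoint_left.mp h.disjoint (hleaf v h1) hv
  have hedges := h.two_mul_card_le_card_edgeFinset hdeg
  have hcard : #s + #t = Fintype.card V := by
    rw [← card_union_of_disjoint (disjoint_coe.mp h.disjoint), hcover, card_univ]
  have := hG.card_edgeFinset
  omega

end SimpleGraph

theorem stmt_11 {V : Type*} [Fintype V] [DecidableEq V]
    (T : SimpleGraph V) [DecidableRel T.Adj] (hT : T.IsTree)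
    (hcard : 2 ≤ Fintype.card V) (A B : Finset V)
    (hdisj : Disjoint A B) (hcover : A ∪ B = Finset.univ)
    (hcolor : ∀ u v, T.Adj u v → (u ∈ A ∧ v ∈ B) ∨ (u ∈ B ∧ v ∈ A))
    (hleaf : ∀ v, T.degree v = 1 → v ∈ A) :
    B.card ≤ A.card := by
  have : Nontrivial V := Fintype.one_lt_card_iff_nontrivial.mp hcard
  have hbip : T.IsBipartiteWith A B := ⟨Finset.disjoint_coe.mpr hdisj, hcolor⟩
  exact (hT.card_lt_card_of_isBipartiteWith hbip hcover hleaf).le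
end

section
/- Let $T$ be a tree whose diameter satisfies $\mathrm{diam}(T) \leq n-1$. Then $2\hom(T, P_n) = \hom(T, P_{n-1}) + \hom(T, P_{n+1})$. -/
open SimpleGraph

private def Sc {V : Type*} (T : SimpleGraph V) (k : ℕ) : Type _ :=
  {f : V → ℕ // (∀ v, f v < k) ∧ ∀ ⦃u v⦄, T.Adj u v → (f u + 1 = f v ∨ f v + 1 = f u)}

private def homEquivSc {V : Type*} (T : SimpleGraph V) (k : ℕ) :
    (T →g pathGraph k) ≃ Sc T k where
  toFun f := ⟨fun v => (f v).val, fun v => (f v).isLt, fun u v h => by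
    have := f.map_adj h
    rwa [pathGraph_adj] at this⟩
  invFun f := ⟨fun v => ⟨f.1 v, f.2.1 v⟩, fun {u v} h => by
    rw [pathGraph_adj]; exact f.2.2 h⟩
  left_inv f := rfl
  right_inv f := rfl

private lemma walk_bound {V : Type*} {T : SimpleGraph V} {f : V → ℕ}
    (hf : ∀ ⦃u v⦄, T.Adj u v → (f u + 1 = f v ∨ f v + 1 = f u)) :
    ∀ {u w : V} (p : T.Walk u w), f u ≤ f w + p.length := by
  intro u w p
  induction p with
  | nil => simp
  | cons h q ih =>
    have := hf h
    simp only [SimpleGraph.Walk.length_cons]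
    omega

open Classical in
private noncomputable def phi {V : Type*} (T : SimpleGraph V) (n : ℕ) (hn : 1 ≤ n)
    (hlow : ∀ f : Sc T (n+1), (∃ v, f.1 v = n) → ∀ v, 1 ≤ f.1 v) :
    Sc T (n-1) ⊕ Sc T (n+1) → Sc T n ⊕ Sc T n
  | .inl f => .inl ⟨f.1, fun v => by have := f.2.1 v; omega, f.2.2⟩
  | .inr f =>
    if h : ∃ v, f.1 v = n then
      .inl ⟨fun v => f.1 v - 1,
        fun v => by have h1 := f.2.1 v; have h2 := hlow f h v; show f.1 v - 1 < n; omega,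
        fun u v hadj => by
          have h0 := f.2.2 hadj
          have h1 := hlow f h u
          have h2 := hlow f h v
          show f.1 u - 1 + 1 = f.1 v - 1 ∨ f.1 v - 1 + 1 = f.1 u - 1
          omega⟩
    else
      .inr ⟨f.1, fun v => by
        have h1 := f.2.1 v
        have h2 : f.1 v ≠ n := fun hv => h ⟨v, hv⟩
        omega, f.2.2⟩

open Classical in
private noncomputable def psi {V : Type*} (T : SimpleGraph V) (n : ℕ) (hn : 1 ≤ n) :
    Sc T n ⊕ Sc T n → Sc T (n-1) ⊕ Sc T (n+1)
  | .inl g =>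
    if h : ∃ v, g.1 v = n - 1 then
      .inr ⟨fun v => g.1 v + 1,
        fun v => by have := g.2.1 v; show g.1 v + 1 < n + 1; omega,
        fun u v hadj => by
          have := g.2.2 hadj
          show g.1 u + 1 + 1 = g.1 v + 1 ∨ g.1 v + 1 + 1 = g.1 u + 1
          omega⟩
    else
      .inl ⟨g.1, fun v => by
        have h1 := g.2.1 v
        have h2 : g.1 v ≠ n - 1 := fun hv => h ⟨v, hv⟩
        omega, g.2.2⟩
  | .inr g => .inr ⟨g.1, fun v => by have := g.2.1 v; omega, g.2.2⟩

private lemma psi_phi {V : Type*} (T : SimpleGraph V) (n : ℕ) (hn : 1 ≤ n)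
    (hlow : ∀ f : Sc T (n+1), (∃ v, f.1 v = n) → ∀ v, 1 ≤ f.1 v) :
    Function.LeftInverse (psi T n hn) (phi T n hn hlow) := by
  rintro (f | f)
  · simp only [phi, psi]
    split_ifs with h
    · exfalso
      obtain ⟨v, hv⟩ := h
      have h1 := f.2.1 v
      have h2 : f.1 v = n - 1 := hv
      omega
    · exact congrArg Sum.inl (Subtype.ext rfl)
  · simp only [phi]
    split_ifs with h
    · simp only [psi]
      split_ifs with h2
      · refine congrArg Sum.inr (Subtype.ext (funext fun v => ?_))
        have := hlow f h v
        show f.1 v - 1 + 1 = f.1 v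
        omega
      · exfalso
        obtain ⟨v, hv⟩ := h
        exact h2 ⟨v, show f.1 v - 1 = n - 1 by omega⟩
    · simp only [psi]
      exact congrArg Sum.inr (Subtype.ext rfl)

private lemma phi_psi {V : Type*} (T : SimpleGraph V) (n : ℕ) (hn : 1 ≤ n)
    (hlow : ∀ f : Sc T (n+1), (∃ v, f.1 v = n) → ∀ v, 1 ≤ f.1 v) :
    Function.RightInverse (psi T n hn) (phi T n hn hlow) := by
  rintro (g | g)
  · simp only [psi]
    split_ifs with h
    · simp only [phi]
      split_ifs with h2
      · refine congrArg Sum.inl (Subtype.ext (funext fun v => ?_))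
        show g.1 v + 1 - 1 = g.1 v
        omega
      · exfalso
        obtain ⟨v, hv⟩ := h
        exact h2 ⟨v, show g.1 v + 1 = n by omega⟩
    · simp only [phi]
      exact congrArg Sum.inl (Subtype.ext rfl)
  · simp only [psi, phi]
    split_ifs with h
    · exfalso
      obtain ⟨v, hv⟩ := h
      have h1 := g.2.1 v
      have h2 : g.1 v = n := hv
      omega
    · exact congrArg Sum.inr (Subtype.ext rfl)

theorem stmt_12 {V : Type*} [Fintype V] (T : SimpleGraph V) (hT : T.IsTree)
    (n : ℕ) (hn : 1 ≤ n) (hdiam : ∀ u v : V, T.dist u v ≤ n - 1) :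
    2 * homCount T (pathGraph n) =
      homCount T (pathGraph (n - 1)) + homCount T (pathGraph (n + 1)) := by
  classical
  have hconn : T.Connected := hT.isConnected
  have key : ∀ (f : V → ℕ), (∀ ⦃u v⦄, T.Adj u v → (f u + 1 = f v ∨ f v + 1 = f u)) →
      ∀ u w : V, f u ≤ f w + (n - 1) := by
    intro f hf u w
    obtain ⟨p, hp⟩ := hconn.exists_walk_length_eq_dist u w
    have := walk_bound hf p
    have := hdiam u w
    omega
  have hlow : ∀ (f : Sc T (n+1)), (∃ v, f.1 v = n) → ∀ v, 1 ≤ f.1 v := by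
    rintro f ⟨v₀, hv₀⟩ v
    have := key f.1 f.2.2 v₀ v
    omega
  have e : Sc T (n-1) ⊕ Sc T (n+1) ≃ Sc T n ⊕ Sc T n :=
    ⟨phi T n hn hlow, psi T n hn, psi_phi T n hn hlow, phi_psi T n hn hlow⟩
  have hfin : ∀ k : ℕ, Finite (T →g pathGraph k) := fun k =>
    Finite.of_injective (fun f => (f : V → Fin k)) DFunLike.coe_injective
  have hfinS : ∀ k : ℕ, Finite (Sc T k) := fun k =>
    @Finite.of_equiv _ _ (hfin k) (homEquivSc T k)
  have hcard : ∀ k : ℕ, homCount T (pathGraph k) = Nat.card (Sc T k) := fun k =>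
    Nat.card_congr (homEquivSc T k)
  rw [hcard, hcard, hcard]
  haveI := hfinS (n-1); haveI := hfinS (n+1); haveI := hfinS n
  calc 2 * Nat.card (Sc T n) = Nat.card (Sc T n ⊕ Sc T n) := by
        rw [Nat.card_sum]; ring
    _ = Nat.card (Sc T (n-1) ⊕ Sc T (n+1)) := (Nat.card_congr e).symm
    _ = _ := Nat.card_sum
end

section
/- Call a vector $\mathbf{a}=(a_1,\dots,a_n)$ of positive integers symmetric if $a_i = a_{n-i+1}$ for all $i$, and unimodal if it increases then decreases. For symmetric vectors define the dominance order $\mathbf{a} \preceq \mathbf{b}$ iff $\sum_{i=k}^{n+1-k} a_i \leq \sum_{i=k}^{n+1-k} b_i$ for all $1 \leq k \leq \lceil n/2 \rceil$. If $\mathbf{c}$ is symmetric and unimodal and $\mathbf{a} \preceq \mathbf{b}$ are symmetric, then $\mathbf{a} * \mathbf{c} \preceq \mathbf{b} * \mathbf{c}$, where $*$ denotes entrywise (Hadamard) product. -/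
/-- The sum `∑_{i=k}^{n+1-k} a_i` (with `1`-based indexing), i.e. the sum of the entries
of `a` whose `0`-based index `i` satisfies `k ≤ i` and `i + k ≤ n - 1`, for `0`-based `k`. -/
def domSum {n : ℕ} (a : Fin n → ℝ) (k : ℕ) : ℝ :=
  ∑ i ∈ Finset.univ.filter (fun i : Fin n => k ≤ i.val ∧ i.val + k ≤ n - 1), a i

/-- `a` is symmetric: `a i = a (n + 1 - i)` with `1`-based indexing. -/
def VecSymm {n : ℕ} (a : Fin n → ℝ) : Prop := ∀ i : Fin n, a i = a i.rev

/-- `a` is unimodal: increasing then decreasing. -/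
def VecUnimodal {n : ℕ} (a : Fin n → ℝ) : Prop :=
  ∃ j : Fin n, (∀ i i' : Fin n, i ≤ i' → i' ≤ j → a i ≤ a i') ∧
    (∀ i i' : Fin n, j ≤ i → i ≤ i' → a i' ≤ a i)

lemma domSum_empty {n : ℕ} (f : Fin n → ℝ) {k : ℕ} (h : ¬ (2 * k + 1 ≤ n)) :
    domSum f k = 0 := by
  unfold domSum
  rw [Finset.filter_false_of_mem, Finset.sum_empty]
  intro i _
  have := i.isLt
  omega

/-- A symmetric unimodal vector is nondecreasing on the lower half. -/
lemma symm_uni_mono {n : ℕ} (c : Fin n → ℝ) (hs : VecSymm c) (hu : VecUnimodal c)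
    (i i' : Fin n) (h1 : i.val ≤ i'.val) (h2 : 2 * i'.val < n) : c i ≤ c i' := by
  obtain ⟨j, hinc, hdec⟩ := hu
  by_cases hij : i'.val ≤ j.val
  · exact hinc i i' (Fin.le_def.mpr h1) (Fin.le_def.mpr hij)
  · push_neg at hij
    have hrev : c i.rev ≤ c i'.rev := by
      apply hdec i'.rev i.rev
      · rw [Fin.le_def, Fin.val_rev]; omega
      · rw [Fin.le_def, Fin.val_rev, Fin.val_rev]; omega
    rw [hs i, hs i']
    exact hrev

lemma domSum_shift {n : ℕ} (f : Fin n → ℝ) (hsym : VecSymm f) {k : ℕ} (hk : 2 * k + 1 ≤ n)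
    (h0 : f ⟨k, by omega⟩ = 0) : domSum f k = domSum f (k + 1) := by
  unfold domSum
  symm
  apply Finset.sum_subset
  · intro i hi
    simp only [Finset.mem_filter, Finset.mem_univ, true_and] at hi ⊢
    omega
  · intro i hi hni
    simp only [Finset.mem_filter, Finset.mem_univ, true_and] at hi hni
    have := i.isLt
    have hcase : i.val = k ∨ i.val = n - 1 - k := by omega
    rcases hcase with hc | hc
    · have : i = ⟨k, by omega⟩ := Fin.ext hc
      rw [this, h0]
    · rw [hsym i]
      have : i.rev = ⟨k, by omega⟩ := by
        apply Fin.ext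
        simp only [Fin.val_rev, Fin.val_mk]; omega
      rw [this, h0]

theorem stmt_13 {n : ℕ} (a b c : Fin n → ℝ)
    (ha0 : ∀ i, 0 ≤ a i) (hb0 : ∀ i, 0 ≤ b i) (hc0 : ∀ i, 0 ≤ c i)
    (hasym : VecSymm a) (hbsym : VecSymm b) (hcsym : VecSymm c) (hcuni : VecUnimodal c)
    (hab : ∀ k : ℕ, domSum a k ≤ domSum b k) :
    ∀ k : ℕ, domSum (fun i => a i * c i) k ≤ domSum (fun i => b i * c i) k := by
  suffices h : ∀ d k (c : Fin n → ℝ), (∀ i, 0 ≤ c i) → VecSymm c → VecUnimodal c →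
      n ≤ k + d → domSum (fun i => a i * c i) k ≤ domSum (fun i => b i * c i) k by
    intro k
    exact h n k c hc0 hcsym hcuni (by omega)
  intro d
  induction d with
  | zero =>
    intro k c _ _ _ hkd
    rw [domSum_empty _ (by omega), domSum_empty _ (by omega)]
  | succ d ih =>
    intro k c hc0 hcsym hcuni hkd
    by_cases hk : 2 * k + 1 ≤ n
    · have hkn : k < n := by omega
      set t : ℝ := c ⟨k, hkn⟩ with ht
      set c'' : Fin n → ℝ := fun i => max (c i - t) 0 with hc''
      -- c i ≥ t on the window
      have hct : ∀ i : Fin n, k ≤ i.val → i.val + k ≤ n - 1 → t ≤ c i := by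
        intro i hi1 hi2
        have hin := i.isLt
        by_cases h2 : 2 * i.val < n
        · exact symm_uni_mono c hcsym hcuni ⟨k, hkn⟩ i hi1 h2
        · rw [hcsym i]
          apply symm_uni_mono c hcsym hcuni ⟨k, hkn⟩ i.rev
          · simp only [Fin.val_rev, Fin.val_mk]; omega
          · simp only [Fin.val_rev, Fin.val_mk]; omega
      -- key decomposition
      have key : ∀ f : Fin n → ℝ,
          domSum (fun i => f i * c i) k = t * domSum f k + domSum (fun i => f i * c'' i) k := by
        intro f
        unfold domSum
        rw [Finset.mul_sum, ← Finset.sum_add_distrib]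
        apply Finset.sum_congr rfl
        intro i hi
        simp only [Finset.mem_filter, Finset.mem_univ, true_and] at hi
        have hle := hct i hi.1 hi.2
        have : c'' i = c i - t := by
          rw [hc'']; exact max_eq_left (by linarith)
        rw [this]; ring
      have hc''0 : ∀ i, 0 ≤ c'' i := fun i => le_max_right _ _
      have hc''sym : VecSymm c'' := by
        intro i
        simp only [hc'']
        rw [← hcsym i]
      have hc''uni : VecUnimodal c'' := by
        obtain ⟨j, hinc, hdec⟩ := hcuni
        refine ⟨j, fun i i' h1 h2 => ?_, fun i i' h1 h2 => ?_⟩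
        · exact max_le_max (by linarith [hinc i i' h1 h2]) le_rfl
        · exact max_le_max (by linarith [hdec i i' h1 h2]) le_rfl
      have hc''k : c'' ⟨k, hkn⟩ = 0 := by
        simp only [hc'', ← ht, sub_self, max_self]
      have hshift : ∀ f : Fin n → ℝ, VecSymm f →
          domSum (fun i => f i * c'' i) k = domSum (fun i => f i * c'' i) (k + 1) := by
        intro f hfsym
        apply domSum_shift _ ?_ hk
        · show f ⟨k, hkn⟩ * c'' ⟨k, hkn⟩ = 0
          rw [hc''k, mul_zero]
        · intro i
          show f i * c'' i = f i.rev * c'' i.rev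
          rw [← hfsym i, ← hc''sym i]
      calc domSum (fun i => a i * c i) k
          = t * domSum a k + domSum (fun i => a i * c'' i) (k + 1) := by
            rw [key a, hshift a hasym]
        _ ≤ t * domSum b k + domSum (fun i => b i * c'' i) (k + 1) := by
            apply add_le_add
            · exact mul_le_mul_of_nonneg_left (hab k) (hc0 ⟨k, hkn⟩)
            · exact ih (k + 1) c'' hc''0 hc''sym hc''uni (by omega)
        _ = domSum (fun i => b i * c i) k := by
            rw [key b, hshift b hbsym]
    · rw [domSum_empty _ hk, domSum_empty _ hk]
end

section
/- Let $A$ be the adjacency matrix of the path $P_n$ and $l$ a positive integer. If $\mathbf{a}$ is a symmetric unimodal nonnegative vector of dimension $n$, then $\mathbf{a} A^l \preceq \mathbf{a} * (\mathbf{1} A^l)$ in the dominance order on symmetric vectors, where $*$ is the Hadamard product and $\mathbf{1}$ is the all-ones row vector. -/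
/-- The adjacency matrix of the path `P_n` on vertices `1, …, n`. -/
def pathAdjMatrix (n : ℕ) : Matrix (Fin n) (Fin n) ℝ :=
  Matrix.of fun i j => if i.val + 1 = j.val ∨ j.val + 1 = i.val then 1 else 0

lemma pathAdj_symm (n : ℕ) : (pathAdjMatrix n).IsSymm := by
  ext i j
  simp only [pathAdjMatrix, Matrix.transpose_apply, Matrix.of_apply, or_comm]

lemma pathAdj_pow_nonneg (n l : ℕ) (i j : Fin n) : 0 ≤ (pathAdjMatrix n ^ l) i j := by
  induction l generalizing i j with
  | zero => simp only [pow_zero, Matrix.one_apply]; split <;> norm_num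
  | succ l ih =>
    rw [pow_succ, Matrix.mul_apply]
    refine Finset.sum_nonneg fun t _ => mul_nonneg (ih i t) ?_
    simp only [pathAdjMatrix, Matrix.of_apply]; split <;> norm_num

lemma mono_key {n : ℕ} {a : Fin n → ℝ} (hs : VecSymm a) (hu : VecUnimodal a)
    (i i' : Fin n) (hle : i.val ≤ i'.val) (hsum : i.val + i'.val ≤ n - 1) :
    a i ≤ a i' := by
  obtain ⟨j, hinc, hdec⟩ := hu
  have hi := i.isLt; have hi' := i'.isLt; have hj := j.isLt
  by_cases h1 : i'.val ≤ j.val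
  · exact hinc i i' (Fin.le_def.mpr hle) (Fin.le_def.mpr h1)
  · by_cases h2 : i'.rev.val ≤ j.val
    · have h := hinc i i'.rev (by rw [Fin.le_def, Fin.val_rev]; omega) (Fin.le_def.mpr h2)
      rwa [← hs i'] at h
    · rw [Fin.val_rev] at h2
      have h3 := hdec i'.rev i.rev
        (by rw [Fin.le_def, Fin.val_rev]; omega)
        (by rw [Fin.le_def, Fin.val_rev, Fin.val_rev]; omega)
      rwa [← hs i, ← hs i'] at h3

theorem stmt_14 {n : ℕ} (l : ℕ) (hl : 1 ≤ l) (a : Fin n → ℝ)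
    (ha0 : ∀ i, 0 ≤ a i) (hasym : VecSymm a) (hauni : VecUnimodal a) :
    ∀ k : ℕ, domSum (Matrix.vecMul a (pathAdjMatrix n ^ l)) k ≤
      domSum (fun i => a i * Matrix.vecMul (fun _ => (1 : ℝ)) (pathAdjMatrix n ^ l) i) k := by
  intro k
  classical
  set M := pathAdjMatrix n ^ l with hMdef
  have hMnn : ∀ i j, 0 ≤ M i j := pathAdj_pow_nonneg n l
  have hMs : ∀ i j, M j i = M i j := fun i j => ((pathAdj_symm n).pow l).apply i j
  set S := Finset.univ.filter (fun i : Fin n => k ≤ i.val ∧ i.val + k ≤ n - 1) with hS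
  have hkey : ∀ i ∈ S, ∀ j : Fin n, j ∉ S → a j ≤ a i := by
    intro i hi j hj
    simp only [hS, Finset.mem_filter, Finset.mem_univ, true_and, not_and, not_le] at hi hj
    have hi2 := i.isLt; have hj2 := j.isLt
    rcases Nat.lt_or_ge j.val k with h | h
    · exact mono_key hasym hauni j i (by omega) (by omega)
    · have hj' : n - 1 < j.val + k := hj h
      rw [hasym j]
      exact mono_key hasym hauni j.rev i (by rw [Fin.val_rev]; omega)
        (by rw [Fin.val_rev]; omega)
  have expand1 : domSum (Matrix.vecMul a M) k = ∑ i ∈ S, ∑ j, a j * M j i := by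
    refine Finset.sum_congr rfl fun i _ => ?_
    simp [Matrix.vecMul, dotProduct]
  have expand2 : domSum (fun i => a i * Matrix.vecMul (fun _ => (1 : ℝ)) M i) k
      = ∑ i ∈ S, ∑ j, a i * M j i := by
    refine Finset.sum_congr rfl fun i _ => ?_
    simp [Matrix.vecMul, dotProduct, Finset.mul_sum]
  rw [expand1, expand2, ← sub_nonneg, ← Finset.sum_sub_distrib]
  have step : ∀ i : Fin n, (∑ j, a i * M j i) - (∑ j, a j * M j i)
      = ∑ j, (a i - a j) * M j i := by
    intro i; rw [← Finset.sum_sub_distrib]; exact Finset.sum_congr rfl fun j _ => by ring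
  simp only [step]
  have split : ∀ i : Fin n, (∑ j, (a i - a j) * M j i)
      = (∑ j ∈ S, (a i - a j) * M j i) + ∑ j ∈ Sᶜ, (a i - a j) * M j i :=
    fun i => (Finset.sum_add_sum_compl S _).symm
  simp only [split, Finset.sum_add_distrib]
  have hA : ∑ i ∈ S, ∑ j ∈ S, (a i - a j) * M j i = 0 := by
    have h1 : ∑ i ∈ S, ∑ j ∈ S, (a i - a j) * M j i
        = ∑ j ∈ S, ∑ i ∈ S, (a i - a j) * M j i := Finset.sum_comm
    have h2 : ∑ j ∈ S, ∑ i ∈ S, (a i - a j) * M j i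
        = -∑ j ∈ S, ∑ i ∈ S, (a j - a i) * M i j := by
      rw [← Finset.sum_neg_distrib]
      refine Finset.sum_congr rfl fun j _ => ?_
      rw [← Finset.sum_neg_distrib]
      refine Finset.sum_congr rfl fun i _ => ?_
      rw [hMs]; ring
    rw [h2] at h1
    linarith [h1]
  have hB : 0 ≤ ∑ i ∈ S, ∑ j ∈ Sᶜ, (a i - a j) * M j i := by
    refine Finset.sum_nonneg fun i hi => Finset.sum_nonneg fun j hj => ?_
    exact mul_nonneg (sub_nonneg.mpr (hkey i hi j (Finset.mem_compl.mp hj))) (hMnn j i)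
  linarith [hA, hB]
end

section
/- Let $m \geq 2$, let $n$ be odd, and let the vertices of $P_n$ be labeled $1,\dots,n$. Let $v$ be a vertex in the smaller color class of $P_m$ with $m$ odd. Then the number of homomorphisms $f: P_m \to P_n$ with $f(v)$ of even index is at least the number of homomorphisms with $f(v)$ of odd index. -/
open SimpleGraph


namespace Stmt15

/-- The odd square wave of period `2(n+1)`: `1` on `[0,n-1]`, `0` at `n`, `-1` on `[n+1,2n]`,
`0` at `2n+1`. -/
def G (n : ℕ) (j : ℤ) : ℤ :=
  if j % (2 * (n + 1)) < n then 1
  else if j % (2 * (n + 1)) = n then 0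
  else if j % (2 * (n + 1)) < 2 * n + 1 then -1
  else 0

lemma emod_bounds (n : ℕ) (j : ℤ) :
    0 ≤ j % (2 * (n + 1)) ∧ j % (2 * (n + 1)) < 2 * (n + 1) := by
  constructor
  · exact Int.emod_nonneg _ (by positivity)
  · exact Int.emod_lt_of_pos _ (by positivity)

lemma G_antiperiod (n : ℕ) (j : ℤ) : G n (j + (n + 1)) = -G n j := by
  set D : ℤ := 2 * (n + 1) with hD
  obtain ⟨h0, h1⟩ := emod_bounds n j
  set r : ℤ := j % D with hr
  set q : ℤ := j / D with hq
  have hj : D * q + r = j := Int.mul_ediv_add_emod j D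
  have key : (j + (n + 1)) % D = if r < (n:ℤ) + 1 then r + (n + 1) else r - (n + 1) := by
    have h2 : j + (n + 1) = (r + (n + 1)) + D * q := by rw [← hj]; ring
    rw [h2, Int.add_mul_emod_self_left]
    split_ifs with h3
    · exact Int.emod_eq_of_lt (by omega) (by omega)
    · have h4 : r + ((n : ℤ) + 1) = (r - (n + 1)) + D * 1 := by rw [hD]; ring
      rw [h4, Int.add_mul_emod_self_left]
      exact Int.emod_eq_of_lt (by omega) (by omega)
  unfold G
  rw [← hD, key, ← hr]
  split_ifs <;> omega

lemma G_odd (n : ℕ) (j : ℤ) : G n (-2 - j) = -G n j := by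
  set D : ℤ := 2 * (n + 1) with hD
  obtain ⟨h0, h1⟩ := emod_bounds n j
  set r : ℤ := j % D with hr
  set q : ℤ := j / D with hq
  have hj : D * q + r = j := Int.mul_ediv_add_emod j D
  have key : (-2 - j) % D = if r ≤ D - 2 then D - 2 - r else D - 1 := by
    have h2 : -2 - j = (-2 - r) + D * (-q) := by rw [← hj]; ring
    rw [h2, Int.add_mul_emod_self_left]
    split_ifs with h3
    · have h4 : -2 - r = (D - 2 - r) + D * (-1) := by ring
      rw [h4, Int.add_mul_emod_self_left]
      exact Int.emod_eq_of_lt (by omega) (by omega)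
    · have h5 : r = D - 1 := by omega
      have h4 : -2 - r = (D - 1) + D * (-2) := by rw [h5]; ring
      rw [h4, Int.add_mul_emod_self_left]
      exact Int.emod_eq_of_lt (by omega) (by omega)
  unfold G
  rw [← hD, key, ← hr]
  split_ifs <;> omega

/-- `G` evaluated on `[0, 2n]` directly. -/
lemma G_eval (n : ℕ) (x : ℤ) (hx0 : 0 ≤ x) (hx1 : x ≤ 2 * n) :
    G n x = if x < n then 1 else if x = n then 0 else -1 := by
  unfold G
  have : x % (2 * ((n : ℤ) + 1)) = x := Int.emod_eq_of_lt hx0 (by omega)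
  rw [this]
  split_ifs <;> omega

end Stmt15

namespace Stmt15

/-- Walk-count wave: `X n k j` equals the number of walks of length `k` in `P_n` starting
at `j` (for `0 ≤ j ≤ n-1`), extended to all of `ℤ` wave-style. -/
def X (n : ℕ) : ℕ → ℤ → ℤ
  | 0, j => G n j
  | (k+1), j => X n k (j - 1) + X n k (j + 1)

lemma X_antiperiod (n : ℕ) : ∀ k (j : ℤ), X n k (j + (n + 1)) = -X n k j := by
  intro k
  induction k with
  | zero => exact fun j => G_antiperiod n j
  | succ k ih =>
    intro j
    show X n k (j + (n+1) - 1) + X n k (j + (n+1) + 1) = -(X n k (j-1) + X n k (j+1))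
    rw [show j + ((n:ℤ)+1) - 1 = (j - 1) + (n+1) by ring,
        show j + ((n:ℤ)+1) + 1 = (j + 1) + (n+1) by ring, ih, ih]
    ring

lemma X_odd (n : ℕ) : ∀ k (j : ℤ), X n k (-2 - j) = -X n k j := by
  intro k
  induction k with
  | zero => exact fun j => G_odd n j
  | succ k ih =>
    intro j
    show X n k (-2 - j - 1) + X n k (-2 - j + 1) = -(X n k (j-1) + X n k (j+1))
    rw [show (-2 : ℤ) - j - 1 = -2 - (j + 1) by ring,
        show (-2 : ℤ) - j + 1 = -2 - (j - 1) by ring, ih, ih]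
    ring

lemma X_neg_one (n : ℕ) (k : ℕ) : X n k (-1) = 0 := by
  have := X_odd n k (-1)
  simp at this
  omega

lemma X_boundary (n : ℕ) (k : ℕ) : X n k n = 0 := by
  have h := X_antiperiod n k (-1)
  rw [X_neg_one] at h
  rw [show ((n : ℤ)) = -1 + (n + 1) by ring, h]
  simp

/-- Alternating sum of `X` over a window of length `n`, shifted by `t`. -/
def e (n : ℕ) (k : ℕ) (t : ℤ) : ℤ :=
  ∑ j ∈ Finset.range n, (-1) ^ j * X n k (j + t)

lemma e_succ (n k : ℕ) (t : ℤ) : e n (k+1) t = e n k (t - 1) + e n k (t + 1) := by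
  unfold e
  rw [← Finset.sum_add_distrib]
  apply Finset.sum_congr rfl
  intro j _
  show (-1:ℤ)^j * (X n k ((j:ℤ) + t - 1) + X n k ((j:ℤ) + t + 1)) = _
  rw [show (j:ℤ) + t - 1 = j + (t - 1) by ring, show (j:ℤ) + t + 1 = j + (t + 1) by ring]
  ring

lemma e_antiperiod (n k : ℕ) (t : ℤ) : e n k (t + (n + 1)) = -e n k t := by
  unfold e
  rw [← Finset.sum_neg_distrib]
  apply Finset.sum_congr rfl
  intro j _
  rw [show (j:ℤ) + (t + (n+1)) = (j + t) + (n+1) by ring, X_antiperiod]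
  ring

lemma e_symm (n k : ℕ) (hn : Odd n) (t : ℤ) : e n k (-t) = e n k t := by
  unfold e
  rw [← Finset.sum_range_reflect (fun j => (-1:ℤ)^j * X n k (j + t)) n]
  apply Finset.sum_congr rfl
  intro j hj
  rw [Finset.mem_range] at hj
  have h1 : ((n - 1 - j : ℕ) : ℤ) = (n:ℤ) - 1 - j := by omega
  rw [h1]
  have h2 : X n k ((n:ℤ) - 1 - j + t) = X n k (j + -t) := by
    rw [show (n:ℤ) - 1 - j + t = (-2 - (j + -t)) + (n+1) by ring, X_antiperiod, X_odd]
    ring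
  rw [h2]
  congr 1
  have h3 : n - 1 - j + j = n - 1 := Nat.sub_add_cancel (by omega)
  have h4 : (-1:ℤ)^(n-1-j) * (-1:ℤ)^j = (-1:ℤ)^(n-1) := by rw [← pow_add, h3]
  have h5 : (-1:ℤ)^(n-1) = 1 := Even.neg_one_pow (Nat.Odd.sub_odd hn odd_one)
  have h6 : (-1:ℤ)^j * (-1:ℤ)^j = 1 := by
    rw [← pow_add]
    exact Even.neg_one_pow ⟨j, rfl⟩
  symm
  calc (-1:ℤ)^(n-1-j) = (-1:ℤ)^(n-1-j) * ((-1:ℤ)^j * (-1:ℤ)^j) := by rw [h6, mul_one]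
    _ = ((-1:ℤ)^(n-1-j) * (-1:ℤ)^j) * (-1:ℤ)^j := by ring
    _ = (-1:ℤ)^j := by rw [h4, h5, one_mul]

end Stmt15

namespace Stmt15

lemma alt_sum (m : ℕ) : ∑ j ∈ Finset.range m, (-1:ℤ)^j = if Even m then 0 else 1 := by
  induction m with
  | zero => simp
  | succ m ih =>
    rw [Finset.sum_range_succ, ih]
    rcases Nat.even_or_odd m with h | h
    · simp [Nat.even_add_one, h, Even.neg_one_pow h]
    · simp [Nat.even_add_one, Nat.not_even_iff_odd.2 h, Odd.neg_one_pow h]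

lemma e_zero_nonneg (n : ℕ) (hn : Odd n) (s : ℕ) (hs : s ≤ n) : 0 ≤ e n 0 s := by
  have hGval : ∀ j ∈ Finset.range n, (-1:ℤ)^j * X n 0 (j + s)
      = (-1:ℤ)^j * (if j + s < n then 1 else if j + s = n then 0 else -1) := by
    intro j hj
    rw [Finset.mem_range] at hj
    show (-1:ℤ)^j * G n (j + s) = _
    rw [G_eval n ((j:ℤ) + s) (by positivity) (by omega)]
    congr 1
    split_ifs <;> omega
  unfold e
  rw [Finset.sum_congr rfl hGval]
  rcases Nat.eq_zero_or_pos s with rfl | hs1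
  · have : ∀ j ∈ Finset.range n, (-1:ℤ)^j * (if j + (0:ℕ) < n then (1:ℤ) else if j + (0:ℕ) = n then 0 else -1) = (-1:ℤ)^j := by
      intro j hj
      rw [Finset.mem_range] at hj
      rw [if_pos (by omega), mul_one]
    rw [Finset.sum_congr rfl this, alt_sum, if_neg (Nat.not_even_iff_odd.2 hn)]
    norm_num
  · have hsplit : Finset.range n = Finset.Ico 0 n := by rw [Finset.range_eq_Ico]
    rw [hsplit, ← Finset.sum_Ico_consecutive _ (Nat.zero_le (n - s)) (Nat.sub_le n s),
      ← Finset.range_eq_Ico]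
    have hA : ∑ j ∈ Finset.range (n - s), (-1:ℤ)^j *
        (if j + s < n then 1 else if j + s = n then 0 else -1)
        = ∑ j ∈ Finset.range (n - s), (-1:ℤ)^j := by
      apply Finset.sum_congr rfl
      intro j hj
      rw [Finset.mem_range] at hj
      rw [if_pos (by omega), mul_one]
    have hlt : n - s < n := by omega
    rw [hA, Finset.sum_eq_sum_Ico_succ_bot hlt]
    have hmid : (-1:ℤ)^(n-s) * (if n - s + s < n then (1:ℤ) else if n - s + s = n then 0 else -1) = 0 := by
      rw [if_neg (by omega), if_pos (by omega), mul_zero]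
    have hB : ∑ j ∈ Finset.Ico (n - s + 1) n, (-1:ℤ)^j *
        (if j + s < n then 1 else if j + s = n then 0 else -1)
        = ∑ j ∈ Finset.Ico (n - s + 1) n, -(-1:ℤ)^j := by
      apply Finset.sum_congr rfl
      intro j hj
      rw [Finset.mem_Ico] at hj
      rw [if_neg (by omega), if_neg (by omega)]
      ring
    rw [hmid, hB, Finset.sum_neg_distrib, Finset.sum_Ico_eq_sub _ (by omega), alt_sum, alt_sum,
      alt_sum]
    have h1 : ¬ Even n := Nat.not_even_iff_odd.2 hn
    rcases Nat.even_or_odd (n - s) with h2 | h2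
    · have h3 : ¬ Even (n - s + 1) := by simp [Nat.even_add_one, h2]
      simp [h1, h2, h3]
    · have h2' : ¬ Even (n - s) := Nat.not_even_iff_odd.2 h2
      have h3 : Even (n - s + 1) := by simpa [Nat.even_add_one] using h2
      simp [h1, h2', h3]

end Stmt15

namespace Stmt15

lemma e_nonneg_aux (n : ℕ) (hn : Odd n) (h : ℤ) (hh : 2 * h = (n:ℤ) + 1) :
    ∀ k (t : ℤ), 0 ≤ t → t ≤ h → 0 ≤ e n k t := by
  have hn1 : 1 ≤ n := hn.pos
  have h1 : 1 ≤ h := by omega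
  intro k
  induction k with
  | zero =>
    intro t ht0 ht1
    lift t to ℕ using ht0
    exact e_zero_nonneg n hn t (by omega)
  | succ k ih =>
    intro t ht0 ht1
    rw [e_succ]
    by_cases ht : t = h
    · have key : e n k (t + 1) = -e n k (t - 1) := by
        rw [show t + 1 = (1 - t) + ((n:ℤ) + 1) by omega, e_antiperiod,
          show (1 : ℤ) - t = -(t - 1) by ring, e_symm n k hn]
      rw [key]
      omega
    · have hA : 0 ≤ e n k (t + 1) := ih (t + 1) (by omega) (by omega)
      have hB : 0 ≤ e n k (t - 1) := by
        by_cases ht0' : t = 0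
        · subst ht0'
          rw [show (0:ℤ) - 1 = -1 by ring, e_symm n k hn]
          exact ih 1 (by omega) (by omega)
        · exact ih (t - 1) (by omega) (by omega)
      omega

lemma e_nonneg (n : ℕ) (hn : Odd n) (h : ℤ) (hh : 2 * h = (n:ℤ) + 1) :
    ∀ k (t : ℤ), -h ≤ t → t ≤ h → 0 ≤ e n k t := by
  intro k t ht0 ht1
  rcases le_or_gt 0 t with ht | ht
  · exact e_nonneg_aux n hn h hh k t ht ht1
  · have : e n k t = e n k (-t) := by
      rw [show t = -(-t) by ring]
      rw [e_symm n k hn]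
      simp
    rw [this]
    exact e_nonneg_aux n hn h hh k (-t) (by omega) (by omega)

end Stmt15
open SimpleGraph
namespace Stmt15

/-- Walks of length `k` in `P_n` starting at `j`. -/
abbrev WalkSet (n k : ℕ) (j : Fin n) :=
  {w : Fin (k+1) → Fin n // w 0 = j ∧
    ∀ i : Fin k, (pathGraph n).Adj (w i.castSucc) (w i.succ)}

instance (n k : ℕ) (j : Fin n) : Finite (WalkSet n k j) := by
  unfold WalkSet; infer_instance

/-- The number of walks of length `k` in `P_n` starting at `j`. -/
noncomputable def cnt (n k : ℕ) (j : Fin n) : ℕ := Nat.card (WalkSet n k j)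

lemma card_sigma' {α : Type*} [Fintype α] (f : α → Type*) [∀ i, Finite (f i)] :
    Nat.card (Σ i, f i) = ∑ i, Nat.card (f i) := by
  classical
  letI : ∀ i, Fintype (f i) := fun i => Fintype.ofFinite _
  simp [Nat.card_eq_fintype_card]

lemma cnt_zero (n : ℕ) (j : Fin n) : cnt n 0 j = 1 := by
  have E : WalkSet n 0 j ≃ PUnit.{1} := by
    refine ⟨fun _ => PUnit.unit, fun _ => ⟨fun _ => j, rfl, fun i => i.elim0⟩, ?_, fun _ => rfl⟩
    rintro ⟨w, h0, hw⟩
    apply Subtype.ext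
    funext i
    induction i using Fin.cases with
    | zero => simpa using h0.symm
    | succ i => exact i.elim0
  unfold cnt
  rw [Nat.card_congr E]
  simp

/-- Tail equivalence: walks of length `k+1` from `j` whose second vertex is `j'`,
where `j'` is adjacent to `j`, correspond to walks of length `k` from `j'`. -/
def tailEquiv (n k : ℕ) (j j' : Fin n) (hadj : (pathGraph n).Adj j j') :
    {w : WalkSet n (k+1) j // w.1 (Fin.succ 0) = j'} ≃ WalkSet n k j' where
  toFun := fun ⟨⟨w, _, hw⟩, h1⟩ => ⟨fun i => w i.succ, h1, by
    intro i
    have := hw i.succ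
    rwa [← Fin.succ_castSucc] at this⟩
  invFun := fun ⟨w', h0', hw'⟩ => ⟨⟨Fin.cases j w', by simp, by
    intro i
    induction i using Fin.cases with
    | zero =>
      simp only [Fin.castSucc_zero, Fin.cases_zero, Fin.cases_succ, h0']
      exact hadj
    | succ i =>
      simp only [Fin.succ_castSucc, Fin.cases_succ]
      exact hw' i⟩, by show Fin.cases j w' (Fin.succ 0) = j'; rw [Fin.cases_succ, h0']⟩
  left_inv := by
    rintro ⟨⟨w, h0, hw⟩, h1⟩
    apply Subtype.ext
    apply Subtype.ext
    funext i
    induction i using Fin.cases with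
    | zero => simpa using h0.symm
    | succ i => simp
  right_inv := by
    rintro ⟨w', h0', hw'⟩
    apply Subtype.ext
    funext i
    simp

lemma cnt_succ (n k : ℕ) (j : Fin n) :
    cnt n (k+1) j = ∑ j' : Fin n,
      (if j.val + 1 = j'.val ∨ j'.val + 1 = j.val then cnt n k j' else 0) := by
  classical
  have E : WalkSet n (k+1) j ≃ Σ j' : Fin n, {w : WalkSet n (k+1) j // w.1 (Fin.succ 0) = j'} :=
    (Equiv.sigmaFiberEquiv (fun w : WalkSet n (k+1) j => w.1 (Fin.succ 0))).symm
  rw [cnt, Nat.card_congr E, card_sigma']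
  apply Finset.sum_congr rfl
  intro j' _
  by_cases hadj : (pathGraph n).Adj j j'
  · rw [if_pos (pathGraph_adj.mp hadj), Nat.card_congr (tailEquiv n k j j' hadj)]
    rfl
  · rw [if_neg (fun h => hadj (pathGraph_adj.mpr h))]
    haveI : IsEmpty {w : WalkSet n (k+1) j // w.1 (Fin.succ 0) = j'} := by
      constructor
      rintro ⟨⟨w, h0, hw⟩, h1⟩
      exact hadj (by rw [← h0, ← h1]; exact hw 0)
    exact Nat.card_of_isEmpty

end Stmt15

namespace Stmt15
open SimpleGraph

lemma sum_if_eq_aux (n k : ℕ) (j : Fin n) :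
    (∑ j' : Fin n, (if j.val + 1 = j'.val ∨ j'.val + 1 = j.val then X n k (j'.val) else 0))
      = X n k ((j.val : ℤ) - 1) + X n k ((j.val : ℤ) + 1) := by
  classical
  have hsplit : ∀ j' : Fin n,
      (if j.val + 1 = j'.val ∨ j'.val + 1 = j.val then X n k (j'.val) else 0)
        = (if j.val + 1 = j'.val then X n k (j'.val) else 0)
          + (if j'.val + 1 = j.val then X n k (j'.val) else 0) := by
    intro j'
    by_cases h1 : j.val + 1 = j'.val <;> by_cases h2 : j'.val + 1 = j.val
    · exfalso; omega
    · simp [h1, h2]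
    · simp [h1, h2]
    · simp [h1, h2]
  rw [Finset.sum_congr rfl (fun j' _ => hsplit j'), Finset.sum_add_distrib]
  have hS1 : (∑ j' : Fin n, (if j.val + 1 = j'.val then X n k (j'.val) else 0))
      = X n k ((j.val : ℤ) + 1) := by
    rw [Fin.sum_univ_eq_sum_range (fun i => if j.val + 1 = i then X n k i else 0) n,
      Finset.sum_ite_eq]
    by_cases h : j.val + 1 < n
    · rw [if_pos (Finset.mem_range.mpr h)]
      push_cast
      ring_nf
    · have hn : j.val + 1 = n := by omega
      rw [if_neg (by simp [Finset.mem_range]; omega),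
        show ((j.val : ℤ) + 1) = (n : ℤ) by omega, X_boundary]
  have hS2 : (∑ j' : Fin n, (if j'.val + 1 = j.val then X n k (j'.val) else 0))
      = X n k ((j.val : ℤ) - 1) := by
    rw [Fin.sum_univ_eq_sum_range (fun i => if i + 1 = j.val then X n k i else 0) n]
    by_cases hj : j.val = 0
    · rw [Finset.sum_eq_zero (fun i _ => by rw [if_neg (by omega)]),
        show ((j.val : ℤ) - 1) = -1 by omega, X_neg_one]
    · have heq : ∀ i ∈ Finset.range n,
          (if i + 1 = j.val then X n k i else 0) = (if j.val - 1 = i then X n k i else 0) := by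
        intro i _
        congr 1
        simp only [eq_iff_iff]
        omega
      rw [Finset.sum_congr rfl heq, Finset.sum_ite_eq,
        if_pos (Finset.mem_range.mpr (by omega))]
      congr 1
      omega
  rw [hS1, hS2]
  ring

lemma cnt_eq_X (n : ℕ) : ∀ (k : ℕ) (j : Fin n), (cnt n k j : ℤ) = X n k (j.val : ℤ) := by
  intro k
  induction k with
  | zero =>
    intro j
    rw [cnt_zero]
    show (1 : ℤ) = G n (j.val : ℤ)
    rw [G_eval n (j.val : ℤ) (by positivity) (by omega), if_pos (by exact_mod_cast j.isLt)]
  | succ k ih =>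
    intro j
    rw [cnt_succ]
    push_cast
    have : ∀ j' : Fin n,
        ((if j.val + 1 = j'.val ∨ j'.val + 1 = j.val then ((cnt n k j' : ℤ)) else 0))
          = (if j.val + 1 = j'.val ∨ j'.val + 1 = j.val then X n k (j'.val : ℤ) else 0) := by
      intro j'
      split_ifs
      · exact ih j'
      · rfl
    rw [Finset.sum_congr rfl (fun j' _ => this j'), sum_if_eq_aux]
    show _ = X n k ((j.val : ℤ) - 1) + X n k ((j.val : ℤ) + 1)
    ring

end Stmt15

namespace Stmt15
open SimpleGraph

/-- The subtype of functions `Fin (L+1) → Fin n` that are walks in `P_n`. -/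
abbrev WalkType (n L : ℕ) :=
  {w : Fin (L+1) → Fin n // ∀ i : Fin L, (pathGraph n).Adj (w i.castSucc) (w i.succ)}

instance (n L : ℕ) : Finite (WalkType n L) := by unfold WalkType; infer_instance

def homWalkEquiv (n L : ℕ) : (pathGraph (L+1) →g pathGraph n) ≃ WalkType n L where
  toFun f := ⟨f, fun i => f.map_adj (pathGraph_adj.mpr (Or.inl (by simp)))⟩
  invFun w := ⟨w.1, by
    intro a b hab
    rw [pathGraph_adj] at hab
    rcases hab with h | h
    · have hi : a.val < L := by omega
      have ha : (⟨a.val, hi⟩ : Fin L).castSucc = a := Fin.ext (by simp)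
      have hb : (⟨a.val, hi⟩ : Fin L).succ = b := Fin.ext (by simp; omega)
      rw [← ha, ← hb]
      exact w.2 _
    · have hi : b.val < L := by omega
      have ha : (⟨b.val, hi⟩ : Fin L).castSucc = b := Fin.ext (by simp)
      have hb : (⟨b.val, hi⟩ : Fin L).succ = a := Fin.ext (by simp; omega)
      rw [← ha, ← hb]
      exact (w.2 _).symm⟩
  left_inv f := rfl
  right_inv w := rfl

lemma walk_parity (n L : ℕ) (w : WalkType n L) :
    ∀ (p : ℕ) (hp : p < L + 1), ((w.1 ⟨p, hp⟩).val + p) % 2 = (w.1 0).val % 2 := by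
  intro p
  induction p with
  | zero => intro hp; simp
  | succ p ih =>
    intro hp
    have hp' : p < L + 1 := by omega
    have hadj := w.2 ⟨p, by omega⟩
    have hc : (⟨p, by omega⟩ : Fin L).castSucc = ⟨p, hp'⟩ := Fin.ext (by simp)
    have hs : (⟨p, by omega⟩ : Fin L).succ = ⟨p + 1, hp⟩ := Fin.ext (by simp)
    rw [hc, hs, pathGraph_adj] at hadj
    have := ih hp'
    omega

end Stmt15

namespace Stmt15
open SimpleGraph

lemma card_walk_pred (n L : ℕ) (Q : Fin n → Prop) [DecidablePred Q] :
    Nat.card {w : WalkType n L // Q (w.1 0)}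
      = ∑ j : Fin n, (if Q j then cnt n L j else 0) := by
  classical
  have E1 : {w : WalkType n L // Q (w.1 0)}
      ≃ Σ j : {j : Fin n // Q j}, {w : WalkType n L // w.1 0 = j} :=
    (Equiv.sigmaSubtypeFiberEquivSubtype (fun w : WalkType n L => w.1 0)
      (fun _ => Iff.rfl)).symm
  rw [Nat.card_congr E1, card_sigma']
  have E2 : ∀ j : Fin n, {w : WalkType n L // w.1 0 = j} ≃ WalkSet n L j := fun j =>
    (Equiv.subtypeSubtypeEquivSubtypeInter
        (fun w : Fin (L+1) → Fin n => ∀ i : Fin L, (pathGraph n).Adj (w i.castSucc) (w i.succ))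
        (fun w => w 0 = j)).trans
      (Equiv.subtypeEquivRight (fun w => and_comm))
  calc ∑ j : {j : Fin n // Q j}, Nat.card {w : WalkType n L // w.1 0 = j.val}
      = ∑ j : {j : Fin n // Q j}, cnt n L j.val :=
        Finset.sum_congr rfl (fun j _ => by rw [Nat.card_congr (E2 j.val)]; rfl)
    _ = ∑ j ∈ Finset.univ.filter (fun j : Fin n => Q j), cnt n L j :=
        (Finset.sum_subtype _ (fun j => by simp) _).symm
    _ = ∑ j : Fin n, (if Q j then cnt n L j else 0) := Finset.sum_filter _ _

theorem stmt_15' (n : ℕ) (L : ℕ) (hno : Odd n)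
    (v : Fin (L+1)) (hv : Odd v.val) :
    Nat.card {f : pathGraph (L+1) →g pathGraph n // Odd (f v).val} ≥
      Nat.card {f : pathGraph (L+1) →g pathGraph n // Even (f v).val} := by
  classical
  have hpar : ∀ (w : WalkType n L) (i : Fin (L+1)),
      ((w.1 i).val + i.val) % 2 = (w.1 0).val % 2 := by
    intro w i
    have := walk_parity n L w i.val i.isLt
    rwa [show (⟨i.val, i.isLt⟩ : Fin (L+1)) = i from Fin.ext rfl] at this
  have hOdd : Nat.card {f : pathGraph (L+1) →g pathGraph n // Odd (f v).val}
      = ∑ j : Fin n, (if Even j.val then cnt n L j else 0) := by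
    have EE : {f : pathGraph (L+1) →g pathGraph n // Odd (f v).val}
        ≃ {w : WalkType n L // Even ((w.1 0)).val} :=
      Equiv.subtypeEquiv (homWalkEquiv n L) (fun f => by
        have h1 := hpar (homWalkEquiv n L f) v
        have h2 : (((homWalkEquiv n L) f).1 v) = f v := rfl
        rw [h2] at h1
        rw [Nat.odd_iff] at hv
        constructor
        · intro h; rw [Nat.odd_iff] at h; rw [Nat.even_iff]; omega
        · intro h; rw [Nat.even_iff] at h; rw [Nat.odd_iff]; omega)
    rw [Nat.card_congr EE, card_walk_pred n L (fun j => Even j.val)]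
  have hEven : Nat.card {f : pathGraph (L+1) →g pathGraph n // Even (f v).val}
      = ∑ j : Fin n, (if Odd j.val then cnt n L j else 0) := by
    have EE : {f : pathGraph (L+1) →g pathGraph n // Even (f v).val}
        ≃ {w : WalkType n L // Odd ((w.1 0)).val} :=
      Equiv.subtypeEquiv (homWalkEquiv n L) (fun f => by
        have h1 := hpar (homWalkEquiv n L f) v
        have h2 : (((homWalkEquiv n L) f).1 v) = f v := rfl
        rw [h2] at h1
        rw [Nat.odd_iff] at hv
        constructor
        · intro h; rw [Nat.even_iff] at h; rw [Nat.odd_iff]; omega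
        · intro h; rw [Nat.odd_iff] at h; rw [Nat.even_iff]; omega)
    rw [Nat.card_congr EE, card_walk_pred n L (fun j => Odd j.val)]
  rw [hOdd, hEven]
  -- pass to ℤ and use e_nonneg
  have hZ : ((∑ j : Fin n, (if Even j.val then cnt n L j else 0) : ℕ) : ℤ)
      - ((∑ j : Fin n, (if Odd j.val then cnt n L j else 0) : ℕ) : ℤ) = e n L 0 := by
    push_cast
    rw [← Finset.sum_sub_distrib]
    have hterm : ∀ j : Fin n,
        ((if Even j.val then (cnt n L j : ℤ) else 0) - (if Odd j.val then (cnt n L j : ℤ) else 0))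
          = (-1 : ℤ)^(j.val) * X n L (j.val : ℤ) := by
      intro j
      rcases Nat.even_or_odd j.val with h | h
      · rw [if_pos h, if_neg (by simpa [Nat.not_odd_iff_even] using h), Even.neg_one_pow h,
          one_mul, sub_zero, cnt_eq_X]
      · rw [if_neg (by simpa [Nat.not_even_iff_odd] using h), if_pos h, Odd.neg_one_pow h,
          zero_sub, cnt_eq_X]
        ring
    rw [Finset.sum_congr rfl (fun j _ => hterm j),
      Fin.sum_univ_eq_sum_range (fun i => (-1 : ℤ)^i * X n L (i : ℤ)) n]
    unfold e
    apply Finset.sum_congr rfl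
    intro j _
    rw [add_zero]
  obtain ⟨c, hc⟩ := id hno
  have he : 0 ≤ e n L 0 := e_nonneg n hno (c + 1) (by omega) L 0 (by omega) (by omega)
  omega

end Stmt15


/-- For odd `m` and odd `n`, and `v` a vertex of the small color class of `P_m`
(`0`-based index of `v` odd), the number of homomorphisms `f : P_m → P_n` sending `v` to a
vertex of even (`1`-based) index, i.e. odd `0`-based index, is at least the number of
homomorphisms sending `v` to a vertex of odd (`1`-based) index. -/
theorem stmt_15 (m n : ℕ) (hm : 2 ≤ m) (hmo : Odd m) (hno : Odd n)
    (v : Fin m) (hv : Odd v.val) :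
    Nat.card {f : pathGraph m →g pathGraph n // Odd (f v).val} ≥
      Nat.card {f : pathGraph m →g pathGraph n // Even (f v).val} := by
  obtain ⟨L, rfl⟩ : ∃ L, m = L + 1 := ⟨m - 1, by omega⟩
  exact Stmt15.stmt_15' n L hno v hv
end

section
/- Let $T(u)$ be a rooted tree and let $(a_1,\dots,a_n)$ be its hom-vector into $P_n$ for odd $n$, i.e., $a_i$ is the number of homomorphisms $f: T \to P_n$ with $f(u) = i$. If $i < j$ and $i \not\equiv j \pmod 2$, then $a_i a_j \leq a_{i+1} a_{j-1}$. -/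
/-!
Orient the tree towards the root `u`. The hom-vector of the subtree below a vertex is the
pointwise product of its own weight with, for each child, the neighbour sums
`b (k - 1) + b (k + 1)` of the child's hom-vector truncated to `[0, n)`. The inequality
`b i * b j ≤ b (i + 1) * b (j - 1)` for `j - i` odd is preserved by pointwise products, by
truncation to an interval and by neighbour sums, so it propagates from the leaves to the root.
Formally, leaves are pruned one at a time, each pruned leaf being absorbed into a vertex weight
on its parent.
-/

open SimpleGraph Finset

def OddGapLogConcave (b : ℤ → ℕ) : Prop :=
  ∀ i j : ℤ, i < j → Odd (j - i) → b i * b j ≤ b (i + 1) * b (j - 1)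

def nbrSum (b : ℤ → ℕ) (k : ℤ) : ℕ := b (k - 1) + b (k + 1)

namespace OddGapLogConcave

variable {b c : ℤ → ℕ}

lemma const (K : ℕ) : OddGapLogConcave fun _ => K := fun _ _ _ _ => le_rfl

lemma mul (hb : OddGapLogConcave b) (hc : OddGapLogConcave c) :
    OddGapLogConcave fun i => b i * c i := fun i j hij hodd =>
  calc b i * c i * (b j * c j) = b i * b j * (c i * c j) := by ring
    _ ≤ b (i + 1) * b (j - 1) * (c (i + 1) * c (j - 1)) :=
      Nat.mul_le_mul (hb i j hij hodd) (hc i j hij hodd)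
    _ = b (i + 1) * c (i + 1) * (b (j - 1) * c (j - 1)) := by ring

lemma of_const_mul {K : ℕ} (hK : 0 < K) (h : OddGapLogConcave fun i => K * b i) :
    OddGapLogConcave b := fun i j hij hodd => by
  have hK2 : 0 < K * K := Nat.mul_pos hK hK
  refine Nat.le_of_mul_le_mul_left ?_ hK2
  calc K * K * (b i * b j) = K * b i * (K * b j) := by ring
    _ ≤ K * b (i + 1) * (K * b (j - 1)) := h i j hij hodd
    _ = K * K * (b (i + 1) * b (j - 1)) := by ring

lemma indicator_Ico (hb : OddGapLogConcave b) (n : ℤ) :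
    OddGapLogConcave ((Set.Ico 0 n).indicator b) := fun i j hij hodd => by
  by_cases h : i ∈ Set.Ico 0 n ∧ j ∈ Set.Ico 0 n
  · simp only [Set.mem_Ico] at h
    rw [Set.indicator_of_mem, Set.indicator_of_mem, Set.indicator_of_mem, Set.indicator_of_mem]
    · exact hb i j hij hodd
    all_goals simp only [Set.mem_Ico]; omega
  · rcases not_and_or.1 h with h | h <;> simp [Set.indicator_of_notMem h]

lemma nbrSum (hb : OddGapLogConcave b) : OddGapLogConcave (nbrSum b) := fun i j hij hodd => by
  have hodd' := Int.odd_iff.1 hodd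
  simp only [_root_.nbrSum, add_sub_cancel_right, sub_add_cancel]
  obtain rfl | hj := eq_or_lt_of_le (show i + 1 ≤ j by omega)
  · rw [add_sub_cancel_right, Nat.mul_comm]
  -- each of the four products in the expansion is bounded by the hypothesis
  have h₁ := hb (i - 1) (j - 1) (by omega) (Int.odd_iff.2 (by omega))
  have h₂ := hb (i - 1) (j + 1) (by omega) (Int.odd_iff.2 (by omega))
  have h₃ := hb (i + 1) (j - 1) (by omega) (Int.odd_iff.2 (by omega))
  have h₄ := hb (i + 1) (j + 1) (by omega) (Int.odd_iff.2 (by omega))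
  simp only [sub_add_cancel, add_sub_cancel_right] at h₁ h₂ h₃ h₄
  calc (b (i - 1) + b (i + 1)) * (b (j - 1) + b (j + 1))
      = b (i - 1) * b (j - 1) + b (i - 1) * b (j + 1) + b (i + 1) * b (j - 1)
        + b (i + 1) * b (j + 1) := by ring
    _ ≤ b i * b (j - 1 - 1) + b i * b j + b (i + 1 + 1) * b (j - 1 - 1)
        + b (i + 1 + 1) * b j := by gcongr
    _ = (b i + b (i + 1 + 1)) * (b (j - 1 - 1) + b j) := by ring

end OddGapLogConcave

section RootedTree

variable {V : Type*} {T : SimpleGraph V} {u x y : V}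

lemma SimpleGraph.IsAcyclic.eq_penultimate_of_dist_lt (hT : T.IsAcyclic) {q : T.Walk u x}
    (hq : q.IsPath) (hadj : T.Adj y x) (hy : T.Reachable u y) (hd : T.dist u y < T.dist u x) :
    y = q.penultimate := by
  obtain ⟨p, hp, hpl⟩ := hy.exists_path_of_dist
  by_cases hys : y ∈ q.support
  · rw [hT.path_concat hp hq hadj hys, Walk.penultimate_concat]
  · have hxp := hT.mem_support_of_ne_mem_support_of_adj_of_isPath hp hq hadj hys
    have hlen := congrArg Walk.length (hT.path_concat hq hp hadj.symm hxp)
    rw [Walk.length_concat] at hlen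
    have := dist_le q
    omega

lemma SimpleGraph.Connected.exists_adj_dist_lt_s16 (hT : T.Connected) (hx : x ≠ u) :
    ∃ y, T.Adj y x ∧ T.dist u y < T.dist u x := by
  obtain ⟨q, hql⟩ := hT.exists_walk_length_eq_dist u x
  have hq : ¬ q.Nil := fun h => hx h.eq.symm
  refine ⟨q.penultimate, q.adj_penultimate hq, ?_⟩
  have := dist_le q.dropLast
  have := q.length_dropLast_add_one hq
  omega

lemma SimpleGraph.IsTree.exists_parent_s16 (hT : T.IsTree) (u : V) :
    ∃ p : V → V, (∀ v, v ≠ u → T.dist u (p v) < T.dist u v) ∧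
      ∀ x y, T.Adj x y ↔ (x ≠ u ∧ p x = y) ∨ (y ≠ u ∧ p y = x) := by
  have : ∀ x, ∃ y, x ≠ u → T.Adj y x ∧ T.dist u y < T.dist u x := by
    intro x
    by_cases hx : x = u
    · exact ⟨x, fun h => (h hx).elim⟩
    · exact (hT.connected.exists_adj_dist_lt_s16 hx).imp fun _ h _ => h
  choose p hp using this
  have parent_unique : ∀ {x y}, T.Adj y x → T.dist u y < T.dist u x → x ≠ u → p x = y := by
    intro x y hadj hd hx
    obtain ⟨q, hq, -⟩ := hT.connected.exists_path_of_dist u x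
    rw [hT.isAcyclic.eq_penultimate_of_dist_lt hq (hp x hx).1 (hT.connected u _) (hp x hx).2,
      hT.isAcyclic.eq_penultimate_of_dist_lt hq hadj (hT.connected u _) hd]
  refine ⟨p, fun v hv => (hp v hv).2, fun x y => ⟨fun hadj => ?_, ?_⟩⟩
  · have hu : ∀ {z}, T.dist u z ≠ 0 → z ≠ u := fun h hz => h (hz ▸ dist_self)
    rcases hT.dist_eq_dist_add_one_of_adj u hadj with hd | hd
    · exact .inl ⟨hu (by omega), parent_unique hadj.symm (by omega) (hu (by omega))⟩
    · exact .inr ⟨hu (by omega), parent_unique hadj (by omega) (hu (by omega))⟩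
  · rintro (⟨hx, rfl⟩ | ⟨hy, rfl⟩)
    · exact (hp x hx).1.symm
    · exact (hp y hy).1

end RootedTree

lemma Fintype.sum_sum_update_s16 {α β : Type*} [Fintype α] [DecidableEq α] [Fintype β]
    [DecidableEq β] (v : α) (G : (α → β) → ℕ) :
    ∑ f : α → β, ∑ c : β, G (Function.update f v c) = Fintype.card β * ∑ f, G f := by
  have hinv : Function.Involutive fun q : (α → β) × β => (Function.update q.1 v q.2, q.1 v) :=
    fun q => by simp
  rw [← Fintype.sum_prod_type', Fintype.sum_equiv hinv.toPerm
    (fun q => G (Function.update q.1 v q.2)) (fun q => G q.1) fun _ => rfl,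
    Fintype.sum_prod_type, Finset.mul_sum]
  simp

instance (n : ℕ) : DecidableRel (pathGraph n).Adj := fun _ _ => decidable_of_iff' _ pathGraph_adj

lemma sum_fin_ite_coe_eq (n : ℕ) (b : ℤ → ℕ) (x : ℤ) :
    ∑ c : Fin n, (if ((c : ℕ) : ℤ) = x then b c else 0) = (Set.Ico 0 (n : ℤ)).indicator b x := by
  by_cases hx : x ∈ Set.Ico 0 (n : ℤ)
  · rw [Set.indicator_of_mem hx]
    obtain ⟨k, rfl⟩ := Int.eq_ofNat_of_zero_le hx.1
    have hk : k < n := by simpa using hx.2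
    rw [Fintype.sum_eq_single ⟨k, hk⟩ fun c hc => if_neg fun h => hc (Fin.ext (by simpa using h))]
    simp
  · rw [Set.indicator_of_notMem hx]
    refine Finset.sum_eq_zero fun c _ => if_neg fun h => hx ?_
    simp only [Set.mem_Ico, ← h]
    omega

lemma sum_fin_ite_adj_eq_nbrSum (n : ℕ) (b : ℤ → ℕ) (a : Fin n) :
    ∑ c : Fin n, (if (pathGraph n).Adj a c then b c else 0)
      = nbrSum ((Set.Ico 0 (n : ℤ)).indicator b) a := by
  have hsplit : ∀ c : Fin n, (if (pathGraph n).Adj a c then b c else 0) =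
      (if ((c : ℕ) : ℤ) = (a : ℤ) - 1 then b c else 0) +
        (if ((c : ℕ) : ℤ) = (a : ℤ) + 1 then b c else 0) := by
    intro c
    simp only [pathGraph_adj]
    split_ifs <;> omega
  simp only [hsplit, Finset.sum_add_distrib, sum_fin_ite_coe_eq, nbrSum]

section WeightedCount

variable {V : Type*} [DecidableEq V] (n : ℕ) (p : V → V)

noncomputable def pruneLeaf (μ : V → ℤ → ℕ) (v x : V) : ℤ → ℕ := fun k =>
  μ x k * if x = p v then nbrSum ((Set.Ico 0 (n : ℤ)).indicator (μ v)) k else 1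

lemma OddGapLogConcave.pruneLeaf {μ : V → ℤ → ℕ} (hμ : ∀ x, OddGapLogConcave (μ x)) (v x : V) :
    OddGapLogConcave (pruneLeaf n p μ v x) := by
  unfold _root_.pruneLeaf
  by_cases hx : x = p v
  · simpa [hx] using (hμ x).mul ((hμ v).indicator_Ico n).nbrSum
  · simpa [hx] using hμ x

variable [Fintype V] (u : V)

def parentEdgeWeight (μ : V → ℤ → ℕ) (f : V → Fin n) (x : V) : ℕ :=
  if x = u ∨ (pathGraph n).Adj (f (p x)) (f x) then μ x (f x) else 0

/-- The sum runs over all maps `V → Fin n`, so each vertex outside `s` contributes a factor `n`. -/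
def weightedCount (μ : V → ℤ → ℕ) (s : Finset V) (i : ℤ) : ℕ :=
  ∑ f : V → Fin n, if ((f u : ℕ) : ℤ) = i then ∏ x ∈ s, parentEdgeWeight n p u μ f x else 0

lemma weightedCount_singleton (μ : V → ℤ → ℕ) (i : ℤ) :
    n * weightedCount n p u μ ({u} : Finset V) i
      = Fintype.card (V → Fin n) * (Set.Ico 0 (n : ℤ)).indicator (μ u) i := by
  have h := Fintype.sum_sum_update_s16 (β := Fin n) u
  simp only [Fintype.card_fin] at h
  rw [weightedCount, ← h]
  simp [parentEdgeWeight, sum_fin_ite_coe_eq]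

lemma weightedCount_erase_leaf (μ : V → ℤ → ℕ) {s : Finset V} {v : V} (hv : v ∈ s) (hvu : v ≠ u)
    (hpv : p v ∈ s) (hleaf : ∀ x ∈ s, x ≠ u → p x ≠ v) (i : ℤ) :
    weightedCount n p u (pruneLeaf n p μ v) (s.erase v) i = n * weightedCount n p u μ s i := by
  have hw : p v ∈ s.erase v := mem_erase.2 ⟨hleaf v hv hvu, hpv⟩
  have h_update : ∀ f c, ∀ x ∈ s.erase v,
      parentEdgeWeight n p u μ (Function.update f v c) x = parentEdgeWeight n p u μ f x := by
    intro f c x hx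
    obtain ⟨hxv, hxs⟩ := mem_erase.1 hx
    by_cases hxu : x = u
    · simp [parentEdgeWeight, hxu, Function.update_of_ne (hxu ▸ hxv)]
    · simp [parentEdgeWeight, Function.update_of_ne hxv, Function.update_of_ne (hleaf x hxs hxu)]
  have h_leaf : ∀ f c, parentEdgeWeight n p u μ (Function.update f v c) v
      = if (pathGraph n).Adj (f (p v)) c then μ v c else 0 := by
    intro f c
    simp [parentEdgeWeight, hvu, Function.update_of_ne (hleaf v hv hvu)]
  have h := Fintype.sum_sum_update_s16 (β := Fin n) v
  simp only [Fintype.card_fin] at h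
  rw [weightedCount, weightedCount, ← h]
  refine Finset.sum_congr rfl fun f _ => ?_
  simp only [Function.update_of_ne hvu.symm]
  by_cases hfu : ((f u : ℕ) : ℤ) = i
  · simp only [hfu, if_true]
    rw [sum_congr rfl fun c _ => by
      rw [← mul_prod_erase s _ hv, h_leaf, prod_congr rfl (h_update f c)]]
    rw [← sum_mul, sum_fin_ite_adj_eq_nbrSum]
    have h_weight : ∀ x, parentEdgeWeight n p u (pruneLeaf n p μ v) f x
        = parentEdgeWeight n p u μ f x *
          if x = p v then nbrSum ((Set.Ico 0 (n : ℤ)).indicator (μ v)) (f x) else 1 := by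
      intro x
      simp only [parentEdgeWeight, pruneLeaf]
      split_ifs <;> simp
    rw [prod_congr rfl fun x _ => h_weight x, prod_mul_distrib, prod_ite_eq', if_pos hw, mul_comm]
  · simp [hfu]

theorem oddGapLogConcave_weightedCount (hn : 0 < n) (d : V → ℕ)
    (hd : ∀ v, v ≠ u → d (p v) < d v) {s : Finset V} (hus : u ∈ s)
    (hs : ∀ x ∈ s, x ≠ u → p x ∈ s) {μ : V → ℤ → ℕ} (hμ : ∀ x, OddGapLogConcave (μ x)) :
    OddGapLogConcave (weightedCount n p u μ s) := by
  induction s using Finset.strongInduction generalizing μ with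
  | H s ih =>
  refine OddGapLogConcave.of_const_mul hn ?_
  by_cases hsu : s = {u}
  · subst hsu
    simp only [weightedCount_singleton]
    exact (OddGapLogConcave.const _).mul ((hμ u).indicator_Ico n)
  -- a deepest non-root vertex of `s` is a leaf of `s`
  have hne : (s.erase u).Nonempty := by
    rw [nonempty_iff_ne_empty, Ne, erase_eq_empty_iff]
    exact fun h => h.elim (fun h => by simp [h] at hus) hsu
  obtain ⟨v, hv, hmax⟩ := (s.erase u).exists_max_image d hne
  obtain ⟨hvu, hvs⟩ := mem_erase.1 hv
  have hleaf : ∀ x ∈ s, x ≠ u → p x ≠ v := fun x hxs hxu hpx =>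
    absurd (hmax x (mem_erase.2 ⟨hxu, hxs⟩)) (not_le.2 (hpx ▸ hd x hxu))
  simp only [← weightedCount_erase_leaf n p u μ hvs hvu (hs v hvs hvu) hleaf]
  refine ih _ (erase_ssubset hvs) (mem_erase.2 ⟨hvu.symm, hus⟩) (fun x hx hxu => ?_)
    (OddGapLogConcave.pruneLeaf n p hμ v)
  obtain ⟨-, hxs⟩ := mem_erase.1 hx
  exact mem_erase.2 ⟨hleaf x hxs hxu, hs x hxs hxu⟩

lemma card_hom_eq_weightedCount {T : SimpleGraph V}
    (hadj : ∀ x y, T.Adj x y ↔ (x ≠ u ∧ p x = y) ∨ (y ≠ u ∧ p y = x)) (c : Fin n) :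
    Nat.card {f : T →g pathGraph n // f u = c} = weightedCount n p u (fun _ _ => 1) univ c := by
  let e : {f : T →g pathGraph n // f u = c} ≃
      {f : V → Fin n // f u = c ∧ ∀ x, x = u ∨ (pathGraph n).Adj (f (p x)) (f x)} :=
    { toFun := fun φ => ⟨φ.1, φ.2, fun x => or_iff_not_imp_left.2 fun hx =>
        φ.1.map_adj ((hadj _ _).2 (.inr ⟨hx, rfl⟩))⟩
      invFun := fun g => ⟨⟨g.1, fun {x y} hxy => by
        rcases (hadj x y).1 hxy with ⟨hx, rfl⟩ | ⟨hy, rfl⟩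
        · exact ((g.2.2 x).resolve_left hx).symm
        · exact (g.2.2 y).resolve_left hy⟩, g.2.1⟩
      left_inv := fun _ => rfl
      right_inv := fun _ => rfl }
  rw [Nat.card_congr e, Nat.card_eq_fintype_card, Fintype.card_subtype, card_filter, weightedCount]
  refine sum_congr rfl fun f _ => ?_
  simp [parentEdgeWeight, prod_boole, ite_and, Fin.ext_iff]

end WeightedCount

/-- Log-concavity of the hom-vector of a rooted tree into an odd path: if
`a i` is the number of homomorphisms of the rooted tree `(T, u)` into `P_n` sending `u`
to the `i`-th vertex, `i < j` and `i ≢ j (mod 2)`, then `a i * a j ≤ a (i+1) * a (j-1)`. -/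
theorem stmt_16 {V : Type*} [Fintype V] (T : SimpleGraph V) (hT : T.IsTree) (u : V)
    (n : ℕ) (a : Fin n → ℕ)
    (ha : ∀ i : Fin n, a i = Nat.card {f : T →g pathGraph n // f u = i})
    (i j : ℕ) (hij : i < j) (hjn : j < n) (hpar : i % 2 ≠ j % 2) :
    a ⟨i, by omega⟩ * a ⟨j, hjn⟩ ≤ a ⟨i + 1, by omega⟩ * a ⟨j - 1, by omega⟩ := by
  classical
  obtain ⟨p, hdepth, hadj⟩ := hT.exists_parent_s16 u
  have hcount : ∀ c : Fin n, a c = weightedCount n p u (fun _ _ => 1) univ c := fun c =>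
    (ha c).trans (card_hom_eq_weightedCount n p u hadj c)
  have hlc := oddGapLogConcave_weightedCount n p u (by omega) _ hdepth (mem_univ u)
    (fun x _ _ => mem_univ (p x)) (fun _ => OddGapLogConcave.const 1)
  simp only [hcount]
  have hj : ((j - 1 : ℕ) : ℤ) = j - 1 := by omega
  push_cast [hj]
  exact hlc i j (by omega) (Int.odd_iff.2 (by omega))
end

section
/- Let $n$ be odd. Let $T_2(u)$ be a rooted subtree of a rooted tree $T_1(u)$ (same root), with hom-vectors $(a_1,\dots,a_n)$ and $(b_1,\dots,b_n)$ into $P_n$ respectively. If $i \equiv j \pmod 2$ and $|\frac{n+1}{2} - i| \leq |\frac{n+1}{2} - j|$, then $a_i b_j \geq a_j b_i$. -/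
open SimpleGraph

namespace Stmt17


/-- valid `P_n`-colorings as integer-valued functions -/
def Good (n : ℕ) {W : Type*} (G : SimpleGraph W) (f : W → ℤ) : Prop :=
  (∀ v, 1 ≤ f v ∧ f v ≤ (n : ℤ)) ∧ ∀ ⦃x y⦄, G.Adj x y → |f x - f y| = 1

noncomputable def cnt (n : ℕ) {W : Type*} (G : SimpleGraph W) (u : W) (k : ℤ) : ℕ :=
  Nat.card {f : W → ℤ // Good n G f ∧ f u = k}

def Sym (n : ℕ) (A : ℤ → ℕ) : Prop := ∀ k, A ((n : ℤ) + 1 - k) = A k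
def Supp (n : ℕ) (A : ℤ → ℕ) : Prop := ∀ k, ¬(1 ≤ k ∧ k ≤ (n : ℤ)) → A k = 0
def Corr (n : ℕ) (A B : ℤ → ℕ) : Prop := ∀ k l : ℤ, k % 2 = l % 2 →
  |((n : ℤ) + 1) / 2 - k| ≤ |((n : ℤ) + 1) / 2 - l| → A l * B k ≤ A k * B l
def step (n : ℕ) (A : ℤ → ℕ) (k : ℤ) : ℕ :=
  if 1 ≤ k ∧ k ≤ (n : ℤ) then A (k - 1) + A (k + 1) else 0
def ind (n : ℕ) (k : ℤ) : ℕ := if 1 ≤ k ∧ k ≤ (n : ℤ) then 1 else 0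

lemma sym_ind (n : ℕ) : Sym n (ind n) := by
  intro k; unfold ind; by_cases h : 1 ≤ k ∧ k ≤ (n:ℤ) <;>
    [rw [if_pos h, if_pos (by omega)]; rw [if_neg h, if_neg (by omega)]]

lemma supp_ind (n : ℕ) : Supp n (ind n) := fun k hk => if_neg hk

lemma supp_step (n : ℕ) (A : ℤ → ℕ) : Supp n (step n A) := fun k hk => if_neg hk

lemma sym_step (n : ℕ) {A : ℤ → ℕ} (hA : Sym n A) : Sym n (step n A) := by
  intro k; unfold step
  by_cases h : 1 ≤ k ∧ k ≤ (n:ℤ)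
  · rw [if_pos (by omega), if_pos h]
    have e1 : (n:ℤ) + 1 - k - 1 = (n:ℤ) + 1 - (k + 1) := by ring
    have e2 : (n:ℤ) + 1 - k + 1 = (n:ℤ) + 1 - (k - 1) := by ring
    rw [e1, e2, hA, hA, Nat.add_comm]
  · rw [if_neg (by omega), if_neg h]

lemma corr_self (n : ℕ) (A : ℤ → ℕ) : Corr n A A := fun k l _ _ => (Nat.mul_comm _ _).le

lemma abs_facts (c k l : ℤ) (hpar : k % 2 = l % 2) (hlt : |c - k| < |c - l|) :
    |c - (k - 1)| ≤ |c - (l - 1)| ∧ |c - (k - 1)| ≤ |c - (l + 1)| ∧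
      |c - (k + 1)| ≤ |c - (l - 1)| ∧ |c - (k + 1)| ≤ |c - (l + 1)| := by
  rcases abs_cases (c - k) with ⟨e1, _⟩ | ⟨e1, _⟩ <;>
  rcases abs_cases (c - l) with ⟨e2, _⟩ | ⟨e2, _⟩ <;>
  rcases abs_cases (c - (k - 1)) with ⟨e3, _⟩ | ⟨e3, _⟩ <;>
  rcases abs_cases (c - (l - 1)) with ⟨e4, _⟩ | ⟨e4, _⟩ <;>
  rcases abs_cases (c - (k + 1)) with ⟨e5, _⟩ | ⟨e5, _⟩ <;>
  rcases abs_cases (c - (l + 1)) with ⟨e6, _⟩ | ⟨e6, _⟩ <;>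
  omega

lemma inrange_of_closer {n : ℕ} (hn : Odd n) {k l : ℤ}
    (hcl : |((n : ℤ) + 1) / 2 - k| ≤ |((n : ℤ) + 1) / 2 - l|)
    (hl : 1 ≤ l ∧ l ≤ (n : ℤ)) : 1 ≤ k ∧ k ≤ (n : ℤ) := by
  obtain ⟨t, ht⟩ := hn
  have hc : ((n : ℤ) + 1) / 2 = (t : ℤ) + 1 := by omega
  rw [hc] at hcl
  rcases abs_cases ((t:ℤ) + 1 - k) with ⟨e1, _⟩ | ⟨e1, _⟩ <;>
  rcases abs_cases ((t:ℤ) + 1 - l) with ⟨e2, _⟩ | ⟨e2, _⟩ <;>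
  omega

lemma eq_cases_of_abs_eq {n : ℕ} (hn : Odd n) {k l : ℤ}
    (h : |((n : ℤ) + 1) / 2 - k| = |((n : ℤ) + 1) / 2 - l|) :
    k = l ∨ k = (n : ℤ) + 1 - l := by
  obtain ⟨t, ht⟩ := hn
  rcases abs_cases (((n:ℤ) + 1) / 2 - k) with ⟨e1, _⟩ | ⟨e1, _⟩ <;>
  rcases abs_cases (((n:ℤ) + 1) / 2 - l) with ⟨e2, _⟩ | ⟨e2, _⟩ <;>
  omega

lemma step_refl {n : ℕ} (hn : Odd n) {A : ℤ → ℕ} (hA : Sym n A) (l : ℤ)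
    (hl : 1 ≤ l ∧ l ≤ (n : ℤ)) : step n A ((n : ℤ) + 1 - l) = step n A l :=
  sym_step n hA l

lemma corr_step {n : ℕ} (hn : Odd n) {A B : ℤ → ℕ} (hA : Sym n A) (hB : Sym n B)
    (h : Corr n A B) : Corr n (step n A) (step n B) := by
  intro k l hpar hcl
  by_cases hl : 1 ≤ l ∧ l ≤ (n : ℤ)
  · have hk : 1 ≤ k ∧ k ≤ (n : ℤ) := inrange_of_closer hn hcl hl
    rcases eq_or_lt_of_le hcl with heq | hlt
    · rcases eq_cases_of_abs_eq hn heq with rfl | rfl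
      · exact le_refl _
      · rw [step_refl hn hA l hl, step_refl hn hB l hl, Nat.mul_comm]
    · obtain ⟨h1, h2, h3, h4⟩ := abs_facts _ k l hpar hlt
      have H1 := h (k - 1) (l - 1) (by omega) h1
      have H2 := h (k - 1) (l + 1) (by omega) h2
      have H3 := h (k + 1) (l - 1) (by omega) h3
      have H4 := h (k + 1) (l + 1) (by omega) h4
      unfold step
      rw [if_pos hk, if_pos hl, if_pos hk, if_pos hl]
      nlinarith [H1, H2, H3, H4]
  · have : step n A l = 0 := if_neg hl
    rw [this, Nat.zero_mul]
    exact Nat.zero_le _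

lemma corr_step_one {n : ℕ} (hn : Odd n) {A : ℤ → ℕ} (hA : Sym n A) (hsupp : Supp n A)
    (h : Corr n A (ind n)) : Corr n (step n A) (ind n) := by
  intro k l hpar hcl
  by_cases hl : 1 ≤ l ∧ l ≤ (n : ℤ)
  · have hk : 1 ≤ k ∧ k ≤ (n : ℤ) := inrange_of_closer hn hcl hl
    rw [ind, ind, if_pos hk, if_pos hl, Nat.mul_one, Nat.mul_one]
    rcases eq_or_lt_of_le hcl with heq | hlt
    · rcases eq_cases_of_abs_eq hn heq with rfl | rfl
      · exact le_refl _
      · rw [step_refl hn hA l hl]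
    · obtain ⟨h1, h2, h3, h4⟩ := abs_facts _ k l hpar hlt
      have key : ∀ p q : ℤ, p % 2 = q % 2 →
          |((n : ℤ) + 1) / 2 - p| ≤ |((n : ℤ) + 1) / 2 - q| → A q ≤ A p := by
        intro p q hpq hclo
        by_cases hp : 1 ≤ p ∧ p ≤ (n : ℤ)
        · have h0 := h p q hpq hclo
          have hip : ind n p = 1 := if_pos hp
          rw [hip, Nat.mul_one] at h0
          have hiq : ind n q ≤ 1 := by unfold ind; split <;> omega
          calc A q ≤ A p * ind n q := h0
            _ ≤ A p * 1 := Nat.mul_le_mul_left _ hiq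
            _ = A p := Nat.mul_one _
        · have hq : ¬(1 ≤ q ∧ q ≤ (n : ℤ)) := fun hq => hp (inrange_of_closer hn hclo hq)
          rw [hsupp q hq]
          exact Nat.zero_le _
      unfold step
      rw [if_pos hk, if_pos hl]
      exact Nat.add_le_add (key _ _ (by omega) h1) (key _ _ (by omega) h4)
  · have : step n A l = 0 := if_neg hl
    rw [this, Nat.zero_mul]
    exact Nat.zero_le _


instance goodFinite (n : ℕ) {W : Type*} [Finite W] (G : SimpleGraph W) (u : W) (k : ℤ) :
    Finite {f : W → ℤ // Good n G f ∧ f u = k} := by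
  have : Finite (W → ↥(Set.Icc (1:ℤ) (n:ℤ))) := by
    have := (Set.finite_Icc (1:ℤ) (n:ℤ)).to_subtype
    infer_instance
  refine Finite.of_injective (fun f => fun v => (⟨f.1 v, Set.mem_Icc.2 (f.2.1.1 v)⟩ :
    ↥(Set.Icc (1:ℤ) (n:ℤ)))) ?_
  intro f g h
  ext v
  exact congrArg Subtype.val (congrFun h v)

lemma cnt_supp (n : ℕ) {W : Type*} (G : SimpleGraph W) (u : W) {k : ℤ}
    (hk : ¬(1 ≤ k ∧ k ≤ (n : ℤ))) : cnt n G u k = 0 := by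
  have : IsEmpty {f : W → ℤ // Good n G f ∧ f u = k} :=
    ⟨fun f => hk (f.2.2 ▸ f.2.1.1 u)⟩
  exact Nat.card_of_isEmpty

lemma good_reflect {n : ℕ} {W : Type*} {G : SimpleGraph W} {f : W → ℤ} (hf : Good n G f) :
    Good n G (fun v => (n : ℤ) + 1 - f v) := by
  refine ⟨fun v => ?_, fun x y ha => ?_⟩
  · have := hf.1 v; dsimp only; constructor <;> omega
  · have := hf.2 ha; dsimp only
    rw [show (n:ℤ) + 1 - f x - ((n:ℤ) + 1 - f y) = -(f x - f y) by ring, abs_neg]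
    exact this

lemma cnt_sym (n : ℕ) {W : Type*} (G : SimpleGraph W) (u : W) (k : ℤ) :
    cnt n G u ((n : ℤ) + 1 - k) = cnt n G u k := by
  refine Nat.card_congr ⟨fun f => ⟨fun v => (n : ℤ) + 1 - f.1 v, good_reflect f.2.1,
      by show (n:ℤ) + 1 - f.1 u = k; rw [f.2.2]; ring⟩,
    fun f => ⟨fun v => (n : ℤ) + 1 - f.1 v, good_reflect f.2.1,
      by show (n:ℤ) + 1 - f.1 u = (n:ℤ) + 1 - k; rw [f.2.2]⟩, ?_, ?_⟩
  · intro f; apply Subtype.ext; funext v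
    show (n:ℤ) + 1 - ((n:ℤ) + 1 - f.1 v) = f.1 v; ring
  · intro f; apply Subtype.ext; funext v
    show (n:ℤ) + 1 - ((n:ℤ) + 1 - f.1 v) = f.1 v; ring

lemma cnt_single (n : ℕ) {W : Type*} [Subsingleton W] (G : SimpleGraph W) (u : W) (k : ℤ)
    (hk : 1 ≤ k ∧ k ≤ (n : ℤ)) : cnt n G u k = 1 := by
  have : Unique {f : W → ℤ // Good n G f ∧ f u = k} := by
    refine ⟨⟨⟨fun _ => k, ⟨fun v => hk, fun x y ha => absurd (Subsingleton.elim x y) (G.ne_of_adj ha)⟩, rfl⟩⟩, ?_⟩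
    rintro ⟨f, hf, hfu⟩
    apply Subtype.ext; funext v
    show f v = k
    rw [Subsingleton.elim v u, hfu]
  exact Nat.card_unique

lemma cnt_iso (n : ℕ) {W X : Type*} {G : SimpleGraph W} {H : SimpleGraph X}
    (e : G ≃g H) (u : W) (k : ℤ) : cnt n G u k = cnt n H (e u) k := by
  refine Nat.card_congr ⟨fun f => ⟨fun x => f.1 (e.symm x), ?_, by
      show f.1 (e.symm (e u)) = k
      rw [RelIso.symm_apply_apply, f.2.2]⟩,
    fun g => ⟨fun w => g.1 (e w), ?_, by show g.1 (e u) = k; exact g.2.2⟩, ?_, ?_⟩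
  · obtain ⟨f, ⟨hr, he⟩, hk⟩ := f
    refine ⟨fun v => hr _, fun x y ha => he ?_⟩
    exact e.symm.map_rel_iff.2 ha
  · obtain ⟨g, ⟨hr, hadj⟩, hk⟩ := g
    refine ⟨fun v => hr _, fun x y ha => hadj ?_⟩
    exact e.map_rel_iff.2 ha
  · intro f; apply Subtype.ext; funext v
    show f.1 (e.symm (e v)) = f.1 v
    rw [RelIso.symm_apply_apply]
  · intro g; apply Subtype.ext; funext x
    show g.1 (e (e.symm x)) = g.1 x
    rw [RelIso.apply_symm_apply]

lemma cnt_split (n : ℕ) {W : Type*} (G : SimpleGraph W) (u : W) (V₁ V₂ : Set W)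
    (h1 : u ∈ V₁) (h2 : u ∈ V₂) (hunion : ∀ x, x ∈ V₁ ∨ x ∈ V₂)
    (hint : ∀ x, x ∈ V₁ → x ∈ V₂ → x = u)
    (hedge : ∀ ⦃x y⦄, G.Adj x y → (x ∈ V₁ ∧ y ∈ V₁) ∨ (x ∈ V₂ ∧ y ∈ V₂))
    (k : ℤ) : cnt n G u k =
      cnt n (G.induce V₁) ⟨u, h1⟩ k * cnt n (G.induce V₂) ⟨u, h2⟩ k := by
  classical
  unfold cnt
  rw [← Nat.card_prod]
  set T1 := {f : ↥V₁ → ℤ // Good n (G.induce V₁) f ∧ f ⟨u, h1⟩ = k}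
  set T2 := {f : ↥V₂ → ℤ // Good n (G.induce V₂) f ∧ f ⟨u, h2⟩ = k}
  let glue : T1 → T2 → W → ℤ :=
    fun f₁ f₂ x => if hx : x ∈ V₁ then f₁.1 ⟨x, hx⟩ else f₂.1 ⟨x, (hunion x).resolve_left hx⟩
  have glue_eq1 : ∀ f₁ f₂ x (hx : x ∈ V₁), glue f₁ f₂ x = f₁.1 ⟨x, hx⟩ :=
    fun f₁ f₂ x hx => dif_pos hx
  have glue_eq2 : ∀ f₁ f₂ x (hx : x ∈ V₂), glue f₁ f₂ x = f₂.1 ⟨x, hx⟩ := by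
    intro f₁ f₂ x hx
    by_cases hx1 : x ∈ V₁
    · rw [glue_eq1 _ _ _ hx1]
      have hxu : x = u := hint x hx1 hx
      subst hxu
      exact f₁.2.2.trans f₂.2.2.symm
    · exact dif_neg hx1
  have hgood : ∀ f₁ f₂, Good n G (glue f₁ f₂) ∧ glue f₁ f₂ u = k := by
    intro f₁ f₂
    refine ⟨⟨fun v => ?_, fun x y ha => ?_⟩, by rw [glue_eq1 _ _ _ h1]; exact f₁.2.2⟩
    · rcases hunion v with hv | hv
      · rw [glue_eq1 _ _ _ hv]; exact f₁.2.1.1 _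
      · rw [glue_eq2 _ _ _ hv]; exact f₂.2.1.1 _
    · rcases hedge ha with ⟨hx, hy⟩ | ⟨hx, hy⟩
      · rw [glue_eq1 _ _ _ hx, glue_eq1 _ _ _ hy]
        exact f₁.2.1.2 ha
      · rw [glue_eq2 _ _ _ hx, glue_eq2 _ _ _ hy]
        exact f₂.2.1.2 ha
  refine Nat.card_congr ⟨fun f =>
      (⟨fun x => f.1 x.1, ⟨fun v => f.2.1.1 _, fun x y ha => f.2.1.2 ha⟩, f.2.2⟩,
       ⟨fun x => f.1 x.1, ⟨fun v => f.2.1.1 _, fun x y ha => f.2.1.2 ha⟩, f.2.2⟩),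
    fun p => ⟨glue p.1 p.2, (hgood p.1 p.2).1, (hgood p.1 p.2).2⟩, ?_, ?_⟩
  · intro f; apply Subtype.ext; funext x
    by_cases hx : x ∈ V₁
    · exact glue_eq1 _ _ x hx
    · exact glue_eq2 _ _ x ((hunion x).resolve_left hx)
  · intro p
    apply Prod.ext
    · apply Subtype.ext; funext x
      exact glue_eq1 p.1 p.2 x.1 x.2
    · apply Subtype.ext; funext x
      exact glue_eq2 p.1 p.2 x.1 x.2

lemma cnt_leaf (n : ℕ) {W : Type*} [Finite W] (G : SimpleGraph W) {u c : W} (hadj : G.Adj u c)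
    (huniq : ∀ y, G.Adj u y → y = c) (k : ℤ) :
    cnt n G u k = if 1 ≤ k ∧ k ≤ (n : ℤ) then
      cnt n (G.induce {x | x ≠ u}) ⟨c, hadj.ne'⟩ (k - 1) +
        cnt n (G.induce {x | x ≠ u}) ⟨c, hadj.ne'⟩ (k + 1) else 0 := by
  classical
  by_cases hk : 1 ≤ k ∧ k ≤ (n : ℤ)
  swap
  · rw [if_neg hk]; exact cnt_supp n G u hk
  rw [if_pos hk]
  set G' := G.induce {x | x ≠ u} with hG'
  set T := {f : W → ℤ // Good n G f ∧ f u = k} with hT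
  have key : ∀ f : T, f.1 c = k - 1 ∨ f.1 c = k + 1 := by
    intro f
    have h := f.2.1.2 hadj
    rw [f.2.2] at h
    rcases abs_cases (k - f.1 c) with ⟨e, _⟩ | ⟨e, _⟩ <;> omega
  have helper : ∀ m : ℤ, |k - m| = 1 →
      {f : T // f.1 c = m} ≃ {g : ↥{x | x ≠ u} → ℤ // Good n G' g ∧ g ⟨c, hadj.ne'⟩ = m} := by
    intro m hm
    refine ⟨fun f => ⟨fun x => f.1.1 x.1,
        ⟨fun v => f.1.2.1.1 _, fun x y ha => f.1.2.1.2 ha⟩, f.2⟩,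
      fun g => ⟨⟨fun x => if hx : x = u then k else g.1 ⟨x, hx⟩, ⟨fun v => ?_, fun x y ha => ?_⟩,
        dif_pos rfl⟩, ?_⟩, ?_, ?_⟩
    · dsimp only
      by_cases hv : v = u
      · rw [dif_pos hv]; exact hk
      · rw [dif_neg hv]; exact g.2.1.1 _
    · dsimp only
      by_cases hx : x = u
      · subst hx
        have hyc : y = c := huniq y ha
        subst hyc
        rw [dif_pos rfl, dif_neg hadj.ne', g.2.2]
        rcases abs_cases (k - m) with ⟨e, _⟩ | ⟨e, _⟩ <;> omega
      · by_cases hy : y = u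
        · subst hy
          have hxc : x = c := huniq x ha.symm
          subst hxc
          rw [dif_pos rfl, dif_neg hadj.ne', g.2.2, abs_sub_comm]
          rcases abs_cases (k - m) with ⟨e, _⟩ | ⟨e, _⟩ <;> omega
        · rw [dif_neg hx, dif_neg hy]
          exact g.2.1.2 (show G'.Adj ⟨x, hx⟩ ⟨y, hy⟩ from ha)
    · show (if hx : c = u then k else g.1 ⟨c, hx⟩) = m
      rw [dif_neg hadj.ne']; exact g.2.2
    · intro f
      apply Subtype.ext; apply Subtype.ext; funext x
      dsimp only
      by_cases hx : x = u
      · subst hx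
        rw [dif_pos rfl, f.1.2.2]
      · rw [dif_neg hx]
    · intro g
      apply Subtype.ext; funext x
      show (if hx : x.1 = u then k else g.1 ⟨x.1, hx⟩) = g.1 x
      rw [dif_neg x.2]
  have e2' : {f : T // ¬(f.1 c = k - 1)} ≃ {f : T // f.1 c = k + 1} :=
    Equiv.subtypeEquivRight (by
      intro f
      have := key f
      constructor
      · intro h; tauto
      · intro h h'; omega)
  calc Nat.card T = Nat.card ({f : T // f.1 c = k - 1} ⊕ {f : T // ¬(f.1 c = k - 1)}) :=
        Nat.card_congr (Equiv.sumCompl _).symm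
    _ = _ := by
        rw [Nat.card_sum]
        congr 1
        · exact Nat.card_congr (helper (k - 1) (by simp))
        · exact Nat.card_congr (e2'.trans (helper (k + 1) (by
            rw [show k - (k+1) = -1 by ring]; simp)))


lemma walk_to_induce {W : Type*} {G : SimpleGraph W} {S : Set W} {x y : W} (p : G.Walk x y) :
    (∀ z ∈ p.support, z ∈ S) → ∀ (hx : x ∈ S) (hy : y ∈ S),
      (G.induce S).Reachable ⟨x, hx⟩ ⟨y, hy⟩ := by
  induction p with
  | nil => intro _ hx hy; exact Reachable.refl _
  | @cons a b c h q ih =>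
    intro hsup hx hy
    have hb : b ∈ S := hsup b (by simp)
    exact ((show (G.induce S).Adj ⟨a, hx⟩ ⟨b, hb⟩ from h).reachable).trans
      (ih (fun z hz => hsup z (by simp [hz])) hb hy)

lemma support_subset_of_closed {W : Type*} {G : SimpleGraph W} {S : Set W} :
    ∀ {x r : W} (p : G.Walk x r), (∀ a b, G.Adj a b → a ∈ S → a ≠ r → b ∈ S) →
      p.IsPath → x ∈ S → ∀ z ∈ p.support, z ∈ S := by
  intro x r p
  induction p with
  | nil => intro _ _ hx z hz; simp at hz; subst hz; exact hx
  | @cons a b c h q ih =>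
    intro hstep hp ha z hz
    have hp' := (Walk.cons_isPath_iff h q).1 hp
    have har : a ≠ c := by
      intro hha; subst hha
      exact hp'.2 q.end_mem_support
    have hb : b ∈ S := hstep a b h ha har
    simp only [Walk.support_cons, List.mem_cons] at hz
    rcases hz with rfl | hz
    · exact ha
    · exact ih hstep hp'.1 hb z hz

lemma isAcyclic_induce {W : Type*} {G : SimpleGraph W} (hG : G.IsAcyclic) (S : Set W) :
    (G.induce S).IsAcyclic := by
  intro v p hp
  let hom : G.induce S →g G := ⟨Subtype.val, fun {a b} h => h⟩
  exact hG (p.map hom) (hp.map Subtype.val_injective)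

lemma isTree_of_iso {W X : Type*} {G : SimpleGraph W} {H : SimpleGraph X} (e : G ≃g H)
    (hG : G.IsTree) : H.IsTree := by
  refine ⟨e.connected_iff.1 hG.isConnected, ?_⟩
  intro v p hp
  exact hG.IsAcyclic (p.map e.symm.toHom) (hp.map e.symm.toEquiv.injective)

def induceCongr {W : Type*} (G : SimpleGraph W) {A B : Set W} (h : ∀ x, x ∈ A ↔ x ∈ B) :
    G.induce A ≃g G.induce B :=
  ⟨⟨fun x => ⟨x.1, (h _).1 x.2⟩, fun x => ⟨x.1, (h _).2 x.2⟩,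
    fun x => Subtype.ext rfl, fun x => Subtype.ext rfl⟩, Iff.rfl⟩

def induceComm {W : Type*} (G : SimpleGraph W) (A B : Set W) :
    (G.induce A).induce {x : ↥A | ↑x ∈ B} ≃g (G.induce B).induce {x : ↥B | ↑x ∈ A} :=
  ⟨⟨fun x => ⟨⟨x.1.1, x.2⟩, x.1.2⟩, fun x => ⟨⟨x.1.1, x.2⟩, x.1.2⟩,
    fun x => Subtype.ext (Subtype.ext rfl), fun x => Subtype.ext (Subtype.ext rfl)⟩, Iff.rfl⟩

lemma connected_piece {W : Type*} {G : SimpleGraph W} (hconn : G.Connected) {r : W} {S : Set W}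
    (hr : r ∈ S) (hstep : ∀ a b, G.Adj a b → a ∈ S → a ≠ r → b ∈ S) :
    (G.induce S).Connected := by
  classical
  have reach : ∀ z : ↥S, (G.induce S).Reachable z ⟨r, hr⟩ := by
    intro z
    obtain ⟨w⟩ := hconn.preconnected z.1 r
    have hsup := support_subset_of_closed (w.toPath : G.Walk z.1 r) hstep w.toPath.2 z.2
    exact walk_to_induce _ hsup z.2 hr
  haveI : Nonempty ↥S := ⟨⟨r, hr⟩⟩
  exact ⟨fun x y => (reach x).trans (reach y).symm⟩

lemma isTree_delete_leaf {W : Type*} {G : SimpleGraph W} (hG : G.IsTree) {u c : W}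
    (hadj : G.Adj u c) (huniq : ∀ y, G.Adj u y → y = c) :
    (G.induce {x | x ≠ u}).IsTree := by
  refine ⟨connected_piece hG.isConnected (show c ≠ u from hadj.ne') ?_,
    isAcyclic_induce hG.IsAcyclic _⟩
  intro a b hab ha hac hb
  subst hb
  exact hac (huniq a hab.symm)

lemma single_isTree {X : Type*} [Subsingleton X] [Nonempty X] (H : SimpleGraph X) : H.IsTree := by
  refine ⟨⟨fun x y => ?_⟩, ?_⟩
  · rw [Subsingleton.elim x y]
  · intro v p hp
    cases p with
    | nil => exact hp.ne_nil rfl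
    | cons h q => exact H.ne_of_adj h (Subsingleton.elim _ _)

lemma exists_adj {W : Type*} {G : SimpleGraph W} (hG : G.Connected) {u v : W} (hne : v ≠ u) :
    ∃ c, G.Adj u c := by
  obtain ⟨w⟩ := hG.preconnected u v
  cases w with
  | nil => exact absurd rfl hne
  | cons h q => exact ⟨_, h⟩

lemma branches_disjoint {W : Type*} {G : SimpleGraph W} (hG : G.IsTree) {u c₁ c₂ : W}
    (h1 : G.Adj u c₁) (h2 : G.Adj u c₂) (hne : c₁ ≠ c₂) :
    ¬ (G.induce {x | x ≠ u}).Reachable ⟨c₁, h1.ne'⟩ ⟨c₂, h2.ne'⟩ := by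
  classical
  intro hr
  obtain ⟨w⟩ := hr
  let hom : G.induce {x | x ≠ u} →g G := ⟨Subtype.val, fun {a b} h => h⟩
  have hinj : Function.Injective hom := Subtype.val_injective
  let q := Walk.map hom w.toPath.1
  have hq : q.IsPath := Walk.map_isPath_of_injective hinj w.toPath.2
  have hu : u ∉ q.support := by
    intro hu
    rw [Walk.support_map] at hu
    obtain ⟨z, _, hz⟩ := List.mem_map.1 hu
    exact z.2 hz
  have hP2 : (Walk.cons h1 q).IsPath := hq.cons hu
  have hP1 : (Walk.cons h2 Walk.nil).IsPath := by simp [Walk.cons_isPath_iff]; exact h2.ne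
  obtain ⟨p0, _, hup⟩ := hG.existsUnique_path u c₂
  have := (hup _ hP1).trans (hup _ hP2).symm
  have hlen := congrArg Walk.length this
  simp only [Walk.length_cons, Walk.length_nil] at hlen
  have : q.length = 0 := by omega
  exact hne (Walk.eq_of_length_eq_zero this)

lemma card_lt_of_not_mem {W : Type*} [Finite W] {S : Set W} {w : W} (hw : w ∉ S) :
    Nat.card ↥S < Nat.card W := by
  classical
  have := Fintype.ofFinite W
  rw [Nat.card_eq_fintype_card, Nat.card_eq_fintype_card]
  exact Fintype.card_subtype_lt (x := w) hw



lemma corr_congr {n : ℕ} {A A' B B' : ℤ → ℕ} (hA : ∀ k, A k = A' k) (hB : ∀ k, B k = B' k)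
    (h : Corr n A B) : Corr n A' B' := fun k l h1 h2 => by
  rw [← hA, ← hA, ← hB, ← hB]; exact h k l h1 h2

lemma main (n : ℕ) (hn : Odd n) : ∀ (m : ℕ) (W : Type u) [Finite W] (G : SimpleGraph W),
    Nat.card W ≤ m → G.IsTree → ∀ (u : W) (s : Set W) (hu : u ∈ s),
    (G.induce s).IsTree → Corr n (cnt n G u) (cnt n (G.induce s) ⟨u, hu⟩) := by
  intro m
  induction m with
  | zero =>
    intro W _ G hcard hG u s hu hs
    haveI := hG.isConnected.nonempty
    have := Nat.card_pos (α := W)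
    omega
  | succ m ih =>
    intro W _W G hcard hG u s hu hs
    by_cases hone : ∀ v : W, v = u
    · haveI : Subsingleton W := ⟨fun a b => (hone a).trans (hone b).symm⟩
      have hA : ∀ k, cnt n G u k = ind n k := by
        intro k; unfold ind; split
        · exact cnt_single n G u k ‹_›
        · exact cnt_supp n G u ‹_›
      have hB : ∀ k, cnt n (G.induce s) ⟨u, hu⟩ k = ind n k := by
        intro k; unfold ind; split
        · exact cnt_single n _ _ k ‹_›
        · exact cnt_supp n _ _ ‹_›
      exact corr_congr (fun k => (hA k).symm) (fun k => (hB k).symm) (corr_self n (ind n))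
    · push_neg at hone
      obtain ⟨v, hv⟩ := hone
      obtain ⟨c, hadj⟩ := exists_adj hG.isConnected hv
      have hcardS : Nat.card ↥{x : W | x ≠ u} ≤ m := by
        have := card_lt_of_not_mem (S := {x : W | x ≠ u}) (w := u) (by simp)
        omega
      by_cases huniq : ∀ y, G.Adj u y → y = c
      · -- u is a leaf with unique neighbour c
        have hc : c ∈ {x : W | x ≠ u} := hadj.ne'
        have hGS : (G.induce {x : W | x ≠ u}).IsTree := isTree_delete_leaf hG hadj huniq
        have symA' : Sym n (cnt n (G.induce {x : W | x ≠ u}) ⟨c, hc⟩) :=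
          fun k => cnt_sym n _ _ k
        have supA' : Supp n (cnt n (G.induce {x : W | x ≠ u}) ⟨c, hc⟩) :=
          fun k hk => cnt_supp n _ _ hk
        have hAstep : ∀ k, cnt n G u k =
            step n (cnt n (G.induce {x : W | x ≠ u}) ⟨c, hc⟩) k :=
          fun k => cnt_leaf n G hadj huniq k
        by_cases hsu : ∀ x ∈ s, x = u
        · haveI hss : Subsingleton ↥s :=
            ⟨fun a b => Subtype.ext ((hsu _ a.2).trans (hsu _ b.2).symm)⟩
          have hB : ∀ k, cnt n (G.induce s) ⟨u, hu⟩ k = ind n k := by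
            intro k; unfold ind; split
            · exact cnt_single n _ _ k ‹_›
            · exact cnt_supp n _ _ ‹_›
          have h0 : (⟨c, hc⟩ : ↥{x : W | x ≠ u}) ∈ {z : ↥{x : W | x ≠ u} | z = ⟨c, hc⟩} := rfl
          haveI : Subsingleton ↥{z : ↥{x : W | x ≠ u} | z = (⟨c, hc⟩ : ↥{x : W | x ≠ u})} :=
            ⟨fun a b => Subtype.ext (a.2.trans b.2.symm)⟩
          haveI : Nonempty ↥{z : ↥{x : W | x ≠ u} | z = (⟨c, hc⟩ : ↥{x : W | x ≠ u})} := ⟨⟨_, h0⟩⟩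
          have htree0 : ((G.induce {x : W | x ≠ u}).induce
              {z : ↥{x : W | x ≠ u} | z = ⟨c, hc⟩}).IsTree := single_isTree _
          have hcorr := ih ↥{x : W | x ≠ u} (G.induce {x : W | x ≠ u}) hcardS hGS ⟨c, hc⟩ _ h0 htree0
          have hB0 : ∀ k, cnt n ((G.induce {x : W | x ≠ u}).induce
              {z : ↥{x : W | x ≠ u} | z = ⟨c, hc⟩}) ⟨⟨c, hc⟩, h0⟩ k = ind n k := by
            intro k; unfold ind; split
            · exact cnt_single n _ _ k ‹_›
            · exact cnt_supp n _ _ ‹_›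
          have hcorr' : Corr n (cnt n (G.induce {x : W | x ≠ u}) ⟨c, hc⟩) (ind n) :=
            corr_congr (fun _ => rfl) hB0 hcorr
          exact corr_congr (fun k => (hAstep k).symm) (fun k => (hB k).symm)
            (corr_step_one hn symA' supA' hcorr')
        · push_neg at hsu
          obtain ⟨x, hxs, hxu⟩ := hsu
          obtain ⟨y, hy⟩ := exists_adj hs.isConnected
            (show (⟨x, hxs⟩ : ↥s) ≠ ⟨u, hu⟩ from fun h => hxu (congrArg Subtype.val h))
          have hycs : (y : W) = c := huniq y.1 hy
          have hcs : c ∈ s := hycs ▸ y.2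
          have hadj_s : (G.induce s).Adj ⟨u, hu⟩ ⟨c, hcs⟩ := hadj
          have huniq_s : ∀ z, (G.induce s).Adj ⟨u, hu⟩ z → z = ⟨c, hcs⟩ :=
            fun z hz => Subtype.ext (huniq z.1 hz)
          have hcs' : (⟨c, hc⟩ : ↥{x : W | x ≠ u}) ∈ {z : ↥{x : W | x ≠ u} | z.1 ∈ s} := hcs
          let iso := (induceCongr (G.induce s) (A := {z : ↥s | z ≠ ⟨u, hu⟩})
              (B := {z : ↥s | z.1 ∈ {x : W | x ≠ u}})
              (fun z => ⟨fun h h' => h (Subtype.ext h'), fun h h' => h (congrArg Subtype.val h')⟩)).trans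
            (induceComm G s {x : W | x ≠ u})
          have htree1 : ((G.induce s).induce {z : ↥s | z ≠ ⟨u, hu⟩}).IsTree :=
            isTree_delete_leaf hs hadj_s huniq_s
          have htree' : ((G.induce {x : W | x ≠ u}).induce
              {z : ↥{x : W | x ≠ u} | z.1 ∈ s}).IsTree := isTree_of_iso iso htree1
          have hcorr := ih ↥{x : W | x ≠ u} (G.induce {x : W | x ≠ u}) hcardS hGS ⟨c, hc⟩
            {z : ↥{x : W | x ≠ u} | z.1 ∈ s} hcs' htree'
          have symB' : Sym n (cnt n ((G.induce {x : W | x ≠ u}).induce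
              {z : ↥{x : W | x ≠ u} | z.1 ∈ s}) ⟨⟨c, hc⟩, hcs'⟩) := fun k => cnt_sym n _ _ k
          have hiso_root : iso ⟨⟨c, hcs⟩, hadj_s.ne'⟩ = ⟨⟨c, hc⟩, hcs'⟩ := by
            apply Subtype.ext; apply Subtype.ext
            show (((⟨⟨c, hcs⟩, hadj_s.ne'⟩ : ↥{z : ↥s | z ≠ ⟨u, hu⟩}) : ↥s) : W) = c
            rfl
          have hBeq : ∀ k', cnt n ((G.induce s).induce {z : ↥s | z ≠ ⟨u, hu⟩})
              ⟨⟨c, hcs⟩, hadj_s.ne'⟩ k' = cnt n ((G.induce {x : W | x ≠ u}).induce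
              {z : ↥{x : W | x ≠ u} | z.1 ∈ s}) ⟨⟨c, hc⟩, hcs'⟩ k' := by
            intro k'
            rw [cnt_iso n iso _ k', hiso_root]
          have hBstep : ∀ k, cnt n (G.induce s) ⟨u, hu⟩ k =
              step n (cnt n ((G.induce {x : W | x ≠ u}).induce
                {z : ↥{x : W | x ≠ u} | z.1 ∈ s}) ⟨⟨c, hc⟩, hcs'⟩) k := by
            intro k
            rw [cnt_leaf n (G.induce s) hadj_s huniq_s k]
            unfold step
            rw [hBeq (k - 1), hBeq (k + 1)]
          exact corr_congr (fun k => (hAstep k).symm) (fun k => (hBstep k).symm)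
            (corr_step hn symA' symB' hcorr)
      · -- u has at least two neighbours: split
        push_neg at huniq
        obtain ⟨c₂, hadj₂, hc₂⟩ := huniq
        have hc : c ∈ {x : W | x ≠ u} := hadj.ne'
        have hc₂S : c₂ ∈ {x : W | x ≠ u} := hadj₂.ne'
        set G₀ := G.induce {x : W | x ≠ u} with hG₀
        set V₁ : Set W := {x | x = u ∨ ∃ h : x ≠ u, G₀.Reachable ⟨c, hc⟩ ⟨x, h⟩} with hV₁
        set V₂ : Set W := {x | x = u ∨ ∀ h : x ≠ u, ¬ G₀.Reachable ⟨c, hc⟩ ⟨x, h⟩} with hV₂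
        have hu1 : u ∈ V₁ := Or.inl rfl
        have hu2 : u ∈ V₂ := Or.inl rfl
        have hunion : ∀ x, x ∈ V₁ ∨ x ∈ V₂ := by
          intro x
          by_cases hx : x = u
          · exact Or.inl (Or.inl hx)
          · by_cases hr : G₀.Reachable ⟨c, hc⟩ ⟨x, hx⟩
            · exact Or.inl (Or.inr ⟨hx, hr⟩)
            · exact Or.inr (Or.inr (fun h => hr))
        have hint : ∀ x, x ∈ V₁ → x ∈ V₂ → x = u := by
          intro x h1 h2
          rcases h1 with h1 | ⟨hx, hr⟩
          · exact h1
          · rcases h2 with h2 | h2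
            · exact h2
            · exact absurd hr (h2 hx)
        have hedge : ∀ ⦃x y⦄, G.Adj x y → (x ∈ V₁ ∧ y ∈ V₁) ∨ (x ∈ V₂ ∧ y ∈ V₂) := by
          intro x y hxy
          by_cases hx : x = u
          · subst hx
            rcases hunion y with hy | hy
            · exact Or.inl ⟨hu1, hy⟩
            · exact Or.inr ⟨hu2, hy⟩
          · by_cases hy : y = u
            · subst hy
              rcases hunion x with hx' | hx'
              · exact Or.inl ⟨hx', hu1⟩
              · exact Or.inr ⟨hx', hu2⟩
            · have hadj₀ : G₀.Adj ⟨x, hx⟩ ⟨y, hy⟩ := hxy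
              by_cases hr : G₀.Reachable ⟨c, hc⟩ ⟨x, hx⟩
              · exact Or.inl ⟨Or.inr ⟨hx, hr⟩, Or.inr ⟨hy, hr.trans hadj₀.reachable⟩⟩
              · exact Or.inr ⟨Or.inr fun h => hr,
                  Or.inr fun h hr' => hr (hr'.trans hadj₀.reachable.symm)⟩
        have hstep1 : ∀ a b, G.Adj a b → a ∈ V₁ → a ≠ u → b ∈ V₁ := by
          intro a b hab ha hau
          rcases hedge hab with ⟨_, hb⟩ | ⟨ha', _⟩
          · exact hb
          · exact absurd (hint a ha ha') hau
        have hstep2 : ∀ a b, G.Adj a b → a ∈ V₂ → a ≠ u → b ∈ V₂ := by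
          intro a b hab ha hau
          rcases hedge hab with ⟨ha', _⟩ | ⟨_, hb⟩
          · exact absurd (hint a ha' ha) hau
          · exact hb
        have htree1 : (G.induce V₁).IsTree :=
          ⟨connected_piece hG.isConnected hu1 hstep1, isAcyclic_induce hG.IsAcyclic _⟩
        have htree2 : (G.induce V₂).IsTree :=
          ⟨connected_piece hG.isConnected hu2 hstep2, isAcyclic_induce hG.IsAcyclic _⟩
        have hc2notV₁ : c₂ ∉ V₁ := by
          rintro (h | ⟨h, hr⟩)
          · exact hadj₂.ne' h
          · exact branches_disjoint hG hadj hadj₂ (fun hcc => hc₂ hcc.symm) hr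
        have hcnotV₂ : c ∉ V₂ := by
          rintro (h | h)
          · exact hadj.ne' h
          · exact h hadj.ne' (Reachable.refl _)
        have hcard1 : Nat.card ↥V₁ ≤ m := by
          have := card_lt_of_not_mem hc2notV₁; omega
        have hcard2 : Nat.card ↥V₂ ≤ m := by
          have := card_lt_of_not_mem hcnotV₂; omega
        have hu1' : (⟨u, hu⟩ : ↥s) ∈ {z : ↥s | z.1 ∈ V₁} := hu1
        have hu2' : (⟨u, hu⟩ : ↥s) ∈ {z : ↥s | z.1 ∈ V₂} := hu2
        have hstep1s : ∀ a b : ↥s, (G.induce s).Adj a b → a ∈ {z : ↥s | z.1 ∈ V₁} →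
            a ≠ ⟨u, hu⟩ → b ∈ {z : ↥s | z.1 ∈ V₁} :=
          fun a b hab ha hau => hstep1 a.1 b.1 hab ha (fun h => hau (Subtype.ext h))
        have hstep2s : ∀ a b : ↥s, (G.induce s).Adj a b → a ∈ {z : ↥s | z.1 ∈ V₂} →
            a ≠ ⟨u, hu⟩ → b ∈ {z : ↥s | z.1 ∈ V₂} :=
          fun a b hab ha hau => hstep2 a.1 b.1 hab ha (fun h => hau (Subtype.ext h))
        have htree1s : ((G.induce s).induce {z : ↥s | z.1 ∈ V₁}).IsTree :=
          ⟨connected_piece hs.isConnected hu1' hstep1s, isAcyclic_induce hs.IsAcyclic _⟩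
        have htree2s : ((G.induce s).induce {z : ↥s | z.1 ∈ V₂}).IsTree :=
          ⟨connected_piece hs.isConnected hu2' hstep2s, isAcyclic_induce hs.IsAcyclic _⟩
        have htree1t : ((G.induce V₁).induce {z : ↥V₁ | z.1 ∈ s}).IsTree :=
          isTree_of_iso (induceComm G s V₁) htree1s
        have htree2t : ((G.induce V₂).induce {z : ↥V₂ | z.1 ∈ s}).IsTree :=
          isTree_of_iso (induceComm G s V₂) htree2s
        have hcorr1 := ih ↥V₁ (G.induce V₁) hcard1 htree1 ⟨u, hu1⟩ {z : ↥V₁ | z.1 ∈ s} hu htree1t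
        have hcorr2 := ih ↥V₂ (G.induce V₂) hcard2 htree2 ⟨u, hu2⟩ {z : ↥V₂ | z.1 ∈ s} hu htree2t
        have hAsplit : ∀ k, cnt n G u k =
            cnt n (G.induce V₁) ⟨u, hu1⟩ k * cnt n (G.induce V₂) ⟨u, hu2⟩ k :=
          fun k => cnt_split n G u V₁ V₂ hu1 hu2 hunion hint hedge k
        have hedge_s : ∀ ⦃x y : ↥s⦄, (G.induce s).Adj x y →
            (x ∈ {z : ↥s | z.1 ∈ V₁} ∧ y ∈ {z : ↥s | z.1 ∈ V₁}) ∨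
            (x ∈ {z : ↥s | z.1 ∈ V₂} ∧ y ∈ {z : ↥s | z.1 ∈ V₂}) := by
          intro x y hxy
          rcases hedge hxy with ⟨h1, h2⟩ | ⟨h1, h2⟩
          · exact Or.inl ⟨h1, h2⟩
          · exact Or.inr ⟨h1, h2⟩
        have hBsplit : ∀ k, cnt n (G.induce s) ⟨u, hu⟩ k =
            cnt n ((G.induce s).induce {z : ↥s | z.1 ∈ V₁}) ⟨⟨u, hu⟩, hu1'⟩ k *
            cnt n ((G.induce s).induce {z : ↥s | z.1 ∈ V₂}) ⟨⟨u, hu⟩, hu2'⟩ k :=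
          fun k => cnt_split n (G.induce s) ⟨u, hu⟩ _ _ hu1' hu2'
            (fun z => hunion z.1) (fun z h1 h2 => Subtype.ext (hint z.1 h1 h2)) hedge_s k
        have hB1eq : ∀ k, cnt n ((G.induce s).induce {z : ↥s | z.1 ∈ V₁}) ⟨⟨u, hu⟩, hu1'⟩ k =
            cnt n ((G.induce V₁).induce {z : ↥V₁ | z.1 ∈ s}) ⟨⟨u, hu1⟩, hu⟩ k := by
          intro k
          rw [cnt_iso n (induceComm G s V₁) _ k]
          have : (induceComm G s V₁) ⟨⟨u, hu⟩, hu1'⟩ =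
              (⟨⟨u, hu1⟩, hu⟩ : ↥{z : ↥V₁ | z.1 ∈ s}) := Subtype.ext (Subtype.ext rfl)
          rw [this]
        have hB2eq : ∀ k, cnt n ((G.induce s).induce {z : ↥s | z.1 ∈ V₂}) ⟨⟨u, hu⟩, hu2'⟩ k =
            cnt n ((G.induce V₂).induce {z : ↥V₂ | z.1 ∈ s}) ⟨⟨u, hu2⟩, hu⟩ k := by
          intro k
          rw [cnt_iso n (induceComm G s V₂) _ k]
          have : (induceComm G s V₂) ⟨⟨u, hu⟩, hu2'⟩ =
              (⟨⟨u, hu2⟩, hu⟩ : ↥{z : ↥V₂ | z.1 ∈ s}) := Subtype.ext (Subtype.ext rfl)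
          rw [this]
        intro k l hp hcl
        rw [hAsplit k, hAsplit l, hBsplit k, hBsplit l, hB1eq k, hB1eq l, hB2eq k, hB2eq l]
        rw [mul_mul_mul_comm, mul_mul_mul_comm
          (cnt n (G.induce V₁) ⟨u, hu1⟩ k) (cnt n (G.induce V₂) ⟨u, hu2⟩ k)]
        exact Nat.mul_le_mul (hcorr1 k l hp hcl) (hcorr2 k l hp hcl)

lemma homCount (n : ℕ) {W : Type*} (G : SimpleGraph W) (u : W) (i : Fin n) :
    Nat.card {f : G →g pathGraph n // f u = i} = cnt n G u (((i : ℕ) : ℤ) + 1) := by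
  apply Nat.card_congr
  refine ⟨fun f => ⟨fun v => ((f.1 v : ℕ) : ℤ) + 1, ⟨fun v => ?_, fun x y hxy => ?_⟩, ?_⟩,
    fun g => ⟨⟨fun v => ⟨(g.1 v - 1).toNat, ?_⟩, fun {x y} hxy => ?_⟩, ?_⟩, ?_, ?_⟩
  · have h := (f.1 v).isLt
    show 1 ≤ ((f.1 v : ℕ) : ℤ) + 1 ∧ ((f.1 v : ℕ) : ℤ) + 1 ≤ (n : ℤ)
    constructor <;> omega
  · have h := f.1.map_adj hxy
    rw [pathGraph_adj] at h
    have h' : ((f.1 x : ℕ) : ℤ) + 1 - (((f.1 y : ℕ) : ℤ) + 1) = 1 ∨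
        ((f.1 x : ℕ) : ℤ) + 1 - (((f.1 y : ℕ) : ℤ) + 1) = -1 := by omega
    rcases h' with h' | h'
    · rw [h']; exact abs_one
    · rw [h', abs_neg]; exact abs_one
  · show ((f.1 u : ℕ) : ℤ) + 1 = ((i : ℕ) : ℤ) + 1
    rw [f.2]
  · have h := g.2.1.1 v
    omega
  · have h := g.2.1.2 hxy
    have hx := g.2.1.1 x
    have hy := g.2.1.1 y
    rw [pathGraph_adj]
    show (g.1 x - 1).toNat + 1 = (g.1 y - 1).toNat ∨ (g.1 y - 1).toNat + 1 = (g.1 x - 1).toNat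
    rcases abs_cases (g.1 x - g.1 y) with ⟨e, _⟩ | ⟨e, _⟩ <;> omega
  · apply Fin.ext
    show (g.1 u - 1).toNat = (i : ℕ)
    have := g.2.2
    omega
  · intro f
    apply Subtype.ext
    apply DFunLike.ext
    intro v
    apply Fin.ext
    show ((((f.1 v : ℕ) : ℤ) + 1) - 1).toNat = (f.1 v : ℕ)
    omega
  · intro g
    apply Subtype.ext
    funext v
    show ((g.1 v - 1).toNat : ℤ) + 1 = g.1 v
    have := g.2.1.1 v
    omega

end Stmt17

/-- Correlation inequality: let `T₂ = T₁.induce s` be a rooted subtree of the rooted tree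
`(T₁, u)` (same root), with hom-vectors `a` and `b` into the odd path `P_n`. If the
(`1`-based) indices `i+1` and `j+1` have the same parity and `i+1` is at least as close to
the center `(n+1)/2` as `j+1`, then `a i * b j ≥ a j * b i`. -/
theorem stmt_17 {V : Type*} [Fintype V] [DecidableEq V]
    (T₁ : SimpleGraph V) (hT₁ : T₁.IsTree) (u : V)
    (s : Set V) [DecidablePred (· ∈ s)] (hu : u ∈ s) (hsub : (T₁.induce s).IsTree)
    (n : ℕ) (hn : Odd n) (a b : Fin n → ℕ)
    (ha : ∀ i : Fin n, a i = Nat.card {f : T₁ →g pathGraph n // f u = i})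
    (hb : ∀ i : Fin n, b i = Nat.card {f : T₁.induce s →g pathGraph n // f ⟨u, hu⟩ = i})
    (i j : Fin n) (hpar : i.val % 2 = j.val % 2)
    (hclose : |((n : ℤ) + 1) / 2 - ((i : ℤ) + 1)| ≤ |((n : ℤ) + 1) / 2 - ((j : ℤ) + 1)|) :
    a i * b j ≥ a j * b i := by

  have h1 : ∀ i : Fin n, a i = Stmt17.cnt n T₁ u (((i : ℕ) : ℤ) + 1) :=
    fun i => (ha i).trans (Stmt17.homCount n T₁ u i)
  have h2 : ∀ i : Fin n, b i = Stmt17.cnt n (T₁.induce s) ⟨u, hu⟩ (((i : ℕ) : ℤ) + 1) :=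
    fun i => (hb i).trans (Stmt17.homCount n (T₁.induce s) ⟨u, hu⟩ i)
  have hm := Stmt17.main n hn (Nat.card V) V T₁ le_rfl hT₁ u s hu hsub
    (((i : ℕ) : ℤ) + 1) (((j : ℕ) : ℤ) + 1)
    (by omega) hclose
  rw [h1 i, h1 j, h2 i, h2 j]
  exact hm
end

section
/- For $n \geq 4$ and the star $S_n$ on $n$ vertices, $|\mathrm{End}(S_n)| = (n-1)^{n-1} + (n-1)$, and for any tree $T_n$ on $n$ vertices, $|\mathrm{End}(T_n)| \leq |\mathrm{End}(S_n)|$, with strict inequality whenever $T_n \neq S_n$. -/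
/-!
An endomorphism of a star either fixes the center and maps the leaves to leaves arbitrarily, or
sends the center to a leaf and collapses all leaves onto the center; this gives
`(n - 1) ^ (n - 1) + (n - 1)` endomorphisms.

A tree that is not a star has no universal vertex (acyclicity forbids triangles), so all its
degrees are at most `n - 2`. Fix an edge `r c`. An endomorphism `f` is determined by the dart
`(f r, f c)` together with, for each of the other `n - 2` vertices `v`, the position of `f v`
among the at most `n - 2` neighbours of `f u`, where `u` is a neighbour of `v` closer to `r`.
Hence there are at most `2 (n - 1) (n - 2) ^ (n - 2)` of them, which by Bernoulli's inequality
`2 m ^ m ≤ (m + 1) ^ m` is less than the count for the star.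
-/

namespace SimpleGraph

variable {V : Type*}

lemma IsAcyclic.eq_starGraph_of_isUniversal {G : SimpleGraph V} {v : V} (hG : G.IsAcyclic)
    (hv : G.IsUniversal v) : G = starGraph v := by
  ext a b
  rw [starGraph_adj]
  refine ⟨fun hab => ⟨hab.ne, ?_⟩, ?_⟩
  · by_contra! hne
    have hva := hv hne.1.symm
    have hvb := hv hne.2.symm
    exact hG.dist_ne_of_adj hab hva.reachable
      (by rw [dist_eq_one_iff_adj.2 hva, dist_eq_one_iff_adj.2 hvb])
  · rintro ⟨hne, rfl | rfl⟩
    exacts [hv hne, (hv hne.symm).symm]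

lemma IsTree.card_dart [Fintype V] {G : SimpleGraph V} [DecidableRel G.Adj] (hG : G.IsTree) :
    Nat.card G.Dart = 2 * (Fintype.card V - 1) := by
  rw [Nat.card_eq_fintype_card, dart_card_eq_twice_card_edges, ← hG.card_edgeFinset,
    Nat.add_sub_cancel]

lemma Connected.exists_adj_dist_lt_s18 {G : SimpleGraph V} (hG : G.Connected) {r v : V}
    (hv : v ≠ r) : ∃ u, G.Adj u v ∧ G.dist r u < G.dist r v := by
  obtain ⟨p, hp⟩ := hG.exists_walk_length_eq_dist r v
  have hnil : ¬p.Nil := Walk.not_nil_of_ne hv.symm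
  refine ⟨p.penultimate, p.adj_penultimate hnil, ?_⟩
  have := p.length_dropLast_add_one hnil
  have := G.dist_le p.dropLast
  omega

lemma card_hom_le_card_dart_mul_pow {W : Type*} [Finite V] [Fintype W] {G : SimpleGraph V}
    {H : SimpleGraph W} [DecidableRel H.Adj] (hG : G.Connected) {r c : V} (hrc : G.Adj r c)
    {d : ℕ} (hH : ∀ w, H.degree w ≤ d) :
    Nat.card (G →g H) ≤ Nat.card H.Dart * d ^ (Nat.card V - 2) := by
  classical
  choose p hp using fun v (hv : v ≠ r) => hG.exists_adj_dist_lt_s18 hv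
  have e (w : W) : H.neighborSet w ↪ Fin d :=
    (Function.Embedding.nonempty_of_card_le
      (by rw [card_neighborSet_eq_degree, Fintype.card_fin]; exact hH w)).some
  let enc (f : G →g H) : H.Dart × ({v // v ≠ r ∧ v ≠ c} → Fin d) :=
    (⟨(f r, f c), f.map_adj hrc⟩, fun v => e (f (p v v.2.1)) ⟨f v, f.map_adj (hp v v.2.1).1⟩)
  have henc : Function.Injective enc := by
    intro f g hfg
    simp only [enc, Prod.ext_iff, Dart.ext_iff, funext_iff] at hfg
    obtain ⟨⟨hr, hc⟩, hlabel⟩ := hfg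
    have he {w w' : W} (hw : w = w') {x y : W} (hx : H.Adj w x) (hy : H.Adj w' y)
        (h : e w ⟨x, hx⟩ = e w' ⟨y, hy⟩) : x = y := by
      subst hw
      exact congrArg Subtype.val ((e w).injective h)
    ext v
    induction hd : G.dist r v using Nat.strong_induction_on generalizing v with
    | _ k ih =>
      by_cases hvr : v = r
      · exact hvr ▸ hr
      by_cases hvc : v = c
      · exact hvc ▸ hc
      exact he (ih _ (hd ▸ (hp v hvr).2) _ rfl) _ _ (hlabel ⟨v, hvr, hvc⟩)
  have hL : Nat.card {v // v ≠ r ∧ v ≠ c} = Nat.card V - 2 := by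
    have := Fintype.ofFinite V
    rw [Nat.card_eq_fintype_card, Nat.card_eq_fintype_card, Fintype.card_subtype,
      show Finset.univ.filter _ = ({r, c} : Finset V)ᶜ by ext; simp, Finset.card_compl,
      Finset.card_pair hrc.ne]
  calc Nat.card (G →g H) ≤ Nat.card (H.Dart × ({v // v ≠ r ∧ v ≠ c} → Fin d)) :=
        Nat.card_le_card_of_injective enc henc
    _ = Nat.card H.Dart * d ^ (Nat.card V - 2) := by
      rw [Nat.card_prod, Nat.card_fun, hL, Nat.card_fin]

section StarGraph

variable {r : V}

lemma starGraph_hom_apply_ne_center {f : starGraph r →g starGraph r} (hf : f r = r) {v : V}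
    (hv : v ≠ r) : f v ≠ r :=
  fun h => (f.map_adj (starGraph_center_adj hv.symm)).ne (hf.trans h.symm)

lemma starGraph_hom_apply_eq_center {f : starGraph r →g starGraph r} (hf : f r ≠ r) {v : V}
    (hv : v ≠ r) : f v = r :=
  (starGraph_adj.1 (f.map_adj (starGraph_center_adj hv.symm))).2.resolve_left hf

variable [DecidableEq V]

def starGraphCongr (v w : V) : starGraph v ≃g starGraph w where
  toEquiv := Equiv.swap v w
  map_rel_iff' := by simp [Equiv.swap_apply_eq_iff]

def starGraphHomOfLeaves (g : {v // v ≠ r} → {v // v ≠ r}) : starGraph r →g starGraph r where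
  toFun v := if h : v = r then r else g ⟨v, h⟩
  map_rel' {u v} huv := by
    obtain ⟨hne, rfl | rfl⟩ := starGraph_adj.1 huv
    · simpa [hne.symm] using starGraph_center_adj (g ⟨v, hne.symm⟩).2.symm
    · simpa [hne] using starGraph_center_adj' (g ⟨u, hne⟩).2.symm

def starGraphHomToLeaf (c : {v // v ≠ r}) : starGraph r →g starGraph r where
  toFun v := if v = r then c else r
  map_rel' {u v} huv := by
    obtain ⟨hne, rfl | rfl⟩ := starGraph_adj.1 huv
    · simpa [hne.symm] using starGraph_center_adj' c.2.symm
    · simpa [hne] using starGraph_center_adj c.2.symm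

def starGraphEndEquiv (r : V) :
    (starGraph r →g starGraph r) ≃ ({v // v ≠ r} → {v // v ≠ r}) ⊕ {v // v ≠ r} where
  toFun f := if hf : f r = r then .inl fun v => ⟨f v, starGraph_hom_apply_ne_center hf v.2⟩
    else .inr ⟨f r, hf⟩
  invFun
    | .inl g => starGraphHomOfLeaves g
    | .inr c => starGraphHomToLeaf c
  left_inv f := by
    by_cases hf : f r = r
    · ext v
      by_cases hv : v = r <;> simp [hf, hv, starGraphHomOfLeaves]
    · ext v
      by_cases hv : v = r
      · simp [hf, hv, starGraphHomToLeaf]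
      · simp [hf, hv, starGraphHomToLeaf, starGraph_hom_apply_eq_center hf hv]
  right_inv
    | .inl g => by
      simp only [starGraphHomOfLeaves, RelHom.coeFn_mk, dif_pos]
      congr 1
      funext v
      simp [v.2]
    | .inr c => by simp [starGraphHomToLeaf, c.2]

lemma card_starGraph_end [Finite V] (r : V) :
    Nat.card (starGraph r →g starGraph r) =
      (Nat.card V - 1) ^ (Nat.card V - 1) + (Nat.card V - 1) := by
  have hleaves : Nat.card {v // v ≠ r} = Nat.card V - 1 := by
    have := Fintype.ofFinite V
    rw [Nat.card_eq_fintype_card, Nat.card_eq_fintype_card]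
    exact Set.card_ne_eq r
  rw [Nat.card_congr (starGraphEndEquiv r), Nat.card_sum, Nat.card_fun, hleaves]

end StarGraph

end SimpleGraph

lemma starGraph_eq_starGraph_zero (n : ℕ) [NeZero n] :
    starGraph n = SimpleGraph.starGraph 0 := by
  ext u v
  rw [SimpleGraph.starGraph_adj]
  rfl

lemma degree_le_sub_two_of_not_iso_starGraph {n : ℕ} [NeZero n] {T : SimpleGraph (Fin n)}
    [DecidableRel T.Adj] (hT : T.IsTree) (hiso : ¬Nonempty (T ≃g starGraph n)) (v : Fin n) :
    T.degree v ≤ n - 2 := by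
  have hv : ¬T.IsUniversal v := fun hv => hiso <| by
    rw [hT.isAcyclic.eq_starGraph_of_isUniversal hv, starGraph_eq_starGraph_zero]
    exact ⟨SimpleGraph.starGraphCongr v 0⟩
  have := (T.degree_lt_card_sub_one v).2 hv
  rw [Fintype.card_fin] at this
  omega

lemma two_mul_pred_mul_pow_lt {n : ℕ} (hn : 3 ≤ n) :
    2 * (n - 1) * (n - 2) ^ (n - 2) < (n - 1) ^ (n - 1) + (n - 1) := by
  obtain ⟨m, rfl⟩ : ∃ m, n = m + 2 := ⟨n - 2, by omega⟩
  show 2 * (m + 1) * m ^ m < (m + 1) ^ (m + 1) + (m + 1)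
  have bernoulli := pow_add_mul_le_add_pow (a := m) (b := 1) (by positivity) (by positivity) m
  rw [mul_one, Nat.cast_id, ← pow_succ', Nat.sub_add_cancel (by omega : 1 ≤ m)] at bernoulli
  calc 2 * (m + 1) * m ^ m = (m + 1) * (m ^ m + m ^ m) := by ring
    _ ≤ (m + 1) * (m + 1) ^ m := by gcongr
    _ < (m + 1) ^ (m + 1) + (m + 1) := by rw [← pow_succ']; omega

theorem stmt_18 (n : ℕ) (hn : 4 ≤ n) [NeZero n]
    (T : SimpleGraph (Fin n)) (hT : T.IsTree) :
    Nat.card (starGraph n →g starGraph n) = (n - 1) ^ (n - 1) + (n - 1) ∧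
    Nat.card (T →g T) ≤ Nat.card (starGraph n →g starGraph n) ∧
    (¬ Nonempty (T ≃g starGraph n) →
      Nat.card (T →g T) < Nat.card (starGraph n →g starGraph n)) := by
  classical
  have hstar : Nat.card (starGraph n →g starGraph n) = (n - 1) ^ (n - 1) + (n - 1) := by
    rw [starGraph_eq_starGraph_zero, SimpleGraph.card_starGraph_end, Nat.card_fin]
  by_cases hiso : Nonempty (T ≃g starGraph n)
  · obtain ⟨φ⟩ := hiso
    exact ⟨hstar, (Nat.card_congr (φ.homCongr φ)).le, fun h => (h ⟨φ⟩).elim⟩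
  have : Nontrivial (Fin n) := Fin.nontrivial_iff_two_le.2 (by omega)
  obtain ⟨c, hrc⟩ := hT.connected.preconnected.exists_adj_of_nontrivial 0
  have hlt : Nat.card (T →g T) < Nat.card (starGraph n →g starGraph n) :=
    calc Nat.card (T →g T) ≤ Nat.card T.Dart * (n - 2) ^ (Nat.card (Fin n) - 2) :=
          SimpleGraph.card_hom_le_card_dart_mul_pow hT.connected hrc
            (degree_le_sub_two_of_not_iso_starGraph hT hiso)
      _ = 2 * (n - 1) * (n - 2) ^ (n - 2) := by
          rw [hT.card_dart, Nat.card_fin, Fintype.card_fin]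
      _ < Nat.card (starGraph n →g starGraph n) := hstar ▸ two_mul_pred_mul_pow_lt (by omega)
  exact ⟨hstar, hlt.le, fun _ => hlt⟩
end
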